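/- arXiv:2511.12826 — 8 statements merged into one kernel-verified Lean document; each statement's English description precedes it below -/
import Mathlib

section
/- Let N ∈ ℕ with N ≥ 1, let φ : ℝ → ℝ satisfy φ(0) = 0 and be slope-restricted to [0,1], and let Q₀ ∈ ℝ^{N×N} be doubly hyperdominant. Then for every v ∈ ℝ^N, defining w ∈ ℝ^N by w_i = φ(v_i) for each i, the quadratic form [v; w]ᵀ [[0, Q₀ᵀ], [Q₀, −(Q₀ + Q₀ᵀ)]] [v; w] is nonnegative; equivalently, wᵀ Q₀ (v − w) ≥ 0. -/
open Matrix Finset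

/-- A scalar function is slope-restricted to `[0,1]`. -/
def SlopeRestricted01 (φ : ℝ → ℝ) : Prop :=
  ∀ a b : ℝ, a < b → 0 ≤ φ b - φ a ∧ φ b - φ a ≤ b - a

/-- A square real matrix is doubly hyperdominant: nonpositive off-diagonal entries and
nonnegative row and column sums. -/
def DoublyHyperdominant {n : ℕ} (Q : Matrix (Fin n) (Fin n) ℝ) : Prop :=
  (∀ i j, i ≠ j → Q i j ≤ 0) ∧ (∀ i, 0 ≤ ∑ j, Q i j) ∧ (∀ j, 0 ≤ ∑ i, Q i j)


-- upset-upset sum lemma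
lemma upset_sum (n : ℕ) (q : ℕ → ℕ → ℝ)
    (hoff : ∀ i j, i < n → j < n → i ≠ j → q i j ≤ 0)
    (hrow : ∀ i, i < n → 0 ≤ ∑ j ∈ range n, q i j)
    (hcol : ∀ j, j < n → 0 ≤ ∑ i ∈ range n, q i j)
    (k l : ℕ) (hk : k ≤ n) (hl : l ≤ n) :
    0 ≤ ∑ i ∈ Ico k n, ∑ j ∈ Ico l n, q i j := by
  rcases le_total l k with hlk | hkl
  · apply Finset.sum_nonneg
    intro i hi
    rw [Finset.mem_Ico] at hi
    rw [Finset.sum_Ico_eq_sub _ hl]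
    have h1 : 0 ≤ ∑ j ∈ range n, q i j := hrow i hi.2
    have h2 : ∑ j ∈ range l, q i j ≤ 0 := by
      apply Finset.sum_nonpos; intro j hj
      rw [Finset.mem_range] at hj
      exact hoff i j hi.2 (lt_of_lt_of_le hj hl) (by omega)
    linarith
  · rw [Finset.sum_comm]
    apply Finset.sum_nonneg
    intro j hj
    rw [Finset.mem_Ico] at hj
    rw [Finset.sum_Ico_eq_sub _ hk]
    have h1 := hcol j hj.2
    have h2 : ∑ i ∈ range k, q i j ≤ 0 := by
      apply Finset.sum_nonpos; intro i hi
      rw [Finset.mem_range] at hi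
      exact hoff i j (lt_of_lt_of_le hi hk) hj.2 (by omega)
    linarith

lemma downset_sum (n : ℕ) (q : ℕ → ℕ → ℝ)
    (hoff : ∀ i j, i < n → j < n → i ≠ j → q i j ≤ 0)
    (hrow : ∀ i, i < n → 0 ≤ ∑ j ∈ range n, q i j)
    (hcol : ∀ j, j < n → 0 ≤ ∑ i ∈ range n, q i j)
    (k l : ℕ) (hk : k ≤ n) (hl : l ≤ n) :
    0 ≤ ∑ i ∈ range k, ∑ j ∈ range l, q i j := by
  rcases le_total k l with hkl | hlk
  · apply Finset.sum_nonneg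
    intro i hi
    rw [Finset.mem_range] at hi
    have e : ∑ j ∈ range l, q i j
        = ∑ j ∈ range n, q i j - ∑ j ∈ Ico l n, q i j := by
      rw [Finset.sum_Ico_eq_sub _ hl]; ring
    rw [e]
    have h1 := hrow i (lt_of_lt_of_le hi hk)
    have h2 : ∑ j ∈ Ico l n, q i j ≤ 0 := by
      apply Finset.sum_nonpos; intro j hj
      rw [Finset.mem_Ico] at hj
      exact hoff i j (lt_of_lt_of_le hi hk) hj.2 (by omega)
    linarith
  · rw [Finset.sum_comm]
    apply Finset.sum_nonneg
    intro j hj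
    rw [Finset.mem_range] at hj
    have e : ∑ i ∈ range k, q i j
        = ∑ i ∈ range n, q i j - ∑ i ∈ Ico k n, q i j := by
      rw [Finset.sum_Ico_eq_sub _ hk]; ring
    rw [e]
    have h1 := hcol j (lt_of_lt_of_le hj hl)
    have h2 : ∑ i ∈ Ico k n, q i j ≤ 0 := by
      apply Finset.sum_nonpos; intro i hi
      rw [Finset.mem_Ico] at hi
      exact hoff i j hi.2 (lt_of_lt_of_le hj hl) (by omega)
    linarith


lemma abel_tail (n : ℕ) (x R : ℕ → ℝ)
    (hmono : ∀ k, k + 1 < n → x k ≤ x (k + 1)) (hpos : ∀ k, k < n → 0 ≤ x k)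
    (hT : ∀ k, k < n → 0 ≤ ∑ i ∈ Ico k n, R i) :
    0 ≤ ∑ i ∈ range n, x i * R i := by
  set d : ℕ → ℝ := fun k => if k = 0 then x 0 else x k - x (k - 1) with hd
  have hx : ∀ i, x i = ∑ k ∈ range (i + 1), d k := by
    intro i
    induction i with
    | zero => simp [hd]
    | succ m ih =>
        rw [Finset.sum_range_succ, ← ih]
        simp [hd]
  have calc1 : (0:ℝ) ≤ ∑ k ∈ range n, d k * ∑ i ∈ Ico k n, R i := by
    apply Finset.sum_nonneg
    intro k hk
    rw [Finset.mem_range] at hk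
    apply mul_nonneg _ (hT k hk)
    by_cases h0 : k = 0
    · simpa [hd, h0] using hpos 0 (by omega)
    · have h1 : x (k - 1) ≤ x (k - 1 + 1) := hmono (k - 1) (by omega)
      have h2 : k - 1 + 1 = k := by omega
      rw [h2] at h1
      simp only [hd, if_neg h0]
      linarith
  have e1 : ∑ k ∈ range n, d k * ∑ i ∈ Ico k n, R i
      = ∑ k ∈ range n, ∑ i ∈ range n, (if k ≤ i then d k * R i else 0) := by
    apply Finset.sum_congr rfl
    intro k _
    rw [Finset.mul_sum, ← Finset.sum_filter]
    congr 1
    ext i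
    simp only [Finset.mem_Ico, Finset.mem_filter, Finset.mem_range]
    omega
  have e2 : ∑ k ∈ range n, ∑ i ∈ range n, (if k ≤ i then d k * R i else 0)
      = ∑ i ∈ range n, x i * R i := by
    rw [Finset.sum_comm]
    apply Finset.sum_congr rfl
    intro i hi
    rw [Finset.mem_range] at hi
    have hf : (range n).filter (fun k => k ≤ i) = range (i + 1) := by
      ext k
      simp only [Finset.mem_filter, Finset.mem_range]
      omega
    rw [← Finset.sum_filter, hf, ← Finset.sum_mul, ← hx i]
  linarith [e1 ▸ calc1, e2]

lemma abel_head (n : ℕ) (x R : ℕ → ℝ)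
    (hmono : ∀ k, k + 1 < n → x (k + 1) ≤ x k) (hpos : ∀ k, k < n → 0 ≤ x k)
    (hH : ∀ k, k ≤ n → 0 ≤ ∑ i ∈ range k, R i) :
    0 ≤ ∑ i ∈ range n, x i * R i := by
  set xe : ℕ → ℝ := fun k => if k < n then x k else 0 with hxe
  set d : ℕ → ℝ := fun k => xe k - xe (k + 1) with hd
  have hD : ∀ m, ∑ k ∈ range m, d k = xe 0 - xe m := by
    intro m
    simpa [hd] using Finset.sum_range_sub' xe m
  have hx : ∀ i, i < n → x i = ∑ k ∈ Ico i n, d k := by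
    intro i hi
    rw [Finset.sum_Ico_eq_sub _ hi.le, hD, hD]
    simp [hxe, hi]
  have calc1 : (0:ℝ) ≤ ∑ k ∈ range n, d k * ∑ i ∈ range (k + 1), R i := by
    apply Finset.sum_nonneg
    intro k hk
    rw [Finset.mem_range] at hk
    apply mul_nonneg _ (hH (k + 1) (by omega))
    by_cases h1 : k + 1 < n
    · have := hmono k h1
      simp only [hd, hxe, if_pos hk, if_pos h1]
      linarith
    · have := hpos k hk
      simp only [hd, hxe, if_pos hk, if_neg h1]
      linarith
  have e1 : ∑ k ∈ range n, d k * ∑ i ∈ range (k + 1), R i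
      = ∑ k ∈ range n, ∑ i ∈ range n, (if i ≤ k then d k * R i else 0) := by
    apply Finset.sum_congr rfl
    intro k hk
    rw [Finset.mem_range] at hk
    rw [Finset.mul_sum, ← Finset.sum_filter]
    congr 1
    ext i
    simp only [Finset.mem_filter, Finset.mem_range]
    omega
  have e2 : ∑ k ∈ range n, ∑ i ∈ range n, (if i ≤ k then d k * R i else 0)
      = ∑ i ∈ range n, x i * R i := by
    rw [Finset.sum_comm]
    apply Finset.sum_congr rfl
    intro i hi
    rw [Finset.mem_range] at hi
    have hf : (range n).filter (fun k => i ≤ k) = Ico i n := by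
      ext k
      simp only [Finset.mem_filter, Finset.mem_range, Finset.mem_Ico]
      omega
    rw [← Finset.sum_filter, hf]
    rw [hx i hi, Finset.sum_mul]
  linarith [e1 ▸ calc1, e2]

lemma pos_pos (n : ℕ) (q : ℕ → ℕ → ℝ)
    (hoff : ∀ i j, i < n → j < n → i ≠ j → q i j ≤ 0)
    (hrow : ∀ i, i < n → 0 ≤ ∑ j ∈ range n, q i j)
    (hcol : ∀ j, j < n → 0 ≤ ∑ i ∈ range n, q i j)
    (x y : ℕ → ℝ)
    (hx : ∀ k, k + 1 < n → x k ≤ x (k + 1)) (hx0 : ∀ k, k < n → 0 ≤ x k)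
    (hy : ∀ k, k + 1 < n → y k ≤ y (k + 1)) (hy0 : ∀ k, k < n → 0 ≤ y k) :
    0 ≤ ∑ i ∈ range n, ∑ j ∈ range n, x i * y j * q i j := by
  have e : ∀ i, ∑ j ∈ range n, x i * y j * q i j
      = x i * ∑ j ∈ range n, y j * q i j := by
    intro i; rw [Finset.mul_sum]; apply Finset.sum_congr rfl; intros; ring
  simp only [e]
  apply abel_tail n x _ hx hx0
  intro k hk
  have e2 : ∑ i ∈ Ico k n, ∑ j ∈ range n, y j * q i j
      = ∑ j ∈ range n, y j * ∑ i ∈ Ico k n, q i j := by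
    rw [Finset.sum_comm]
    apply Finset.sum_congr rfl
    intros; rw [Finset.mul_sum]
  rw [e2]
  apply abel_tail n y _ hy hy0
  intro l hl
  have e3 : ∑ j ∈ Ico l n, ∑ i ∈ Ico k n, q i j = ∑ i ∈ Ico k n, ∑ j ∈ Ico l n, q i j :=
    Finset.sum_comm
  rw [e3]
  exact upset_sum n q hoff hrow hcol k l hk.le hl.le

lemma both_neg (n : ℕ) (q : ℕ → ℕ → ℝ)
    (hoff : ∀ i j, i < n → j < n → i ≠ j → q i j ≤ 0)
    (hrow : ∀ i, i < n → 0 ≤ ∑ j ∈ range n, q i j)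
    (hcol : ∀ j, j < n → 0 ≤ ∑ i ∈ range n, q i j)
    (x y : ℕ → ℝ)
    (hx : ∀ k, k + 1 < n → x (k + 1) ≤ x k) (hx0 : ∀ k, k < n → 0 ≤ x k)
    (hy : ∀ k, k + 1 < n → y (k + 1) ≤ y k) (hy0 : ∀ k, k < n → 0 ≤ y k) :
    0 ≤ ∑ i ∈ range n, ∑ j ∈ range n, x i * y j * q i j := by
  have e : ∀ i, ∑ j ∈ range n, x i * y j * q i j
      = x i * ∑ j ∈ range n, y j * q i j := by
    intro i; rw [Finset.mul_sum]; apply Finset.sum_congr rfl; intros; ring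
  simp only [e]
  apply abel_head n x _ hx hx0
  intro k hk
  have e2 : ∑ i ∈ range k, ∑ j ∈ range n, y j * q i j
      = ∑ j ∈ range n, y j * ∑ i ∈ range k, q i j := by
    rw [Finset.sum_comm]
    apply Finset.sum_congr rfl
    intros; rw [Finset.mul_sum]
  rw [e2]
  apply abel_head n y _ hy hy0
  intro l hl
  have e3 : ∑ j ∈ range l, ∑ i ∈ range k, q i j = ∑ i ∈ range k, ∑ j ∈ range l, q i j :=
    Finset.sum_comm
  rw [e3]
  exact downset_sum n q hoff hrow hcol k l hk hl

lemma cross (n : ℕ) (q : ℕ → ℕ → ℝ)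
    (hoff : ∀ i j, i < n → j < n → i ≠ j → q i j ≤ 0)
    (x y : ℕ → ℝ) (hx0 : ∀ i, i < n → 0 ≤ x i) (hy0 : ∀ j, j < n → 0 ≤ y j)
    (hsep : ∀ i j, i < n → j < n → 0 < x i → 0 < y j → i ≠ j) :
    ∑ i ∈ range n, ∑ j ∈ range n, x i * y j * q i j ≤ 0 := by
  apply Finset.sum_nonpos
  intro i hi
  rw [Finset.mem_range] at hi
  apply Finset.sum_nonpos
  intro j hj
  rw [Finset.mem_range] at hj
  rcases eq_or_lt_of_le (hx0 i hi) with h | h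
  · rw [← h]; simp
  rcases eq_or_lt_of_le (hy0 j hj) with h' | h'
  · rw [← h']; simp
  have hq := hoff i j hi hj (hsep i j hi hj h h')
  have hxy : 0 ≤ x i * y j := mul_nonneg h.le h'.le
  nlinarith

lemma key_nat (n : ℕ) (q : ℕ → ℕ → ℝ)
    (hoff : ∀ i j, i < n → j < n → i ≠ j → q i j ≤ 0)
    (hrow : ∀ i, i < n → 0 ≤ ∑ j ∈ range n, q i j)
    (hcol : ∀ j, j < n → 0 ≤ ∑ i ∈ range n, q i j)
    (v a b : ℕ → ℝ)
    (hva : ∀ i, i < n → v i ≤ 0 → a i ≤ 0) (hva' : ∀ i, i < n → 0 ≤ v i → 0 ≤ a i)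
    (hvb : ∀ i, i < n → v i ≤ 0 → b i ≤ 0) (hvb' : ∀ i, i < n → 0 ≤ v i → 0 ≤ b i)
    (ha : ∀ k, k + 1 < n → a k ≤ a (k + 1)) (hb : ∀ k, k + 1 < n → b k ≤ b (k + 1)) :
    0 ≤ ∑ i ∈ range n, ∑ j ∈ range n, a i * b j * q i j := by
  have hsplit : ∀ t : ℝ, max t 0 - max (-t) 0 = t := by
    intro t
    rcases le_total t 0 with h | h
    · rw [max_eq_right h, max_eq_left (neg_nonneg.mpr h)]; ring
    · rw [max_eq_left h, max_eq_right (neg_nonpos.mpr h)]; ring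
  set ap : ℕ → ℝ := fun i => max (a i) 0 with hap
  set an : ℕ → ℝ := fun i => max (-a i) 0 with han
  set bp : ℕ → ℝ := fun i => max (b i) 0 with hbp
  set bn : ℕ → ℝ := fun i => max (-b i) 0 with hbn
  -- basic facts
  have hap0 : ∀ i, 0 ≤ ap i := fun i => le_max_right _ _
  have han0 : ∀ i, 0 ≤ an i := fun i => le_max_right _ _
  have hbp0 : ∀ i, 0 ≤ bp i := fun i => le_max_right _ _
  have hbn0 : ∀ i, 0 ≤ bn i := fun i => le_max_right _ _
  have hapm : ∀ k, k + 1 < n → ap k ≤ ap (k + 1) := fun k hk => max_le_max (ha k hk) le_rfl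
  have hbpm : ∀ k, k + 1 < n → bp k ≤ bp (k + 1) := fun k hk => max_le_max (hb k hk) le_rfl
  have hanm : ∀ k, k + 1 < n → an (k + 1) ≤ an k :=
    fun k hk => max_le_max (neg_le_neg (ha k hk)) le_rfl
  have hbnm : ∀ k, k + 1 < n → bn (k + 1) ≤ bn k :=
    fun k hk => max_le_max (neg_le_neg (hb k hk)) le_rfl
  -- positivity of entries implies sign of v
  have hapv : ∀ i, i < n → 0 < ap i → 0 < v i := by
    intro i hi h
    by_contra hcon
    push_neg at hcon
    have := hva i hi hcon
    have : ap i = 0 := max_eq_right this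
    linarith
  have hanv : ∀ i, i < n → 0 < an i → v i < 0 := by
    intro i hi h
    by_contra hcon
    push_neg at hcon
    have := hva' i hi hcon
    have : an i = 0 := max_eq_right (by linarith)
    linarith
  have hbpv : ∀ i, i < n → 0 < bp i → 0 < v i := by
    intro i hi h
    by_contra hcon
    push_neg at hcon
    have := hvb i hi hcon
    have : bp i = 0 := max_eq_right this
    linarith
  have hbnv : ∀ i, i < n → 0 < bn i → v i < 0 := by
    intro i hi h
    by_contra hcon
    push_neg at hcon
    have := hvb' i hi hcon
    have : bn i = 0 := max_eq_right (by linarith)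
    linarith
  have E : ∀ i j, a i * b j * q i j =
      ap i * bp j * q i j - ap i * bn j * q i j - an i * bp j * q i j + an i * bn j * q i j := by
    intro i j
    have h1 : ap i - an i = a i := hsplit (a i)
    have h2 : bp j - bn j = b j := hsplit (b j)
    rw [← h1, ← h2]
    ring
  have E2 : ∑ i ∈ range n, ∑ j ∈ range n, a i * b j * q i j
      = ((∑ i ∈ range n, ∑ j ∈ range n, ap i * bp j * q i j)
        - ∑ i ∈ range n, ∑ j ∈ range n, ap i * bn j * q i j)
        - (∑ i ∈ range n, ∑ j ∈ range n, an i * bp j * q i j)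
        + ∑ i ∈ range n, ∑ j ∈ range n, an i * bn j * q i j := by
    rw [← Finset.sum_sub_distrib, ← Finset.sum_sub_distrib, ← Finset.sum_add_distrib]
    apply Finset.sum_congr rfl
    intro i _
    rw [← Finset.sum_sub_distrib, ← Finset.sum_sub_distrib, ← Finset.sum_add_distrib]
    exact Finset.sum_congr rfl fun j _ => E i j
  rw [E2]
  have P1 := pos_pos n q hoff hrow hcol ap bp hapm (fun k _ => hap0 k) hbpm (fun k _ => hbp0 k)
  have P2 := both_neg n q hoff hrow hcol an bn hanm (fun k _ => han0 k) hbnm (fun k _ => hbn0 k)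
  have C1 := cross n q hoff ap bn (fun i _ => hap0 i) (fun j _ => hbn0 j)
    (fun i j hi hj h h' => by
      have := hapv i hi h
      have := hbnv j hj h'
      intro heq; subst heq; linarith)
  have C2 := cross n q hoff an bp (fun i _ => han0 i) (fun j _ => hbp0 j)
    (fun i j hi hj h h' => by
      have := hanv i hi h
      have := hbpv j hj h'
      intro heq; subst heq; linarith)
  linarith

theorem stmt0 (N : ℕ) (hN : 1 ≤ N) (φ : ℝ → ℝ) (hφ0 : φ 0 = 0)
    (hslope : SlopeRestricted01 φ)
    (Q₀ : Matrix (Fin N) (Fin N) ℝ) (hQ : DoublyHyperdominant Q₀)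
    (v w : Fin N → ℝ) (hw : ∀ i, w i = φ (v i)) :
    0 ≤ (Sum.elim v w) ⬝ᵥ
        (Matrix.fromBlocks 0 Q₀ᵀ Q₀ (-(Q₀ + Q₀ᵀ))).mulVec (Sum.elim v w) ∧
    0 ≤ w ⬝ᵥ Q₀.mulVec (v - w) := by
  -- monotonicity of φ and of x ↦ x - φ x
  have hmφ : ∀ x y : ℝ, x ≤ y → φ x ≤ φ y := by
    intro x y hxy
    rcases eq_or_lt_of_le hxy with h | h
    · rw [h]
    · linarith [(hslope x y h).1]
  have hmg : ∀ x y : ℝ, x ≤ y → x - φ x ≤ y - φ y := by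
    intro x y hxy
    rcases eq_or_lt_of_le hxy with h | h
    · rw [h]
    · linarith [(hslope x y h).2]
  set σ : Equiv.Perm (Fin N) := Tuple.sort v with hσ
  have hsort : Monotone (v ∘ σ) := Tuple.monotone_sort v
  set vn : ℕ → ℝ := fun k => if h : k < N then v (σ ⟨k, h⟩) else 0 with hvn
  set an : ℕ → ℝ := fun k => if h : k < N then w (σ ⟨k, h⟩) else 0 with han
  set bn : ℕ → ℝ := fun k => if h : k < N then v (σ ⟨k, h⟩) - w (σ ⟨k, h⟩) else 0 with hbn
  set qn : ℕ → ℕ → ℝ :=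
    fun k l => if h : k < N ∧ l < N then Q₀ (σ ⟨k, h.1⟩) (σ ⟨l, h.2⟩) else 0 with hqn
  have hKn : 0 ≤ ∑ i ∈ range N, ∑ j ∈ range N, an i * bn j * qn i j := by
    apply key_nat N qn _ _ _ vn an bn
    · -- hva
      intro i hi h0
      simp only [han, dif_pos hi]
      rw [hw]
      have hv0 : v (σ ⟨i, hi⟩) ≤ 0 := by simpa [hvn, dif_pos hi] using h0
      calc φ (v (σ ⟨i, hi⟩)) ≤ φ 0 := hmφ _ _ hv0
        _ = 0 := hφ0
    · intro i hi h0
      simp only [han, dif_pos hi]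
      rw [hw]
      have hv0 : 0 ≤ v (σ ⟨i, hi⟩) := by simpa [hvn, dif_pos hi] using h0
      calc (0:ℝ) = φ 0 := hφ0.symm
        _ ≤ φ (v (σ ⟨i, hi⟩)) := hmφ _ _ hv0
    · intro i hi h0
      simp only [hbn, dif_pos hi]
      rw [hw]
      have hv0 : v (σ ⟨i, hi⟩) ≤ 0 := by simpa [hvn, dif_pos hi] using h0
      calc v (σ ⟨i, hi⟩) - φ (v (σ ⟨i, hi⟩)) ≤ 0 - φ 0 := hmg _ _ hv0
        _ = 0 := by rw [hφ0]; ring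
    · intro i hi h0
      simp only [hbn, dif_pos hi]
      rw [hw]
      have hv0 : 0 ≤ v (σ ⟨i, hi⟩) := by simpa [hvn, dif_pos hi] using h0
      calc (0:ℝ) = 0 - φ 0 := by rw [hφ0]; ring
        _ ≤ v (σ ⟨i, hi⟩) - φ (v (σ ⟨i, hi⟩)) := hmg _ _ hv0
    · -- monotone a
      intro k hk
      have hk1 : k < N := by omega
      simp only [han, dif_pos hk, dif_pos hk1]
      rw [hw, hw]
      apply hmφ
      exact hsort (show (⟨k, hk1⟩ : Fin N) ≤ ⟨k + 1, hk⟩ from by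
        simp [Fin.mk_le_mk])
    · intro k hk
      have hk1 : k < N := by omega
      simp only [hbn, dif_pos hk, dif_pos hk1]
      rw [hw, hw]
      apply hmg
      exact hsort (show (⟨k, hk1⟩ : Fin N) ≤ ⟨k + 1, hk⟩ from by
        simp [Fin.mk_le_mk])
    · -- hoff
      intro i j hi hj hne
      simp only [hqn, dif_pos (show i < N ∧ j < N from ⟨hi, hj⟩)]
      apply hQ.1
      intro hcon
      apply hne
      have := σ.injective hcon
      simpa using this
    · -- hrow
      intro i hi
      have e : ∑ l ∈ range N, qn i l = ∑ j : Fin N, Q₀ (σ ⟨i, hi⟩) (σ j) := by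
        rw [← Fin.sum_univ_eq_sum_range (fun l => qn i l) N]
        apply Finset.sum_congr rfl
        intro j _
        simp [hqn, hi, j.isLt]
      rw [e, Equiv.sum_comp σ (fun j => Q₀ (σ ⟨i, hi⟩) j)]
      exact hQ.2.1 _
    · -- hcol
      intro j hj
      have e : ∑ k ∈ range N, qn k j = ∑ i : Fin N, Q₀ (σ i) (σ ⟨j, hj⟩) := by
        rw [← Fin.sum_univ_eq_sum_range (fun k => qn k j) N]
        apply Finset.sum_congr rfl
        intro i _
        simp [hqn, hj, i.isLt]
      rw [e, Equiv.sum_comp σ (fun i => Q₀ i (σ ⟨j, hj⟩))]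
      exact hQ.2.2 _
  -- translate back
  have step2 : ∑ i ∈ range N, ∑ j ∈ range N, an i * bn j * qn i j
      = ∑ i : Fin N, ∑ j : Fin N, w (σ i) * (v (σ j) - w (σ j)) * Q₀ (σ i) (σ j) := by
    rw [← Fin.sum_univ_eq_sum_range (fun k => ∑ l ∈ range N, an k * bn l * qn k l) N]
    apply Finset.sum_congr rfl
    intro i _
    rw [← Fin.sum_univ_eq_sum_range (fun l => an i.val * bn l * qn i.val l) N]
    apply Finset.sum_congr rfl
    intro j _
    simp [han, hbn, hqn, i.isLt, j.isLt]
  have step1 : ∑ i : Fin N, ∑ j : Fin N, w (σ i) * (v (σ j) - w (σ j)) * Q₀ (σ i) (σ j)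
      = ∑ i : Fin N, ∑ j : Fin N, w i * (v j - w j) * Q₀ i j := by
    rw [← Equiv.sum_comp σ (fun i => ∑ j : Fin N, w i * (v j - w j) * Q₀ i j)]
    apply Finset.sum_congr rfl
    intro i _
    rw [← Equiv.sum_comp σ (fun j => w (σ i) * (v j - w j) * Q₀ (σ i) j)]
  have hdot : w ⬝ᵥ Q₀.mulVec (v - w) = ∑ i : Fin N, ∑ j : Fin N, w i * (v j - w j) * Q₀ i j := by
    simp only [dotProduct, mulVec, Finset.mul_sum, Pi.sub_apply]
    apply Finset.sum_congr rfl
    intro i _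
    apply Finset.sum_congr rfl
    intro j _
    ring
  have key : 0 ≤ w ⬝ᵥ Q₀.mulVec (v - w) := by
    rw [hdot, ← step1, ← step2]; exact hKn
  have t1 : ∀ (A : Matrix (Fin N) (Fin N) ℝ) (x y : Fin N → ℝ),
      x ⬝ᵥ Aᵀ.mulVec y = y ⬝ᵥ A.mulVec x := by
    intro A x y
    rw [Matrix.dotProduct_mulVec, Matrix.vecMul_transpose, dotProduct_comm]
  have hblock : Sum.elim v w ⬝ᵥ
      (Matrix.fromBlocks 0 Q₀ᵀ Q₀ (-(Q₀ + Q₀ᵀ))).mulVec (Sum.elim v w)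
      = 2 * (w ⬝ᵥ Q₀.mulVec (v - w)) := by
    rw [Matrix.fromBlocks_mulVec, sumElim_dotProduct_sumElim]
    rw [Matrix.zero_mulVec, zero_add, Matrix.neg_mulVec, Matrix.add_mulVec]
    rw [dotProduct_add, dotProduct_neg, dotProduct_add]
    simp only [Sum.elim_comp_inl, Sum.elim_comp_inr]
    rw [t1 Q₀ v w, t1 Q₀ w w]
    rw [Matrix.mulVec_sub, dotProduct_sub]
    ring
  exact ⟨by rw [hblock]; linarith, key⟩
end

section
/- Let N ∈ ℕ and m₋N, …, m_N ∈ ℝ be arbitrary, and let M ∈ ℝ^{(2N+2)×(2N+2)} be the associated Zames–Falb IQC matrix. Let v, w : ℕ → ℝ be arbitrary sequences, extended by zero to negative indices, and let r(k) ∈ ℝ^{2N+2} be the associated window vectors. Then for every T₀ ∈ ℕ, ∑_{k=0}^{T₀} r(k)ᵀ M r(k) = [v̄; w̄]ᵀ [[0, Q₀ᵀ], [Q₀, −(Q₀ + Q₀ᵀ)]] [v̄; w̄], where v̄ = (v(T₀), v(T₀−1), …, v(0)) ∈ ℝ^{T₀+1}, w̄ = (w(T₀), w(T₀−1), …, w(0))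 ∈ ℝ^{T₀+1}, and Q₀ ∈ ℝ^{(T₀+1)×(T₀+1)} is the banded Toeplitz matrix with (Q₀)_{ij} = m_{j−i} when |j − i| ≤ N and (Q₀)_{ij} = 0 otherwise. -/
open Matrix

/-- The matrix `M₀` with first row `(m₀, m₁, …, m_N)`, first column `(m₀, m₋₁, …, m₋N)ᵀ`,
and all other entries zero. -/
noncomputable def zfM0 (N : ℕ) (m : ℤ → ℝ) : Matrix (Fin (N + 1)) (Fin (N + 1)) ℝ :=
  Matrix.of fun i j =>
    if (i : ℕ) = 0 then m (j : ℤ)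
    else if (j : ℕ) = 0 then m (-(i : ℤ)) else 0

/-- The Zames–Falb IQC matrix `M = [[0, M₀ᵀ], [M₀, −(M₀ + M₀ᵀ)]]`. -/
noncomputable def zfIQC (N : ℕ) (m : ℤ → ℝ) :
    Matrix (Fin (N + 1) ⊕ Fin (N + 1)) (Fin (N + 1) ⊕ Fin (N + 1)) ℝ :=
  Matrix.fromBlocks 0 (zfM0 N m)ᵀ (zfM0 N m) (-(zfM0 N m + (zfM0 N m)ᵀ))

/-- Extension of a sequence on `ℕ` by zero to negative indices. -/
noncomputable def extZ (v : ℕ → ℝ) : ℤ → ℝ := fun j => if 0 ≤ j then v j.toNat else 0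

/-- The window vector `r(k) = (v(k), …, v(k−N), w(k), …, w(k−N))`. -/
noncomputable def window (N : ℕ) (v w : ℕ → ℝ) (k : ℕ) :
    Fin (N + 1) ⊕ Fin (N + 1) → ℝ :=
  Sum.elim (fun i => extZ v ((k : ℤ) - (i : ℤ))) (fun i => extZ w ((k : ℤ) - (i : ℤ)))

private lemma quadgen {n : ℕ} (Q : Matrix (Fin n) (Fin n) ℝ) (x y : Fin n → ℝ) :
    Sum.elim x y ⬝ᵥ (Matrix.fromBlocks 0 Qᵀ Q (-(Q + Qᵀ))).mulVec (Sum.elim x y)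
      = 2 * ∑ i, ∑ j, Q i j * (y i * (x j - y j)) := by
  simp only [dotProduct, Matrix.mulVec, Fintype.sum_sum_type, Sum.elim_inl,
    Sum.elim_inr, Matrix.fromBlocks_apply₁₁, Matrix.fromBlocks_apply₁₂,
    Matrix.fromBlocks_apply₂₁, Matrix.fromBlocks_apply₂₂, Matrix.zero_apply, zero_mul,
    Finset.sum_const_zero, zero_add, Matrix.transpose_apply, Matrix.neg_apply,
    Matrix.add_apply]
  set S1 := ∑ i, ∑ j, Q i j * (y i * x j) with hS1
  set S2 := ∑ i, ∑ j, Q i j * (y i * y j) with hS2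
  have hA : ∑ i, x i * ∑ j, Q j i * y j = S1 := by
    calc ∑ i, x i * ∑ j, Q j i * y j = ∑ i, ∑ j, x i * (Q j i * y j) := by
          simp_rw [Finset.mul_sum]
      _ = ∑ j, ∑ i, x i * (Q j i * y j) := Finset.sum_comm
      _ = S1 := Finset.sum_congr rfl fun i _ => Finset.sum_congr rfl fun j _ => by ring
  have hB : ∑ i, y i * (∑ j, Q i j * x j + ∑ j, -(Q i j + Q j i) * y j) = S1 - 2 * S2 := by
    have e1 : ∀ i, y i * (∑ j, Q i j * x j + ∑ j, -(Q i j + Q j i) * y j)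
        = (∑ j, Q i j * (y i * x j)) - (∑ j, Q i j * (y i * y j))
          - (∑ j, Q j i * (y j * y i)) := by
      intro i
      rw [mul_add, Finset.mul_sum, Finset.mul_sum, ← Finset.sum_add_distrib,
        ← Finset.sum_sub_distrib, ← Finset.sum_sub_distrib]
      exact Finset.sum_congr rfl fun j _ => by ring
    calc ∑ i, y i * (∑ j, Q i j * x j + ∑ j, -(Q i j + Q j i) * y j)
        = ∑ i, ((∑ j, Q i j * (y i * x j)) - (∑ j, Q i j * (y i * y j))
            - (∑ j, Q j i * (y j * y i))) := Finset.sum_congr rfl fun i _ => e1 i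
      _ = S1 - S2 - ∑ i, ∑ j, Q j i * (y j * y i) := by
          rw [Finset.sum_sub_distrib, Finset.sum_sub_distrib]
      _ = S1 - S2 - S2 := by congr 1; exact Finset.sum_comm
      _ = S1 - 2 * S2 := by ring
  have hR : ∑ i, ∑ j, Q i j * (y i * (x j - y j)) = S1 - S2 := by
    calc ∑ i, ∑ j, Q i j * (y i * (x j - y j))
        = ∑ i, ∑ j, (Q i j * (y i * x j) - Q i j * (y i * y j)) :=
          Finset.sum_congr rfl fun i _ => Finset.sum_congr rfl fun j _ => by ring
      _ = S1 - S2 := by simp_rw [Finset.sum_sub_distrib]; rfl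
  rw [hA, hB, hR]; ring

private lemma sum_shift1 (k T N : ℕ) (f : ℕ → ℝ) (hk : k ≤ T) :
    ∑ b ∈ Finset.range (T + 1), (if b ≤ k ∧ k - b ≤ N then f (k - b) else 0)
      = ∑ j ∈ Finset.range (N + 1), (if j ≤ k then f j else 0) := by
  rw [← Finset.sum_filter, ← Finset.sum_filter]
  refine Finset.sum_nbij' (fun b => k - b) (fun j => k - j) ?_ ?_ ?_ ?_ ?_ <;>
    simp only [Finset.mem_filter, Finset.mem_range] <;> intros <;>
    first | trivial | omega

private lemma sum_shift2 (k T N : ℕ) (f : ℕ → ℝ) (hk : k ≤ T) :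
    ∑ a ∈ Finset.range (T + 1), (if a < k ∧ k - a ≤ N then f (k - a) else 0)
      = ∑ i ∈ Finset.range N, (if i + 1 ≤ k then f (i + 1) else 0) := by
  rw [← Finset.sum_filter, ← Finset.sum_filter]
  refine Finset.sum_nbij' (fun a => k - a - 1) (fun i => k - (i + 1)) ?_ ?_ ?_ ?_ ?_ <;>
    simp only [Finset.mem_filter, Finset.mem_range] <;> intros <;>
    first | trivial | omega | (congr 1; omega)

private lemma zfM0_sum (N : ℕ) (m : ℤ → ℝ) (c : Fin (N + 1) → Fin (N + 1) → ℝ) :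
    ∑ i, ∑ j, zfM0 N m i j * c i j
      = (∑ j : Fin (N + 1), m (j : ℤ) * c 0 j)
        + ∑ i : Fin N, m (-((i : ℤ) + 1)) * c i.succ 0 := by
  rw [Fin.sum_univ_succ]
  refine congrArg₂ (· + ·) ?_ ?_
  · exact Finset.sum_congr rfl fun j _ => by simp [zfM0]
  · refine Finset.sum_congr rfl fun i _ => ?_
    rw [Fin.sum_univ_succ]
    have h1 : zfM0 N m i.succ 0 = m (-((i : ℤ) + 1)) := by
      have : ((i.succ : Fin (N + 1)) : ℕ) = (i : ℕ) + 1 := Fin.val_succ i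
      simp only [zfM0, Matrix.of_apply, this]
      norm_num
    have h2 : ∀ j : Fin N, zfM0 N m i.succ j.succ * c i.succ j.succ = 0 := by
      intro j
      have hi : ((i.succ : Fin (N + 1)) : ℕ) = (i : ℕ) + 1 := Fin.val_succ i
      have hj : ((j.succ : Fin (N + 1)) : ℕ) = (j : ℕ) + 1 := Fin.val_succ j
      simp only [zfM0, Matrix.of_apply, hi, hj]
      simp
    rw [h1, Finset.sum_congr rfl fun j _ => h2 j]
    simp

private lemma extZ_sub (v : ℕ → ℝ) (k j : ℕ) :
    extZ v ((k : ℤ) - (j : ℤ)) = if j ≤ k then v (k - j) else 0 := by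
  simp only [extZ]
  split_ifs with h1 h2 h2
  · congr 1; omega
  · omega
  · omega
  · rfl

private lemma extZ_nat (v : ℕ → ℝ) (k : ℕ) : extZ v (k : ℤ) = v k := by
  simp [extZ]

theorem stmt2 (N : ℕ) (m : ℤ → ℝ) (v w : ℕ → ℝ) (T₀ : ℕ)
    (Q₀ : Matrix (Fin (T₀ + 1)) (Fin (T₀ + 1)) ℝ)
    (hQ : ∀ i j : Fin (T₀ + 1), Q₀ i j =
      if |(j : ℤ) - (i : ℤ)| ≤ (N : ℤ) then m ((j : ℤ) - (i : ℤ)) else 0)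
    (vbar wbar : Fin (T₀ + 1) → ℝ)
    (hv : ∀ i, vbar i = v (T₀ - (i : ℕ)))
    (hw : ∀ i, wbar i = w (T₀ - (i : ℕ))) :
    ∑ k ∈ Finset.range (T₀ + 1),
        window N v w k ⬝ᵥ (zfIQC N m).mulVec (window N v w k)
      = (Sum.elim vbar wbar) ⬝ᵥ
          (Matrix.fromBlocks 0 Q₀ᵀ Q₀ (-(Q₀ + Q₀ᵀ))).mulVec (Sum.elim vbar wbar) := by
  -- abbreviations
  set u : ℕ → ℝ := fun b => v b - w b with hu
  -- per-k quadratic form of the LHS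
  have hL : ∀ k : ℕ, window N v w k ⬝ᵥ (zfIQC N m).mulVec (window N v w k)
      = 2 * ((∑ j ∈ Finset.range (N + 1), (if j ≤ k then m (j : ℤ) * (w k * u (k - j)) else 0))
          + ∑ i ∈ Finset.range N,
              (if i + 1 ≤ k then m (-((i : ℤ) + 1)) * (w (k - (i + 1)) * u k) else 0)) := by
    intro k
    have h0 : window N v w k ⬝ᵥ (zfIQC N m).mulVec (window N v w k)
        = 2 * ∑ i : Fin (N + 1), ∑ j : Fin (N + 1), zfM0 N m i j *
            (extZ w ((k : ℤ) - (i : ℤ)) *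
              (extZ v ((k : ℤ) - (j : ℤ)) - extZ w ((k : ℤ) - (j : ℤ)))) :=
      quadgen (zfM0 N m) (fun i => extZ v ((k : ℤ) - (i : ℤ)))
        (fun i => extZ w ((k : ℤ) - (i : ℤ)))
    rw [h0, zfM0_sum N m (fun i j => extZ w ((k : ℤ) - (i : ℤ)) *
      (extZ v ((k : ℤ) - (j : ℤ)) - extZ w ((k : ℤ) - (j : ℤ))))]
    congr 1
    refine congrArg₂ (· + ·) ?_ ?_
    · rw [Fin.sum_univ_eq_sum_range (fun j =>
        m (j : ℤ) * (extZ w ((k : ℤ) - ((0 : Fin (N + 1)) : ℤ)) *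
          (extZ v ((k : ℤ) - (j : ℤ)) - extZ w ((k : ℤ) - (j : ℤ)))))]
      refine Finset.sum_congr rfl fun j hj => ?_
      have hz : ((0 : Fin (N + 1)) : ℤ) = 0 := by norm_num
      rw [hz, sub_zero, extZ_nat, extZ_sub, extZ_sub]
      split_ifs with h
      · rfl
      · ring
    · have step : ∀ i : Fin N,
          m (-((i : ℤ) + 1)) * (extZ w ((k : ℤ) - ((i.succ : Fin (N + 1)) : ℤ)) *
            (extZ v ((k : ℤ) - ((0 : Fin (N + 1)) : ℤ)) -
              extZ w ((k : ℤ) - ((0 : Fin (N + 1)) : ℤ))))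
          = (fun i : ℕ => if i + 1 ≤ k then m (-((i : ℤ) + 1)) * (w (k - (i + 1)) * u k) else 0)
              (i : ℕ) := by
        intro i
        have hz : ((0 : Fin (N + 1)) : ℤ) = 0 := by norm_num
        have hs : ((i.succ : Fin (N + 1)) : ℤ) = (((i : ℕ) + 1 : ℕ) : ℤ) := by
          rw [Fin.val_succ]
        rw [hz, sub_zero, extZ_nat, extZ_nat, hs, extZ_sub]
        simp only []
        split_ifs with h
        · rfl
        · ring
      rw [Finset.sum_congr rfl fun i _ => step i]
      exact Fin.sum_univ_eq_sum_range
        (fun i : ℕ => if i + 1 ≤ k then m (-((i : ℤ) + 1)) * (w (k - (i + 1)) * u k) else 0) N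
  -- RHS via the general quadratic form identity and reversal reindexing
  have hRq : (Sum.elim vbar wbar) ⬝ᵥ
        (Matrix.fromBlocks 0 Q₀ᵀ Q₀ (-(Q₀ + Q₀ᵀ))).mulVec (Sum.elim vbar wbar)
      = 2 * ∑ i, ∑ j, Q₀ i j * (wbar i * (vbar j - wbar j)) := quadgen Q₀ vbar wbar
  have hrev : ∑ i : Fin (T₀ + 1), ∑ j : Fin (T₀ + 1),
        (if |(i : ℤ) - (j : ℤ)| ≤ (N : ℤ) then m ((i : ℤ) - (j : ℤ)) else 0)
          * (w (i : ℕ) * u (j : ℕ))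
      = ∑ i, ∑ j, Q₀ i j * (wbar i * (vbar j - wbar j)) := by
    refine Fintype.sum_equiv Fin.revPerm _ _ fun i => ?_
    refine Fintype.sum_equiv Fin.revPerm _ _ fun j => ?_
    have hi := i.isLt
    have hj := j.isLt
    have key : ((Fin.revPerm j : Fin (T₀ + 1)) : ℤ) - ((Fin.revPerm i : Fin (T₀ + 1)) : ℤ)
        = (i : ℤ) - (j : ℤ) := by
      simp only [Fin.revPerm_apply, Fin.val_rev]
      omega
    have e1 : T₀ - ((Fin.revPerm i : Fin (T₀ + 1)) : ℕ) = (i : ℕ) := by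
      simp only [Fin.revPerm_apply, Fin.val_rev]
      omega
    have e2 : T₀ - ((Fin.revPerm j : Fin (T₀ + 1)) : ℕ) = (j : ℕ) := by
      simp only [Fin.revPerm_apply, Fin.val_rev]
      omega
    rw [hQ, hv, hw, hw, key, e1, e2]
  -- convert the Fin-indexed double sum to a range-indexed double sum
  have hfin : ∑ i : Fin (T₀ + 1), ∑ j : Fin (T₀ + 1),
        (if |(i : ℤ) - (j : ℤ)| ≤ (N : ℤ) then m ((i : ℤ) - (j : ℤ)) else 0)
          * (w (i : ℕ) * u (j : ℕ))
      = ∑ a ∈ Finset.range (T₀ + 1), ∑ b ∈ Finset.range (T₀ + 1),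
        (if |(a : ℤ) - (b : ℤ)| ≤ (N : ℤ) then m ((a : ℤ) - (b : ℤ)) else 0)
          * (w a * u b) := by
    have s1 : ∀ i : Fin (T₀ + 1), ∑ j : Fin (T₀ + 1),
          (if |(i : ℤ) - (j : ℤ)| ≤ (N : ℤ) then m ((i : ℤ) - (j : ℤ)) else 0)
            * (w (i : ℕ) * u (j : ℕ))
        = ∑ b ∈ Finset.range (T₀ + 1),
          (if |(i : ℤ) - (b : ℤ)| ≤ (N : ℤ) then m ((i : ℤ) - (b : ℤ)) else 0)
            * (w (i : ℕ) * u b) := fun i =>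
      Fin.sum_univ_eq_sum_range (fun b : ℕ =>
        (if |(i : ℤ) - (b : ℤ)| ≤ (N : ℤ) then m ((i : ℤ) - (b : ℤ)) else 0)
          * (w (i : ℕ) * u b)) (T₀ + 1)
    rw [Finset.sum_congr rfl fun i _ => s1 i]
    exact Fin.sum_univ_eq_sum_range (fun a : ℕ => ∑ b ∈ Finset.range (T₀ + 1),
      (if |(a : ℤ) - (b : ℤ)| ≤ (N : ℤ) then m ((a : ℤ) - (b : ℤ)) else 0)
        * (w a * u b)) (T₀ + 1)
  -- split the summand into lower / strictly-upper triangular parts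
  have hsplit : ∀ a b : ℕ,
      (if |(a : ℤ) - (b : ℤ)| ≤ (N : ℤ) then m ((a : ℤ) - (b : ℤ)) else 0) * (w a * u b)
      = (if b ≤ a ∧ a - b ≤ N then m ((a : ℤ) - (b : ℤ)) * (w a * u b) else 0)
        + (if a < b ∧ b - a ≤ N then m ((a : ℤ) - (b : ℤ)) * (w a * u b) else 0) := by
    intro a b
    simp only [abs_le]
    split_ifs <;> first | (exfalso; omega) | ring
  -- lower-triangular part matches the first half of the LHS
  have claim1 : ∑ a ∈ Finset.range (T₀ + 1), ∑ b ∈ Finset.range (T₀ + 1),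
        (if b ≤ a ∧ a - b ≤ N then m ((a : ℤ) - (b : ℤ)) * (w a * u b) else 0)
      = ∑ k ∈ Finset.range (T₀ + 1), ∑ j ∈ Finset.range (N + 1),
        (if j ≤ k then m (j : ℤ) * (w k * u (k - j)) else 0) := by
    refine Finset.sum_congr rfl fun k hk => ?_
    have hk' : k ≤ T₀ := by simpa [Nat.lt_succ_iff] using hk
    have e : ∀ b, (if b ≤ k ∧ k - b ≤ N then m ((k : ℤ) - (b : ℤ)) * (w k * u b) else 0)
        = if b ≤ k ∧ k - b ≤ N then
            (fun d : ℕ => m (d : ℤ) * (w k * u (k - d))) (k - b) else 0 := by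
      intro b
      split_ifs with h
      · have c1 : (k : ℤ) - (b : ℤ) = (((k - b : ℕ)) : ℤ) := by omega
        have c2 : k - (k - b) = b := by omega
        simp only [c1, c2]
      · rfl
    rw [Finset.sum_congr rfl fun b _ => e b]
    exact sum_shift1 k T₀ N (fun d : ℕ => m (d : ℤ) * (w k * u (k - d))) hk'
  -- strictly-upper part matches the second half of the LHS
  have claim2 : ∑ a ∈ Finset.range (T₀ + 1), ∑ b ∈ Finset.range (T₀ + 1),
        (if a < b ∧ b - a ≤ N then m ((a : ℤ) - (b : ℤ)) * (w a * u b) else 0)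
      = ∑ k ∈ Finset.range (T₀ + 1), ∑ i ∈ Finset.range N,
        (if i + 1 ≤ k then m (-((i : ℤ) + 1)) * (w (k - (i + 1)) * u k) else 0) := by
    rw [Finset.sum_comm]
    refine Finset.sum_congr rfl fun k hk => ?_
    have hk' : k ≤ T₀ := by simpa [Nat.lt_succ_iff] using hk
    have e : ∀ a, (if a < k ∧ k - a ≤ N then m ((a : ℤ) - (k : ℤ)) * (w a * u k) else 0)
        = if a < k ∧ k - a ≤ N then
            (fun d : ℕ => m (-(d : ℤ)) * (w (k - d) * u k)) (k - a) else 0 := by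
      intro a
      split_ifs with h
      · have c1 : (a : ℤ) - (k : ℤ) = -(((k - a : ℕ)) : ℤ) := by omega
        have c2 : k - (k - a) = a := by omega
        simp only [c1, c2]
      · rfl
    rw [Finset.sum_congr rfl fun a _ => e a,
      sum_shift2 k T₀ N (fun d : ℕ => m (-(d : ℤ)) * (w (k - d) * u k)) hk']
    refine Finset.sum_congr rfl fun i _ => ?_
    split_ifs with h
    · have : (((i + 1 : ℕ)) : ℤ) = (i : ℤ) + 1 := by push_cast; ring
      rw [this]
    · rfl
  -- put everything together
  rw [Finset.sum_congr rfl fun k _ => hL k, hRq, ← hrev, hfin, ← Finset.mul_sum]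
  congr 1
  rw [Finset.sum_add_distrib, ← claim1, ← claim2,
    Finset.sum_congr rfl fun a (_ : a ∈ Finset.range (T₀ + 1)) =>
      Finset.sum_congr rfl fun b (_ : b ∈ Finset.range (T₀ + 1)) => hsplit a b]
  simp only [Finset.sum_add_distrib]
end

section
/- Let φ : ℝ → ℝ satisfy φ(0) = 0 and be slope-restricted to [0,1]. Let N ∈ ℕ and m₋N, …, m_N ∈ ℝ satisfy m_i ≤ 0 for all i ≠ 0 and ∑_{i=−N}^{N} m_i ≥ 0, and let M ∈ ℝ^{(2N+2)×(2N+2)} be the associated Zames–Falb IQC matrix. Then for every sequence v : ℕ → ℝ, with w(k) := φ(v(k)) for all k, and r(k) the associated window vectors, the hard IQC ∑_{k=0}^{T₀} r(k)ᵀ M r(k) ≥ 0 holds for every T₀ ∈ ℕ. -/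
open Matrix

section ZFAux

variable {φ : ℝ → ℝ}

private lemma zf_mono (hslope : SlopeRestricted01 φ) {a b : ℝ} (hab : a ≤ b) :
    φ a ≤ φ b ∧ φ b - φ a ≤ b - a := by
  rcases eq_or_lt_of_le hab with h | h
  · subst h; simp
  · obtain ⟨h1, h2⟩ := hslope a b h
    constructor <;> linarith

private lemma zf_cont (hslope : SlopeRestricted01 φ) : Continuous φ := by
  have h : LipschitzWith 1 φ := by
    apply LipschitzWith.of_dist_le_mul
    intro x y
    rw [Real.dist_eq, Real.dist_eq, NNReal.coe_one, one_mul, abs_sub_le_iff]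
    rcases le_total x y with h | h
    · obtain ⟨h1, h2⟩ := zf_mono hslope h
      have h3 : |x - y| = y - x := by rw [abs_sub_comm, abs_of_nonneg (by linarith)]
      constructor <;> linarith
    · obtain ⟨h1, h2⟩ := zf_mono hslope h
      have h3 : |x - y| = x - y := abs_of_nonneg (by linarith)
      constructor <;> linarith
  exact h.continuous

noncomputable def zfF (φ : ℝ → ℝ) : ℝ → ℝ := fun x => ∫ t in (0:ℝ)..x, φ t

private lemma zf_keyB (hslope : SlopeRestricted01 φ) (a b : ℝ) :
    zfF φ a - zfF φ b ≤ φ a * (a - b) - (φ a - φ b)^2 / 2 := by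
  have hcont := zf_cont hslope
  have hint : ∀ p q : ℝ, IntervalIntegrable φ MeasureTheory.volume p q :=
    fun p q => hcont.intervalIntegrable p q
  have hFF : zfF φ a - zfF φ b = ∫ t in b..a, φ t := by
    rw [zfF, zfF, intervalIntegral.integral_interval_sub_left (hint 0 a) (hint 0 b)]
  rcases le_total b a with hba | hab
  · set Δ : ℝ := φ a - φ b with hΔ
    have hΔ0 : 0 ≤ Δ := by have := zf_mono hslope hba; linarith [this.1]
    have hΔ1 : Δ ≤ a - b := by have := zf_mono hslope hba; linarith [this.2]
    set c : ℝ := b + Δ with hc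
    have hbc : b ≤ c := by simp [hc]; linarith
    have hca : c ≤ a := by simp [hc]; linarith
    have h1 : (∫ t in b..c, (Δ + b - t)) ≤ ∫ t in b..c, (φ a - φ t) := by
      apply intervalIntegral.integral_mono_on hbc
      · exact (continuous_const.sub continuous_id).intervalIntegrable _ _
      · exact (continuous_const.sub hcont).intervalIntegrable _ _
      · intro t ht
        obtain ⟨ht1, ht2⟩ := Set.mem_Icc.mp ht
        have := (zf_mono hslope ht1).2
        simp only [hΔ]
        linarith
    have h2 : (∫ t in b..c, (Δ + b - t)) = Δ^2/2 := by
      have e : (fun t : ℝ => Δ + b - t) = fun t : ℝ => (Δ + b) - t := rfl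
      rw [e, intervalIntegral.integral_sub intervalIntegrable_const
        intervalIntegral.intervalIntegrable_id, intervalIntegral.integral_const]
      rw [show (∫ x in b..c, (x:ℝ)) = (c^2 - b^2)/2 from by open intervalIntegral in exact integral_id]
      simp only [hc, smul_eq_mul]
      ring
    have h3 : 0 ≤ ∫ t in c..a, (φ a - φ t) := by
      apply intervalIntegral.integral_nonneg hca
      intro t ht
      have := (zf_mono hslope (Set.mem_Icc.mp ht).2).1
      linarith
    have h4 : ((∫ t in b..c, (φ a - φ t)) + ∫ t in c..a, (φ a - φ t))
        = ∫ t in b..a, (φ a - φ t) :=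
      intervalIntegral.integral_add_adjacent_intervals
        ((continuous_const.sub hcont).intervalIntegrable _ _)
        ((continuous_const.sub hcont).intervalIntegrable _ _)
    have h5 : (∫ t in b..a, (φ a - φ t)) = φ a * (a - b) - ∫ t in b..a, φ t := by
      rw [intervalIntegral.integral_sub intervalIntegrable_const (hint b a),
        intervalIntegral.integral_const]
      simp [smul_eq_mul, mul_comm]
    rw [hFF]
    have : Δ^2/2 ≤ φ a * (a - b) - ∫ t in b..a, φ t := by linarith
    simp only [hΔ] at this ⊢
    linarith
  · set Δ : ℝ := φ b - φ a with hΔ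
    have hΔ0 : 0 ≤ Δ := by have := zf_mono hslope hab; linarith [this.1]
    have hΔ1 : Δ ≤ b - a := by have := zf_mono hslope hab; linarith [this.2]
    set c : ℝ := b - Δ with hc
    have hac : a ≤ c := by simp [hc]; linarith
    have hcb : c ≤ b := by simp [hc]; linarith
    have h1 : (∫ t in c..b, (Δ - b + t)) ≤ ∫ t in c..b, (φ t - φ a) := by
      apply intervalIntegral.integral_mono_on hcb
      · exact (continuous_const.add continuous_id).intervalIntegrable _ _
      · exact (hcont.sub continuous_const).intervalIntegrable _ _
      · intro t ht
        obtain ⟨ht1, ht2⟩ := Set.mem_Icc.mp ht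
        have := (zf_mono hslope ht2).2
        simp only [hΔ]
        linarith
    have h2 : (∫ t in c..b, (Δ - b + t)) = Δ^2/2 := by
      have e : (fun t : ℝ => Δ - b + t) = fun t : ℝ => (Δ - b) + t := rfl
      rw [e, intervalIntegral.integral_add intervalIntegrable_const
        intervalIntegral.intervalIntegrable_id, intervalIntegral.integral_const]
      rw [show (∫ x in c..b, (x:ℝ)) = (b^2 - c^2)/2 from by open intervalIntegral in exact integral_id]
      simp only [hc, smul_eq_mul]
      ring
    have h3 : 0 ≤ ∫ t in a..c, (φ t - φ a) := by
      apply intervalIntegral.integral_nonneg hac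
      intro t ht
      have := (zf_mono hslope (Set.mem_Icc.mp ht).1).1
      linarith
    have h4 : ((∫ t in a..c, (φ t - φ a)) + ∫ t in c..b, (φ t - φ a))
        = ∫ t in a..b, (φ t - φ a) :=
      intervalIntegral.integral_add_adjacent_intervals
        ((hcont.sub continuous_const).intervalIntegrable _ _)
        ((hcont.sub continuous_const).intervalIntegrable _ _)
    have h5 : (∫ t in a..b, (φ t - φ a)) = (∫ t in a..b, φ t) - φ a * (b - a) := by
      rw [intervalIntegral.integral_sub (hint a b) intervalIntegrable_const,
        intervalIntegral.integral_const]
      simp [smul_eq_mul, mul_comm]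
    have h6 : (∫ t in b..a, φ t) = - ∫ t in a..b, φ t := intervalIntegral.integral_symm a b
    rw [hFF, h6]
    have : Δ^2/2 ≤ (∫ t in a..b, φ t) - φ a * (b - a) := by linarith
    simp only [hΔ] at this ⊢
    nlinarith [this]

end ZFAux

section ZFAux2

variable {φ : ℝ → ℝ}

noncomputable def zfG (φ : ℝ → ℝ) : ℝ → ℝ := fun x => zfF φ x - (φ x)^2/2
noncomputable def zfH (φ : ℝ → ℝ) : ℝ → ℝ := fun x => x * φ x - zfF φ x - (φ x)^2/2

private lemma zfF_zero : zfF φ 0 = 0 := intervalIntegral.integral_same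

private lemma zfG_zero (hφ0 : φ 0 = 0) : zfG φ 0 = 0 := by
  simp [zfG, zfF_zero, hφ0]

private lemma zfH_zero (hφ0 : φ 0 = 0) : zfH φ 0 = 0 := by
  simp [zfH, zfF_zero, hφ0]

private lemma zfG_nonneg (hφ0 : φ 0 = 0) (hslope : SlopeRestricted01 φ) (x : ℝ) :
    0 ≤ zfG φ x := by
  have h := zf_keyB hslope 0 x
  rw [hφ0, zfF_zero] at h
  simp only [zfG]
  nlinarith [h]

private lemma zfH_nonneg (hφ0 : φ 0 = 0) (hslope : SlopeRestricted01 φ) (x : ℝ) :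
    0 ≤ zfH φ x := by
  have h := zf_keyB hslope x 0
  rw [hφ0, zfF_zero] at h
  simp only [zfH]
  nlinarith [h]

private lemma zf_p_nonneg (hφ0 : φ 0 = 0) (hslope : SlopeRestricted01 φ) (x : ℝ) :
    0 ≤ φ x * (x - φ x) := by
  have h1 := zfG_nonneg hφ0 hslope x
  have h2 := zfH_nonneg hφ0 hslope x
  have : φ x * (x - φ x) = zfG φ x + zfH φ x := by simp [zfG, zfH]; ring
  linarith

private lemma zf_crossG (hslope : SlopeRestricted01 φ) (a b : ℝ) :
    zfG φ a - zfG φ b ≤ φ a * ((a - φ a) - (b - φ b)) := by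
  have h := zf_keyB hslope a b
  simp only [zfG]
  nlinarith [h]

private lemma zf_crossH (hslope : SlopeRestricted01 φ) (a b : ℝ) :
    zfH φ a - zfH φ b ≤ (a - φ a) * (φ a - φ b) := by
  have h := zf_keyB hslope b a
  simp only [zfH]
  nlinarith [h]

private lemma zf_shift_sum_le (g : ℤ → ℝ) (hg : ∀ t, 0 ≤ g t)
    (hneg : ∀ t : ℤ, t < 0 → g t = 0) (j : ℤ) (hj : 0 ≤ j) (n : ℕ) :
    ∑ k ∈ Finset.range n, g ((k : ℤ) - j) ≤ ∑ k ∈ Finset.range n, g (k : ℤ) := by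
  obtain ⟨jn, rfl⟩ : ∃ jn : ℕ, (jn : ℤ) = j := ⟨j.toNat, Int.toNat_of_nonneg hj⟩
  calc ∑ k ∈ Finset.range n, g ((k : ℤ) - jn)
      = ∑ k ∈ Finset.range n, if jn ≤ k then g ((k - jn : ℕ) : ℤ) else 0 := by
        refine Finset.sum_congr rfl fun k _ => ?_
        by_cases h : jn ≤ k
        · rw [if_pos h]; congr 1; omega
        · rw [if_neg h]; exact hneg _ (by omega)
    _ = ∑ k ∈ Finset.Ico jn n, g ((k - jn : ℕ) : ℤ) := by
        rw [← Finset.sum_filter]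
        congr 1
        ext x
        simp only [Finset.mem_filter, Finset.mem_Ico, Finset.mem_range]
        omega
    _ = ∑ k ∈ Finset.range (n - jn), g (k : ℤ) := by
        rw [Finset.sum_Ico_eq_sum_range]
        refine Finset.sum_congr rfl fun k _ => ?_
        congr 1
        omega
    _ ≤ ∑ k ∈ Finset.range n, g (k : ℤ) := by
        apply Finset.sum_le_sum_of_subset_of_nonneg
        · exact Finset.range_subset_range.2 (by omega)
        · exact fun i _ _ => hg _

private lemma zf_seqG (hφ0 : φ 0 = 0) (hslope : SlopeRestricted01 φ)
    (u : ℤ → ℝ) (hu : ∀ t : ℤ, t < 0 → u t = 0) (s : ℤ) (hs : 0 ≤ s) (n : ℕ) :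
    ∑ k ∈ Finset.range n, φ (u (k : ℤ)) * (u ((k:ℤ) - s) - φ (u ((k:ℤ) - s)))
      ≤ ∑ k ∈ Finset.range n, φ (u (k : ℤ)) * (u (k:ℤ) - φ (u (k:ℤ))) := by
  have h1 : ∑ k ∈ Finset.range n, zfG φ (u ((k:ℤ) - s)) ≤ ∑ k ∈ Finset.range n, zfG φ (u (k:ℤ)) :=
    zf_shift_sum_le (fun t => zfG φ (u t)) (fun t => zfG_nonneg hφ0 hslope _)
      (fun t ht => by show zfG φ (u t) = 0; rw [hu t ht]; exact zfG_zero hφ0) s hs n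
  have h2 : ∀ k ∈ Finset.range n,
      zfG φ (u (k:ℤ)) - zfG φ (u ((k:ℤ) - s))
        ≤ φ (u (k:ℤ)) * (u (k:ℤ) - φ (u (k:ℤ))) - φ (u (k:ℤ)) * (u ((k:ℤ)-s) - φ (u ((k:ℤ)-s))) := by
    intro k _
    have := zf_crossG hslope (u (k:ℤ)) (u ((k:ℤ) - s))
    nlinarith [this]
  have h3 := Finset.sum_le_sum h2
  rw [Finset.sum_sub_distrib, Finset.sum_sub_distrib] at h3
  linarith

private lemma zf_seqH (hφ0 : φ 0 = 0) (hslope : SlopeRestricted01 φ)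
    (u : ℤ → ℝ) (hu : ∀ t : ℤ, t < 0 → u t = 0) (s : ℤ) (hs : 0 ≤ s) (n : ℕ) :
    ∑ k ∈ Finset.range n, φ (u ((k:ℤ) - s)) * (u (k:ℤ) - φ (u (k:ℤ)))
      ≤ ∑ k ∈ Finset.range n, φ (u (k : ℤ)) * (u (k:ℤ) - φ (u (k:ℤ))) := by
  have h1 : ∑ k ∈ Finset.range n, zfH φ (u ((k:ℤ) - s)) ≤ ∑ k ∈ Finset.range n, zfH φ (u (k:ℤ)) :=
    zf_shift_sum_le (fun t => zfH φ (u t)) (fun t => zfH_nonneg hφ0 hslope _)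
      (fun t ht => by show zfH φ (u t) = 0; rw [hu t ht]; exact zfH_zero hφ0) s hs n
  have h2 : ∀ k ∈ Finset.range n,
      zfH φ (u (k:ℤ)) - zfH φ (u ((k:ℤ) - s))
        ≤ φ (u (k:ℤ)) * (u (k:ℤ) - φ (u (k:ℤ))) - φ (u ((k:ℤ)-s)) * (u (k:ℤ) - φ (u (k:ℤ))) := by
    intro k _
    have := zf_crossH hslope (u (k:ℤ)) (u ((k:ℤ) - s))
    nlinarith [this]
  have h3 := Finset.sum_le_sum h2
  rw [Finset.sum_sub_distrib, Finset.sum_sub_distrib] at h3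
  linarith

end ZFAux2

private lemma zf_quadform {n : Type*} [Fintype n] [DecidableEq n]
    (A : Matrix n n ℝ) (x y : n → ℝ) :
    Sum.elim x y ⬝ᵥ (Matrix.fromBlocks 0 Aᵀ A (-(A + Aᵀ))).mulVec (Sum.elim x y)
      = 2 * (y ⬝ᵥ A.mulVec (x - y)) := by
  rw [Matrix.fromBlocks_mulVec, sumElim_dotProduct_sumElim]
  have ht : ∀ z : n → ℝ, z ⬝ᵥ Aᵀ.mulVec y = y ⬝ᵥ A.mulVec z := by
    intro z
    rw [Matrix.mulVec_transpose, dotProduct_comm, Matrix.dotProduct_mulVec]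
  simp only [Matrix.zero_mulVec, zero_add, Matrix.add_mulVec, Matrix.neg_mulVec,
    dotProduct_add, dotProduct_neg, Matrix.mulVec_sub, dotProduct_sub,
    Matrix.mulVec_add, Sum.elim_comp_inl, Sum.elim_comp_inr]
  rw [ht x, ht y]
  ring

private lemma zfM0_dot (N : ℕ) (m : ℤ → ℝ) (y z : Fin (N+1) → ℝ) :
    y ⬝ᵥ (zfM0 N m).mulVec z
      = y 0 * (∑ j : Fin (N+1), m (j : ℤ) * z j)
        + ∑ i : Fin N, m (-((i.succ : Fin (N+1)) : ℤ)) * (y i.succ * z 0) := by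
  simp only [dotProduct, Matrix.mulVec, zfM0, Matrix.of_apply]
  rw [Fin.sum_univ_succ]
  congr 1
  have inner : ∀ c : ℝ, (∑ x : Fin (N+1), (if (x : ℕ) = 0 then c else 0) * z x) = c * z 0 := by
    intro c
    rw [Fin.sum_univ_succ]
    simp [Fin.val_succ]
  refine Finset.sum_congr rfl fun i _ => ?_
  simp only [Fin.val_succ, Nat.succ_ne_zero, if_false]
  rw [inner]
  ring

private lemma zf_sum_icc0 (N : ℕ) (f : ℤ → ℝ) :
    ∑ i ∈ Finset.Icc (0:ℤ) (N:ℤ), f i = f 0 + ∑ j : Fin N, f ((j : ℤ) + 1) := by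
  have hmap : Finset.Icc (0:ℤ) (N:ℤ)
      = (Finset.range (N+1)).map ⟨(Nat.cast : ℕ → ℤ), Nat.cast_injective⟩ := by
    ext x
    simp only [Finset.mem_Icc, Finset.mem_map, Finset.mem_range, Function.Embedding.coeFn_mk]
    constructor
    · intro h; exact ⟨x.toNat, by omega, by omega⟩
    · rintro ⟨a, ha, rfl⟩; omega
  rw [hmap, Finset.sum_map]
  simp only [Function.Embedding.coeFn_mk]
  rw [← Fin.sum_univ_eq_sum_range (fun k => f (k : ℤ)) (N+1), Fin.sum_univ_succ]
  simp only [Fin.val_zero, Nat.cast_zero, Fin.val_succ]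
  congr 1

private lemma zf_icc_sum (N : ℕ) (m : ℤ → ℝ) :
    ∑ i ∈ Finset.Icc (-(N:ℤ)) (N:ℤ), m i
      = m 0 + ((∑ j : Fin N, m ((j : ℤ) + 1)) + ∑ j : Fin N, m (-(j : ℤ) - 1)) := by
  have hsplit : Finset.Icc (-(N:ℤ)) (N:ℤ)
      = Finset.Icc (-(N:ℤ)) (-1) ∪ Finset.Icc 0 (N:ℤ) := by
    ext x
    simp only [Finset.mem_Icc, Finset.mem_union]
    omega
  have hdisj : Disjoint (Finset.Icc (-(N:ℤ)) (-1)) (Finset.Icc 0 (N:ℤ)) := by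
    rw [Finset.disjoint_left]
    intro a ha hb
    simp only [Finset.mem_Icc] at ha hb
    omega
  rw [hsplit, Finset.sum_union hdisj]
  have h1 := zf_sum_icc0 N m
  have e1 : Finset.Icc (-(N:ℤ)) (-1) = Finset.image (fun i : ℤ => -i) (Finset.Icc 1 (N:ℤ)) := by
    ext x
    simp only [Finset.mem_Icc, Finset.mem_image]
    constructor
    · intro h; exact ⟨-x, by omega, by omega⟩
    · rintro ⟨a, ha, rfl⟩; omega
  have e2 : Finset.Icc (0:ℤ) (N:ℤ) = insert 0 (Finset.Icc 1 (N:ℤ)) := by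
    ext x
    simp only [Finset.mem_Icc, Finset.mem_insert]
    omega
  have h2 : ∑ i ∈ Finset.Icc (-(N:ℤ)) (-1), m i = ∑ i ∈ Finset.Icc (1:ℤ) (N:ℤ), m (-i) := by
    rw [e1, Finset.sum_image]
    intro a _ b _ h
    simp only [neg_inj] at h
    omega
  have h3 := zf_sum_icc0 N (fun i => m (-i))
  rw [e2, Finset.sum_insert (by simp)] at h3
  simp only [neg_zero] at h3
  have h5 : ∑ j : Fin N, (fun i => m (-i)) ((j : ℤ) + 1) = ∑ j : Fin N, m (-(j:ℤ) - 1) :=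
    Finset.sum_congr rfl fun j _ => by simp only []; congr 1; ring
  rw [h5] at h3
  rw [h2, h1]
  linarith

theorem stmt3 (φ : ℝ → ℝ) (hφ0 : φ 0 = 0) (hslope : SlopeRestricted01 φ)
    (N : ℕ) (m : ℤ → ℝ)
    (hm : ∀ i : ℤ, i ≠ 0 → |i| ≤ (N : ℤ) → m i ≤ 0)
    (hsum : 0 ≤ ∑ i ∈ Finset.Icc (-(N : ℤ)) (N : ℤ), m i)
    (v w : ℕ → ℝ) (hw : ∀ k, w k = φ (v k)) (T₀ : ℕ) :
    0 ≤ ∑ k ∈ Finset.range (T₀ + 1),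
        window N v w k ⬝ᵥ (zfIQC N m).mulVec (window N v w k) := by
  classical
  set u : ℤ → ℝ := extZ v with hudef
  have huneg : ∀ t : ℤ, t < 0 → u t = 0 := by
    intro t ht
    simp only [hudef, extZ]
    rw [if_neg (by omega)]
  have hwφ : ∀ t : ℤ, extZ w t = φ (u t) := by
    intro t
    by_cases h : 0 ≤ t
    · simp only [hudef, extZ, if_pos h]; exact hw _
    · simp only [hudef, extZ, if_neg h]; exact hφ0.symm
  set Z : ℤ → ℝ := fun t => u t - φ (u t) with hZdef
  have hwin : ∀ k : ℕ, window N v w k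
      = Sum.elim (fun i : Fin (N+1) => u ((k:ℤ) - (i:ℤ)))
          (fun i : Fin (N+1) => φ (u ((k:ℤ) - (i:ℤ)))) := by
    intro k
    funext s
    cases s with
    | inl i => simp [window, hudef]
    | inr i => simp [window, hwφ]
  have hform : ∀ k : ℕ, window N v w k ⬝ᵥ (zfIQC N m).mulVec (window N v w k)
      = 2 * (φ (u (k:ℤ)) * (∑ j : Fin (N+1), m (j:ℤ) * Z ((k:ℤ) - (j:ℤ)))
           + ∑ i : Fin N, m (-((i.succ : Fin (N+1)) : ℤ))
               * (φ (u ((k:ℤ) - ((i.succ : Fin (N+1)) : ℤ))) * Z (k:ℤ))) := by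
    intro k
    rw [hwin k]
    rw [show zfIQC N m = Matrix.fromBlocks 0 (zfM0 N m)ᵀ (zfM0 N m)
      (-(zfM0 N m + (zfM0 N m)ᵀ)) from rfl]
    rw [zf_quadform, zfM0_dot]
    have e0 : ((0 : Fin (N+1)) : ℤ) = 0 := rfl
    congr 1
  set S1 : Fin (N+1) → ℝ :=
    fun j => ∑ k ∈ Finset.range (T₀+1), φ (u (k:ℤ)) * Z ((k:ℤ) - (j:ℤ)) with hS1def
  set S2 : Fin N → ℝ :=
    fun i => ∑ k ∈ Finset.range (T₀+1),
      φ (u ((k:ℤ) - ((i.succ : Fin (N+1)) : ℤ))) * Z (k:ℤ) with hS2def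
  set P : ℝ := ∑ k ∈ Finset.range (T₀+1), φ (u (k:ℤ)) * Z (k:ℤ) with hPdef
  have htotal : ∑ k ∈ Finset.range (T₀ + 1),
        window N v w k ⬝ᵥ (zfIQC N m).mulVec (window N v w k)
      = 2 * ((∑ j : Fin (N+1), m (j:ℤ) * S1 j)
           + ∑ i : Fin N, m (-((i.succ : Fin (N+1)) : ℤ)) * S2 i) := by
    rw [Finset.sum_congr rfl fun k _ => hform k, ← Finset.mul_sum]
    congr 1
    rw [Finset.sum_add_distrib]
    congr 1
    · calc ∑ k ∈ Finset.range (T₀+1), φ (u (k:ℤ)) * ∑ j : Fin (N+1), m (j:ℤ) * Z ((k:ℤ) - (j:ℤ))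
          = ∑ k ∈ Finset.range (T₀+1), ∑ j : Fin (N+1),
              m (j:ℤ) * (φ (u (k:ℤ)) * Z ((k:ℤ) - (j:ℤ))) := by
            refine Finset.sum_congr rfl fun k _ => ?_
            rw [Finset.mul_sum]
            exact Finset.sum_congr rfl fun j _ => by ring
        _ = ∑ j : Fin (N+1), ∑ k ∈ Finset.range (T₀+1),
              m (j:ℤ) * (φ (u (k:ℤ)) * Z ((k:ℤ) - (j:ℤ))) := Finset.sum_comm
        _ = ∑ j : Fin (N+1), m (j:ℤ) * S1 j := by
            refine Finset.sum_congr rfl fun j _ => ?_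
            rw [hS1def, ← Finset.mul_sum]
    · calc ∑ k ∈ Finset.range (T₀+1), ∑ i : Fin N, m (-((i.succ : Fin (N+1)) : ℤ))
              * (φ (u ((k:ℤ) - ((i.succ : Fin (N+1)) : ℤ))) * Z (k:ℤ))
          = ∑ i : Fin N, ∑ k ∈ Finset.range (T₀+1), m (-((i.succ : Fin (N+1)) : ℤ))
              * (φ (u ((k:ℤ) - ((i.succ : Fin (N+1)) : ℤ))) * Z (k:ℤ)) := Finset.sum_comm
        _ = ∑ i : Fin N, m (-((i.succ : Fin (N+1)) : ℤ)) * S2 i := by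
            refine Finset.sum_congr rfl fun i _ => ?_
            rw [hS2def, ← Finset.mul_sum]
  have hP0 : 0 ≤ P := by
    rw [hPdef]
    apply Finset.sum_nonneg
    intro k _
    simpa [hZdef] using zf_p_nonneg hφ0 hslope (u (k:ℤ))
  have hS1le : ∀ j : Fin (N+1), S1 j ≤ P := by
    intro j
    rw [hS1def, hPdef]
    simp only [hZdef]
    exact zf_seqG hφ0 hslope u huneg (j:ℤ) (by exact_mod_cast Nat.zero_le _) (T₀+1)
  have hS10 : S1 0 = P := by
    rw [hS1def, hPdef]
    refine Finset.sum_congr rfl fun k _ => ?_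
    norm_num
  have hS2le : ∀ i : Fin N, S2 i ≤ P := by
    intro i
    rw [hS2def, hPdef]
    simp only [hZdef]
    exact zf_seqH hφ0 hslope u huneg _ (by exact_mod_cast Nat.zero_le _) (T₀+1)
  have hcsucc : ∀ j : Fin N, ((j.succ : Fin (N+1)) : ℤ) = (j : ℤ) + 1 := by
    intro j
    simp [Fin.val_succ]
  have hm1 : ∀ j : Fin N, m ((j.succ : Fin (N+1)) : ℤ) ≤ 0 := by
    intro j
    rw [hcsucc j]
    apply hm
    · have : (0:ℤ) ≤ (j:ℤ) := by exact_mod_cast Nat.zero_le _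
      omega
    · have h1 : (0:ℤ) ≤ (j:ℤ) := by exact_mod_cast Nat.zero_le _
      have h2 : (j:ℤ) < (N:ℤ) := by exact_mod_cast j.isLt
      rw [abs_of_nonneg (by omega)]
      omega
  have hm2 : ∀ j : Fin N, m (-((j.succ : Fin (N+1)) : ℤ)) ≤ 0 := by
    intro j
    rw [hcsucc j]
    apply hm
    · have : (0:ℤ) ≤ (j:ℤ) := by exact_mod_cast Nat.zero_le _
      omega
    · have h1 : (0:ℤ) ≤ (j:ℤ) := by exact_mod_cast Nat.zero_le _
      have h2 : (j:ℤ) < (N:ℤ) := by exact_mod_cast j.isLt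
      rw [abs_of_nonpos (by omega)]
      omega
  have hbound1 : ∑ j : Fin (N+1), m (j:ℤ) * S1 j
      ≥ m 0 * P + (∑ j : Fin N, m ((j:ℤ) + 1)) * P := by
    rw [Fin.sum_univ_succ]
    have e0 : ((0 : Fin (N+1)) : ℤ) = 0 := rfl
    rw [e0, hS10, Finset.sum_mul]
    have : ∀ j : Fin N, m ((j:ℤ) + 1) * P ≤ m ((j.succ : Fin (N+1)) : ℤ) * S1 j.succ := by
      intro j
      rw [hcsucc j]
      exact mul_le_mul_of_nonpos_left (hS1le j.succ) (by rw [← hcsucc j]; exact hm1 j)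
    linarith [Finset.sum_le_sum fun j (_ : j ∈ Finset.univ) => this j]
  have hbound2 : ∑ i : Fin N, m (-((i.succ : Fin (N+1)) : ℤ)) * S2 i
      ≥ (∑ j : Fin N, m (-(j:ℤ) - 1)) * P := by
    rw [Finset.sum_mul]
    have : ∀ j : Fin N, m (-(j:ℤ) - 1) * P ≤ m (-((j.succ : Fin (N+1)) : ℤ)) * S2 j := by
      intro j
      have e : m (-(j:ℤ) - 1) = m (-((j.succ : Fin (N+1)) : ℤ)) := by rw [hcsucc j]; ring_nf
      rw [e]
      exact mul_le_mul_of_nonpos_left (hS2le j) (hm2 j)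
    exact Finset.sum_le_sum fun j _ => this j
  rw [htotal]
  have hfin : (∑ j : Fin (N+1), m (j:ℤ) * S1 j)
      + (∑ i : Fin N, m (-((i.succ : Fin (N+1)) : ℤ)) * S2 i)
      ≥ (∑ i ∈ Finset.Icc (-(N:ℤ)) (N:ℤ), m i) * P := by
    rw [zf_icc_sum]
    have := hbound1
    have := hbound2
    nlinarith [hbound1, hbound2]
  have : 0 ≤ (∑ i ∈ Finset.Icc (-(N:ℤ)) (N:ℤ), m i) * P := mul_nonneg hsum hP0
  linarith
end

section
/- Let φ : ℝ → ℝ satisfy φ(0) = 0 and be slope-restricted to [0,1]. Let N ∈ ℕ and m₋N, …, m_N ∈ ℝ satisfy m_i ≤ 0 for all i ≠ 0 and ∑_{i=−N}^{N} m_i ≥ 0, and let M ∈ ℝ^{(2N+2)×(2N+2)} be the associated Zames–Falb IQC matrix. Let v : ℕ → ℝ be square-summable (∑_{k=0}^{∞} v(k)² < ∞) and set w(k) := φ(v(k)). Then w is square-summable, and the series ∑_{k=0}^{∞} r(k)ᵀ M r(k), where r(k) are the associated window vectors, converges to a nonnegative limit. -/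
open Matrix

lemma quad_form_eq {n : Type*} [Fintype n] [DecidableEq n] (A : Matrix n n ℝ) (x y : n → ℝ) :
    Sum.elim x y ⬝ᵥ (Matrix.fromBlocks 0 Aᵀ A (-(A + Aᵀ))).mulVec (Sum.elim x y)
      = 2 * ∑ i, ∑ j, A i j * (y i * (x j - y j)) := by
  have key : ∑ i, ∑ j, A j i * (y i * y j) = ∑ i, ∑ j, A i j * (y i * y j) := by
    rw [Finset.sum_comm]
    exact Finset.sum_congr rfl fun i _ => Finset.sum_congr rfl fun j _ => by ring
  simp only [Matrix.fromBlocks_mulVec, dotProduct, Fintype.sum_sum_type,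
    Sum.elim_inl, Sum.elim_inr, Matrix.mulVec, Matrix.zero_mulVec, Pi.add_apply,
    Matrix.neg_mulVec, Matrix.add_mulVec, Pi.neg_apply, Matrix.transpose_apply,
    Pi.zero_apply, Matrix.fromBlocks_apply₁₁, Matrix.fromBlocks_apply₁₂,
    Matrix.fromBlocks_apply₂₁, Matrix.fromBlocks_apply₂₂, Matrix.zero_apply,
    Matrix.neg_apply, Matrix.add_apply, Matrix.transpose_apply, zero_mul,
    Finset.sum_const_zero, zero_add, Finset.mul_sum]
  rw [Finset.sum_comm]
  have h2 : ∀ i : n, y i * (∑ j, A i j * x j + ∑ j, -(A i j + A j i) * y j)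
      = ∑ j, (A i j * (y i * x j) - (A i j * (y i * y j) + A j i * (y i * y j))) := by
    intro i
    rw [mul_add, Finset.mul_sum, Finset.mul_sum, ← Finset.sum_add_distrib]
    exact Finset.sum_congr rfl fun j _ => by ring
  simp only [h2, Finset.sum_sub_distrib, Finset.sum_add_distrib]
  rw [key]
  have e1 : ∑ i : n, ∑ j : n, x j * (A i j * y i) = ∑ i : n, ∑ j : n, A i j * (y i * x j) :=
    Finset.sum_congr rfl fun i _ => Finset.sum_congr rfl fun j _ => by ring
  have e3 : ∑ i : n, ∑ j : n, 2 * (A i j * (y i * (x j - y j)))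
      = ∑ i : n, ∑ j : n, (2 * (A i j * (y i * x j)) - 2 * (A i j * (y i * y j))) :=
    Finset.sum_congr rfl fun i _ => Finset.sum_congr rfl fun j _ => by ring
  rw [e1, e3]
  simp only [Finset.sum_sub_distrib]
  simp only [← Finset.mul_sum]
  ring

lemma max_sq_hasDeriv (c t : ℝ) :
    HasDerivAt (fun x => max (x - c) 0 ^ 2 / 2) (max (t - c) 0) t := by
  rcases lt_trichotomy t c with h | h | h
  · have hz : max (t - c) 0 = 0 := max_eq_right (by linarith)
    rw [hz]
    have hev : (fun x : ℝ => max (x - c) 0 ^ 2 / 2) =ᶠ[nhds t] fun _ => (0:ℝ) := by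
      filter_upwards [eventually_lt_nhds h] with x hx
      rw [max_eq_right (by linarith)]
      norm_num
    exact (hasDerivAt_const t (0:ℝ)).congr_of_eventuallyEq hev
  · subst h
    rw [hasDerivAt_iff_isLittleO]
    have h0 : max (t - t) 0 = 0 := by simp
    rw [h0, Asymptotics.isLittleO_iff]
    intro ε hε
    rw [Metric.eventually_nhds_iff]
    refine ⟨2 * ε, by linarith, fun x hx => ?_⟩
    have h2 : |x - t| ≤ 2 * ε := le_of_lt (by rwa [Real.dist_eq] at hx)
    have hnn : (0:ℝ) ≤ max (x - t) 0 := le_max_right _ _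
    have h1 : max (x - t) 0 ≤ |x - t| := max_le (le_abs_self _) (abs_nonneg _)
    simp only [Real.norm_eq_abs, smul_zero, sub_zero, h0]
    have habs : |max (x - t) 0 ^ 2 / 2 - 0 ^ 2 / 2| = max (x - t) 0 ^ 2 / 2 := by
      rw [show (0:ℝ) ^ 2 / 2 = 0 by norm_num, sub_zero]
      exact abs_of_nonneg (by positivity)
    rw [habs]
    nlinarith [mul_le_mul h1 h1 hnn (abs_nonneg (x - t)),
      mul_le_mul_of_nonneg_left h2 (abs_nonneg (x - t)), abs_nonneg (x - t)]
  · have hmax : max (t - c) 0 = t - c := max_eq_left (by linarith)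
    rw [hmax]
    have hev : (fun x : ℝ => max (x - c) 0 ^ 2 / 2) =ᶠ[nhds t] fun x => (x - c) ^ 2 / 2 := by
      filter_upwards [eventually_gt_nhds h] with x hx
      rw [max_eq_left (by linarith)]
    have hd : HasDerivAt (fun x : ℝ => (x - c) ^ 2 / 2) (t - c) t := by
      have := ((hasDerivAt_id t).sub_const c).pow 2
      simpa using this.div_const 2
    exact hd.congr_of_eventuallyEq hev

lemma cont_max (c : ℝ) : Continuous (fun t : ℝ => max (t - c) 0) :=
  (continuous_id.sub continuous_const).max continuous_const

lemma integral_max (a b c : ℝ) :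
    ∫ t in a..b, max (t - c) 0 = max (b - c) 0 ^ 2 / 2 - max (a - c) 0 ^ 2 / 2 :=
  intervalIntegral.integral_eq_sub_of_hasDerivAt
    (fun t _ => max_sq_hasDeriv c t) ((cont_max c).intervalIntegrable a b)

lemma slope_mono {φ : ℝ → ℝ} (hs : ∀ a b : ℝ, a < b → 0 ≤ φ b - φ a ∧ φ b - φ a ≤ b - a) :
    Monotone φ := by
  intro a b hab
  rcases eq_or_lt_of_le hab with rfl | h
  · exact le_rfl
  · linarith [(hs a b h).1]

lemma slope_lip {φ : ℝ → ℝ} (hs : ∀ a b : ℝ, a < b → 0 ≤ φ b - φ a ∧ φ b - φ a ≤ b - a)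
    {a b : ℝ} (hab : a ≤ b) : φ b - φ a ≤ b - a := by
  rcases eq_or_lt_of_le hab with rfl | h
  · simp
  · exact (hs a b h).2

lemma slope_cont {φ : ℝ → ℝ} (hs : ∀ a b : ℝ, a < b → 0 ≤ φ b - φ a ∧ φ b - φ a ≤ b - a) :
    Continuous φ := by
  have : LipschitzWith 1 φ := by
    refine LipschitzWith.of_dist_le_mul fun a b => ?_
    rw [Real.dist_eq, Real.dist_eq, NNReal.coe_one, one_mul]
    rcases le_total a b with h | h
    · rw [abs_sub_comm (φ a), abs_sub_comm a,
        abs_of_nonneg (sub_nonneg.2 (slope_mono hs h)), abs_of_nonneg (sub_nonneg.2 h)]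
      exact slope_lip hs h
    · rw [abs_of_nonneg (sub_nonneg.2 (slope_mono hs h)), abs_of_nonneg (sub_nonneg.2 h)]
      exact slope_lip hs h
  exact this.continuous

lemma star_le {φ : ℝ → ℝ} (hs : ∀ a b : ℝ, a < b → 0 ≤ φ b - φ a ∧ φ b - φ a ≤ b - a)
    {a b : ℝ} (hab : a ≤ b) :
    φ a * (b - a) + (φ b - φ a) ^ 2 / 2 ≤ ∫ t in a..b, φ t := by
  set d := φ b - φ a with hd
  have hd0 : 0 ≤ d := by
    rcases eq_or_lt_of_le hab with rfl | h
    · simp [hd]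
    · exact (hs a b h).1
  have hdb : d ≤ b - a := slope_lip hs hab
  set c := b - d with hc
  have hac : a ≤ c := by simp [hc]; linarith
  have hcb : c ≤ b := by simp [hc]; linarith
  -- lower bound function
  have hlow : ∀ t ∈ Set.Icc a b, φ a + max (t - c) 0 ≤ φ t := by
    rintro t ⟨hta, htb⟩
    have h1 : 0 ≤ φ t - φ a := by linarith [slope_mono hs hta]
    have h2 : φ b - φ t ≤ b - t := slope_lip hs htb
    have : max (t - c) 0 ≤ φ t - φ a := by
      apply max_le _ h1
      simp only [hc]
      linarith
    linarith
  have hint1 : IntervalIntegrable (fun t => φ a + max (t - c) 0) MeasureTheory.volume a b :=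
    ((continuous_const.add (cont_max c)).intervalIntegrable a b)
  have hint2 : IntervalIntegrable φ MeasureTheory.volume a b :=
    ((slope_cont hs).intervalIntegrable a b)
  have hmono := intervalIntegral.integral_mono_on hab hint1 hint2 hlow
  have hcalc : ∫ t in a..b, (φ a + max (t - c) 0) = φ a * (b - a) + d ^ 2 / 2 := by
    rw [intervalIntegral.integral_add (intervalIntegrable_const) ((cont_max c).intervalIntegrable a b),
      intervalIntegral.integral_const, integral_max]
    have h1 : max (b - c) 0 = d := by rw [hc]; simp [hd0]
    have h2 : max (a - c) 0 = 0 := max_eq_right (by linarith)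
    rw [h1, h2]
    ring_nf
  linarith [hmono, hcalc.symm.le]

lemma star {φ : ℝ → ℝ} (hs : ∀ a b : ℝ, a < b → 0 ≤ φ b - φ a ∧ φ b - φ a ≤ b - a)
    (a b : ℝ) :
    φ a * (b - a) + (φ b - φ a) ^ 2 / 2
      ≤ (∫ t in (0:ℝ)..b, φ t) - ∫ t in (0:ℝ)..a, φ t := by
  have hc := slope_cont hs
  have hΦ : ((∫ t in (0:ℝ)..b, φ t) - ∫ t in (0:ℝ)..a, φ t) = ∫ t in a..b, φ t :=
    intervalIntegral.integral_interval_sub_left (hc.intervalIntegrable 0 b)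
      (hc.intervalIntegrable 0 a)
  rw [hΦ]
  rcases le_total a b with h | h
  · exact star_le hs h
  · set φ' : ℝ → ℝ := fun x => -φ (-x) with hφ'
    have hs' : ∀ a b : ℝ, a < b → 0 ≤ φ' b - φ' a ∧ φ' b - φ' a ≤ b - a := by
      intro a b hab
      have := hs (-b) (-a) (by linarith)
      constructor <;> simp only [hφ'] <;> linarith [this.1, this.2]
    have hstar := star_le hs' (neg_le_neg h)
    have hint : (∫ t in (-a)..(-b), φ' t) = -∫ t in b..a, φ t := by
      rw [show (∫ t in (-a)..(-b), φ' t) = -∫ t in (-a)..(-b), φ (-t) from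
        intervalIntegral.integral_neg]
      congr 1
      have := intervalIntegral.integral_comp_neg (a := -a) (b := -b) φ
      simpa using this
    rw [hint] at hstar
    rw [intervalIntegral.integral_symm]
    simp only [hφ', neg_neg] at hstar
    ring_nf at hstar ⊢
    linarith [hstar]

noncomputable def GG (φ : ℝ → ℝ) (x : ℝ) : ℝ := (∫ t in (0:ℝ)..x, φ t) - φ x ^ 2 / 2

lemma zf_key {φ : ℝ → ℝ} (hs : ∀ a b : ℝ, a < b → 0 ≤ φ b - φ a ∧ φ b - φ a ≤ b - a)
    (a b : ℝ) :
    φ a * ((b - φ b) - (a - φ a)) ≤ GG φ b - GG φ a := by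
  have := star hs a b
  simp only [GG]
  nlinarith [this]

lemma GG_nonneg {φ : ℝ → ℝ} (hφ0 : φ 0 = 0)
    (hs : ∀ a b : ℝ, a < b → 0 ≤ φ b - φ a ∧ φ b - φ a ≤ b - a) (x : ℝ) :
    0 ≤ GG φ x := by
  have := zf_key hs 0 x
  rw [hφ0] at this
  simp only [GG, intervalIntegral.integral_same, hφ0] at this ⊢
  nlinarith [this]

lemma GG_le {φ : ℝ → ℝ} (hφ0 : φ 0 = 0)
    (hs : ∀ a b : ℝ, a < b → 0 ≤ φ b - φ a ∧ φ b - φ a ≤ b - a) (x : ℝ) :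
    GG φ x ≤ x ^ 2 / 2 := by
  set ψ : ℝ → ℝ := fun x => x - φ x with hψ
  have hsψ : ∀ a b : ℝ, a < b → 0 ≤ ψ b - ψ a ∧ ψ b - ψ a ≤ b - a := by
    intro a b hab
    have := hs a b hab
    constructor <;> simp only [hψ] <;> linarith [this.1, this.2]
  have h := GG_nonneg (by simp [hψ, hφ0]) hsψ x
  have hint : (∫ t in (0:ℝ)..x, ψ t) = x ^ 2 / 2 - ∫ t in (0:ℝ)..x, φ t := by
    simp only [hψ]
    rw [intervalIntegral.integral_sub (continuous_id'.intervalIntegrable 0 x) ((slope_cont hs).intervalIntegrable 0 x),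
      integral_id]
    ring
  simp only [GG, hint, hψ] at h ⊢
  nlinarith [h]

lemma shift_sum (gz : ℤ → ℝ) (h0 : ∀ l : ℤ, l < 0 → gz l = 0) (j T : ℕ) :
    ∑ k ∈ Finset.range T, gz ((k:ℤ) - (j:ℤ)) = ∑ k ∈ Finset.range (T - j), gz (k:ℤ) := by
  rcases le_or_gt T j with h | h
  · rw [Nat.sub_eq_zero_of_le h]
    simp only [Finset.range_zero, Finset.sum_empty]
    refine Finset.sum_eq_zero fun k hk => ?_
    have := Finset.mem_range.1 hk
    exact h0 _ (by omega)
  · have hj : j ≤ T := h.le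
    conv_lhs => rw [Finset.range_eq_Ico]
    rw [← Finset.sum_Ico_consecutive _ (Nat.zero_le j) hj]
    have h1 : ∑ k ∈ Finset.Ico 0 j, gz ((k:ℤ) - (j:ℤ)) = 0 :=
      Finset.sum_eq_zero fun k hk => h0 _ (by have := (Finset.mem_Ico.1 hk).2; omega)
    rw [h1, zero_add, Finset.sum_Ico_eq_sum_range]
    refine Finset.sum_congr rfl fun i _ => ?_
    congr 1
    push_cast
    ring

lemma shift_sum_le (gz : ℤ → ℝ) (h0 : ∀ l : ℤ, l < 0 → gz l = 0)
    (hnn : ∀ l : ℤ, 0 ≤ gz l) (j T : ℕ) :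
    ∑ k ∈ Finset.range T, gz ((k:ℤ) - (j:ℤ)) ≤ ∑ k ∈ Finset.range T, gz (k:ℤ) := by
  rw [shift_sum gz h0]
  exact Finset.sum_le_sum_of_subset_of_nonneg
    (Finset.range_subset_range.2 (Nat.sub_le T j)) (fun k _ _ => hnn _)

lemma icc_sum_eq (N : ℕ) (m : ℤ → ℝ) :
    ∑ i ∈ Finset.Icc (-(N:ℤ)) (N:ℤ), m i
      = ∑ j ∈ Finset.range (N+1), m (j:ℤ)
        + ∑ i ∈ Finset.range (N+1), (if i = 0 then 0 else m (-(i:ℤ))) := by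
  induction N with
  | zero => simp
  | succ n ih =>
      have hset : Finset.Icc (-((n:ℤ)+1)) ((n:ℤ)+1)
          = insert (-((n:ℤ)+1)) (insert ((n:ℤ)+1) (Finset.Icc (-(n:ℤ)) (n:ℤ))) := by
        ext x
        simp only [Finset.mem_Icc, Finset.mem_insert]
        omega
      push_cast
      rw [hset, Finset.sum_insert (by simp only [Finset.mem_insert, Finset.mem_Icc]; omega),
        Finset.sum_insert (by simp only [Finset.mem_Icc]; omega), ih,
        Finset.sum_range_succ (fun j => m (j:ℤ)) (n+1),
        Finset.sum_range_succ (fun i => if i = 0 then 0 else m (-(i:ℤ))) (n+1)]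
      rw [if_neg (Nat.succ_ne_zero n)]
      push_cast
      ring

lemma abs_mul_le_half_sq (a b : ℝ) : |a * b| ≤ (a ^ 2 + b ^ 2) / 2 := by
  rw [abs_mul]
  nlinarith [sq_nonneg (|a| - |b|), sq_abs a, sq_abs b, abs_nonneg a, abs_nonneg b]

theorem stmt4 (φ : ℝ → ℝ) (hφ0 : φ 0 = 0) (hslope : SlopeRestricted01 φ)
    (N : ℕ) (m : ℤ → ℝ)
    (hm : ∀ i : ℤ, i ≠ 0 → |i| ≤ (N : ℤ) → m i ≤ 0)
    (hsum : 0 ≤ ∑ i ∈ Finset.Icc (-(N : ℤ)) (N : ℤ), m i)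
    (v w : ℕ → ℝ) (hv2 : Summable fun k => (v k) ^ 2)
    (hw : ∀ k, w k = φ (v k)) :
    (Summable fun k => (w k) ^ 2) ∧
      ∃ L : ℝ, 0 ≤ L ∧
        Filter.Tendsto
          (fun T => ∑ k ∈ Finset.range T,
            window N v w k ⬝ᵥ (zfIQC N m).mulVec (window N v w k))
          Filter.atTop (nhds L) := by
  have hs : ∀ a b : ℝ, a < b → 0 ≤ φ b - φ a ∧ φ b - φ a ≤ b - a := hslope
  have hφsq : ∀ x : ℝ, φ x ^ 2 ≤ x ^ 2 := by
    intro x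
    rcases lt_trichotomy x 0 with h | h | h
    · have := hs x 0 h; rw [hφ0] at this; nlinarith [this.1, this.2]
    · subst h; simp [hφ0]
    · have := hs 0 x h; rw [hφ0] at this; nlinarith [this.1, this.2]
  have hψsq : ∀ x : ℝ, (x - φ x) ^ 2 ≤ x ^ 2 := by
    intro x
    rcases lt_trichotomy x 0 with h | h | h
    · have := hs x 0 h; rw [hφ0] at this; nlinarith [this.1, this.2]
    · subst h; simp [hφ0]
    · have := hs 0 x h; rw [hφ0] at this; nlinarith [this.1, this.2]
  have hsector : ∀ x : ℝ, 0 ≤ φ x * (x - φ x) := by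
    intro x
    rcases lt_trichotomy x 0 with h | h | h
    · have := hs x 0 h; rw [hφ0] at this; nlinarith [this.1, this.2]
    · subst h; simp [hφ0]
    · have := hs 0 x h; rw [hφ0] at this; nlinarith [this.1, this.2]
  have hw2 : Summable fun k => (w k) ^ 2 := by
    refine Summable.of_nonneg_of_le (fun k => sq_nonneg _) (fun k => ?_) hv2
    rw [hw k]; exact hφsq (v k)
  refine ⟨hw2, ?_⟩
  -- extZ facts
  have hvt : ∀ k : ℕ, extZ v (k : ℤ) = v k := fun k => by simp [extZ]
  have hvneg : ∀ l : ℤ, l < 0 → extZ v l = 0 := fun l hl => by simp [extZ, not_le.2 hl]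
  have hwφ : ∀ l : ℤ, extZ w l = φ (extZ v l) := by
    intro l
    by_cases h : 0 ≤ l
    · simp [extZ, h, hw]
    · simp [extZ, h, hφ0]
  -- quadratic form identity
  have hquad : ∀ k : ℕ, window N v w k ⬝ᵥ (zfIQC N m).mulVec (window N v w k)
      = 2 * ((∑ j : Fin (N+1), m ((j:ℕ):ℤ)
                * (extZ w (k:ℤ) * (extZ v ((k:ℤ) - ((j:ℕ):ℤ)) - extZ w ((k:ℤ) - ((j:ℕ):ℤ)))))
           + ∑ i : Fin (N+1), (if (i:ℕ) = 0 then 0 else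
               m (-((i:ℕ):ℤ)) * (extZ w ((k:ℤ) - ((i:ℕ):ℤ)) * (extZ v (k:ℤ) - extZ w (k:ℤ))))) := by
    intro k
    have h1 : window N v w k ⬝ᵥ (zfIQC N m).mulVec (window N v w k)
        = 2 * ∑ i : Fin (N+1), ∑ j : Fin (N+1), zfM0 N m i j
            * (extZ w ((k:ℤ) - ((i:ℕ):ℤ)) * (extZ v ((k:ℤ) - ((j:ℕ):ℤ)) - extZ w ((k:ℤ) - ((j:ℕ):ℤ)))) := by
      simp only [window, zfIQC]
      exact quad_form_eq (zfM0 N m) _ _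
    rw [h1]
    congr 1
    have hsplit : ∀ (c : Fin (N+1) → Fin (N+1) → ℝ),
        ∑ i : Fin (N+1), ∑ j : Fin (N+1), zfM0 N m i j * c i j
          = (∑ j : Fin (N+1), m ((j:ℕ):ℤ) * c 0 j)
            + ∑ i : Fin (N+1), (if (i:ℕ) = 0 then 0 else m (-((i:ℕ):ℤ)) * c i 0) := by
      intro c
      have hrow : ∀ i : Fin (N+1), ∑ j : Fin (N+1), zfM0 N m i j * c i j
          = if (i:ℕ) = 0 then ∑ j : Fin (N+1), m ((j:ℕ):ℤ) * c i j else m (-((i:ℕ):ℤ)) * c i 0 := by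
        intro i
        by_cases hi : (i:ℕ) = 0
        · have hi' : i = 0 := Fin.ext (by simpa using hi)
          simp [zfM0, hi, hi']
        · simp only [zfM0, Matrix.of_apply, hi, if_false]
          have hterm : ∀ j : Fin (N+1), (if (j:ℕ) = 0 then m (-((i:ℕ):ℤ)) else 0) * c i j
              = if j = (0 : Fin (N+1)) then m (-((i:ℕ):ℤ)) * c i j else 0 := by
            intro j
            by_cases hj : (j:ℕ) = 0
            · have hj' : j = 0 := Fin.ext (by simpa using hj)
              simp [hj, hj']
            · have hj' : ¬ j = 0 := fun h => hj (by simp [h])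
              simp [hj, hj']
          simp_rw [hterm]
          simp
      rw [Finset.sum_congr rfl fun i _ => hrow i]
      have h2 : ∀ i : Fin (N+1),
          (if (i:ℕ) = 0 then (∑ j : Fin (N+1), m ((j:ℕ):ℤ) * c i j) else m (-((i:ℕ):ℤ)) * c i 0)
          = (if i = (0 : Fin (N+1)) then (∑ j : Fin (N+1), m ((j:ℕ):ℤ) * c i j) else 0)
            + (if (i:ℕ) = 0 then 0 else m (-((i:ℕ):ℤ)) * c i 0) := by
        intro i
        by_cases hi : (i:ℕ) = 0
        · have hi' : i = 0 := Fin.ext (by simpa using hi)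
          simp [hi, hi']
        · have hi' : ¬ i = 0 := fun h => hi (by simp [h])
          simp [hi, hi']
      rw [Finset.sum_congr rfl fun i _ => h2 i, Finset.sum_add_distrib]
      congr 1
      simp
    rw [hsplit (fun i j => extZ w ((k:ℤ) - ((i:ℕ):ℤ))
      * (extZ v ((k:ℤ) - ((j:ℕ):ℤ)) - extZ w ((k:ℤ) - ((j:ℕ):ℤ))))]
    simp
  -- nonlinearity storage functions along the signal
  set gq : ℤ → ℝ := fun l => extZ w l * (extZ v l - extZ w l) with hgq
  set gG : ℤ → ℝ := fun l => GG φ (extZ v l) with hgGdef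
  have hGG0 : GG φ 0 = 0 := by simp [GG, hφ0]
  have hgq0 : ∀ l : ℤ, l < 0 → gq l = 0 := by
    intro l hl
    simp [hgq, hwφ l, hvneg l hl, hφ0]
  have hgqnn : ∀ l : ℤ, 0 ≤ gq l := by
    intro l
    simp only [hgq]
    rw [hwφ l]
    exact hsector _
  have hgG0 : ∀ l : ℤ, l < 0 → gG l = 0 := by
    intro l hl
    simp [hgGdef, hvneg l hl, hGG0]
  have hgGnn : ∀ l : ℤ, 0 ≤ gG l := fun l => GG_nonneg hφ0 hs _
  have hgGle : ∀ l : ℤ, gG l ≤ (extZ v l) ^ 2 / 2 := fun l => GG_le hφ0 hs _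
  -- key per-term inequalities
  have hkey1 : ∀ (k : ℕ) (jj : ℤ),
      extZ w (k:ℤ) * (extZ v ((k:ℤ) - jj) - extZ w ((k:ℤ) - jj))
        ≤ gq (k:ℤ) + (gG ((k:ℤ) - jj) - gG (k:ℤ)) := by
    intro k jj
    have h := zf_key hs (extZ v (k:ℤ)) (extZ v ((k:ℤ) - jj))
    simp only [hgq, hgGdef]
    rw [hwφ ((k:ℤ) - jj), hwφ (k:ℤ)]
    nlinarith [h]
  have hkey2 : ∀ (k : ℕ) (jj : ℤ),
      extZ w ((k:ℤ) - jj) * (extZ v (k:ℤ) - extZ w (k:ℤ))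
        ≤ gq ((k:ℤ) - jj) + (gG (k:ℤ) - gG ((k:ℤ) - jj)) := by
    intro k jj
    have h := zf_key hs (extZ v ((k:ℤ) - jj)) (extZ v (k:ℤ))
    simp only [hgq, hgGdef]
    rw [hwφ ((k:ℤ) - jj), hwφ (k:ℤ)]
    nlinarith [h]
  -- summability
  have hvshift : ∀ jj : ℕ, Summable (fun k : ℕ => extZ v ((k:ℤ) - (jj:ℤ)) ^ 2) := by
    intro jj
    refine (summable_nat_add_iff jj).1 (hv2.congr fun n => ?_)
    have : ((n + jj : ℕ) : ℤ) - (jj : ℤ) = (n : ℤ) := by push_cast; ring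
    rw [this, hvt]
  set B : ℕ → ℝ := fun k => ∑ j ∈ Finset.range (N+1), extZ v ((k:ℤ) - (j:ℤ)) ^ 2 with hB
  have hBsumm : Summable B := summable_sum (fun j _ => hvshift j)
  have hBnn : ∀ k, 0 ≤ B k := fun k => Finset.sum_nonneg fun j _ => sq_nonneg _
  have hBk : ∀ (k jj : ℕ), jj < N + 1 → extZ v ((k:ℤ) - (jj:ℤ)) ^ 2 ≤ B k := by
    intro k jj hjj
    simp only [hB]
    exact Finset.single_le_sum (f := fun j : ℕ => extZ v ((k:ℤ) - (j:ℤ)) ^ 2)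
      (fun j _ => sq_nonneg _) (Finset.mem_range.2 hjj)
  have hwsq : ∀ l : ℤ, (extZ w l) ^ 2 ≤ (extZ v l) ^ 2 := fun l => by
    rw [hwφ l]; exact hφsq _
  have hψsq' : ∀ l : ℤ, (extZ v l - extZ w l) ^ 2 ≤ (extZ v l) ^ 2 := fun l => by
    rw [hwφ l]; exact hψsq _
  have hterm1 : ∀ (k : ℕ) (j : Fin (N+1)),
      |extZ w (k:ℤ) * (extZ v ((k:ℤ) - ((j:ℕ):ℤ)) - extZ w ((k:ℤ) - ((j:ℕ):ℤ)))| ≤ B k := by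
    intro k j
    have h0 : extZ v ((k:ℤ) - ((0:ℕ):ℤ)) ^ 2 = extZ v (k:ℤ) ^ 2 := by norm_num
    have h1 : (extZ w (k:ℤ)) ^ 2 ≤ B k := by
      refine le_trans (hwsq _) ?_
      refine le_trans ?_ (hBk k 0 (Nat.succ_pos N))
      rw [h0]
    have h2 : (extZ v ((k:ℤ) - ((j:ℕ):ℤ)) - extZ w ((k:ℤ) - ((j:ℕ):ℤ))) ^ 2 ≤ B k :=
      le_trans (hψsq' _) (hBk k (j:ℕ) j.isLt)
    calc |extZ w (k:ℤ) * (extZ v ((k:ℤ) - ((j:ℕ):ℤ)) - extZ w ((k:ℤ) - ((j:ℕ):ℤ)))|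
        ≤ ((extZ w (k:ℤ)) ^ 2 + (extZ v ((k:ℤ) - ((j:ℕ):ℤ)) - extZ w ((k:ℤ) - ((j:ℕ):ℤ))) ^ 2) / 2 :=
          abs_mul_le_half_sq _ _
      _ ≤ B k := by linarith
  have hterm2 : ∀ (k : ℕ) (i : Fin (N+1)),
      |extZ w ((k:ℤ) - ((i:ℕ):ℤ)) * (extZ v (k:ℤ) - extZ w (k:ℤ))| ≤ B k := by
    intro k i
    have h0 : extZ v ((k:ℤ) - ((0:ℕ):ℤ)) ^ 2 = extZ v (k:ℤ) ^ 2 := by norm_num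
    have h1 : (extZ w ((k:ℤ) - ((i:ℕ):ℤ))) ^ 2 ≤ B k :=
      le_trans (hwsq _) (hBk k (i:ℕ) i.isLt)
    have h2 : (extZ v (k:ℤ) - extZ w (k:ℤ)) ^ 2 ≤ B k := by
      refine le_trans (hψsq' _) ?_
      refine le_trans ?_ (hBk k 0 (Nat.succ_pos N))
      rw [h0]
    calc |extZ w ((k:ℤ) - ((i:ℕ):ℤ)) * (extZ v (k:ℤ) - extZ w (k:ℤ))|
        ≤ ((extZ w ((k:ℤ) - ((i:ℕ):ℤ))) ^ 2 + (extZ v (k:ℤ) - extZ w (k:ℤ)) ^ 2) / 2 :=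
          abs_mul_le_half_sq _ _
      _ ≤ B k := by linarith
  set C : ℝ := 2 * ((∑ j : Fin (N+1), |m ((j:ℕ):ℤ)|) + ∑ i : Fin (N+1), |m (-((i:ℕ):ℤ))|) with hC
  have hFbound : ∀ k : ℕ,
      |window N v w k ⬝ᵥ (zfIQC N m).mulVec (window N v w k)| ≤ C * B k := by
    intro k
    rw [hquad k]
    have hb1 : |∑ j : Fin (N+1), m ((j:ℕ):ℤ)
        * (extZ w (k:ℤ) * (extZ v ((k:ℤ) - ((j:ℕ):ℤ)) - extZ w ((k:ℤ) - ((j:ℕ):ℤ))))|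
        ≤ (∑ j : Fin (N+1), |m ((j:ℕ):ℤ)|) * B k := by
      refine le_trans (Finset.abs_sum_le_sum_abs _ _) ?_
      rw [Finset.sum_mul]
      refine Finset.sum_le_sum fun j _ => ?_
      rw [abs_mul]
      exact mul_le_mul_of_nonneg_left (hterm1 k j) (abs_nonneg _)
    have hb2 : |∑ i : Fin (N+1), (if (i:ℕ) = 0 then 0 else
        m (-((i:ℕ):ℤ)) * (extZ w ((k:ℤ) - ((i:ℕ):ℤ)) * (extZ v (k:ℤ) - extZ w (k:ℤ))))|
        ≤ (∑ i : Fin (N+1), |m (-((i:ℕ):ℤ))|) * B k := by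
      refine le_trans (Finset.abs_sum_le_sum_abs _ _) ?_
      rw [Finset.sum_mul]
      refine Finset.sum_le_sum fun i _ => ?_
      by_cases hi : (i:ℕ) = 0
      · simp only [hi, if_true, abs_zero]
        exact mul_nonneg (abs_nonneg _) (hBnn k)
      · simp only [hi, if_false]
        rw [abs_mul]
        exact mul_le_mul_of_nonneg_left (hterm2 k i) (abs_nonneg _)
    rw [abs_mul]
    have : |(2:ℝ)| = 2 := by norm_num
    rw [this, hC]
    calc 2 * |_ + _| ≤ 2 * (|_| + |_|) := by
          exact mul_le_mul_of_nonneg_left (abs_add_le _ _) (by norm_num)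
      _ ≤ 2 * ((∑ j : Fin (N+1), |m ((j:ℕ):ℤ)|) * B k
            + (∑ i : Fin (N+1), |m (-((i:ℕ):ℤ))|) * B k) := by
          refine mul_le_mul_of_nonneg_left (add_le_add hb1 hb2) (by norm_num)
      _ = 2 * ((∑ j : Fin (N+1), |m ((j:ℕ):ℤ)|) + ∑ i : Fin (N+1), |m (-((i:ℕ):ℤ))|) * B k := by
          ring
  have hFsumm : Summable (fun k : ℕ => window N v w k ⬝ᵥ (zfIQC N m).mulVec (window N v w k)) := by
    refine Summable.of_abs ?_
    exact Summable.of_nonneg_of_le (fun k => abs_nonneg _) hFbound (hBsumm.mul_left C)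
  -- partial-sum lower bound
  have hlow : ∀ T : ℕ,
      2 * ∑ i : Fin (N+1), (if (i:ℕ) = 0 then 0 else m (-((i:ℕ):ℤ))
          * ((∑ k ∈ Finset.range T, gG (k:ℤ)) - ∑ k ∈ Finset.range T, gG ((k:ℤ) - ((i:ℕ):ℤ))))
        ≤ ∑ k ∈ Finset.range T, window N v w k ⬝ᵥ (zfIQC N m).mulVec (window N v w k) := by
    intro T
    rw [Finset.sum_congr rfl fun k _ => hquad k, ← Finset.mul_sum, Finset.sum_add_distrib]
    have hswap1 : ∑ k ∈ Finset.range T, ∑ j : Fin (N+1), m ((j:ℕ):ℤ)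
          * (extZ w (k:ℤ) * (extZ v ((k:ℤ) - ((j:ℕ):ℤ)) - extZ w ((k:ℤ) - ((j:ℕ):ℤ))))
        = ∑ j : Fin (N+1), m ((j:ℕ):ℤ) * ∑ k ∈ Finset.range T,
            extZ w (k:ℤ) * (extZ v ((k:ℤ) - ((j:ℕ):ℤ)) - extZ w ((k:ℤ) - ((j:ℕ):ℤ))) := by
      rw [Finset.sum_comm]
      exact Finset.sum_congr rfl fun j _ => (Finset.mul_sum _ _ _).symm
    have hswap2 : ∑ k ∈ Finset.range T, ∑ i : Fin (N+1), (if (i:ℕ) = 0 then 0 else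
          m (-((i:ℕ):ℤ)) * (extZ w ((k:ℤ) - ((i:ℕ):ℤ)) * (extZ v (k:ℤ) - extZ w (k:ℤ))))
        = ∑ i : Fin (N+1), (if (i:ℕ) = 0 then 0 else m (-((i:ℕ):ℤ)) * ∑ k ∈ Finset.range T,
            extZ w ((k:ℤ) - ((i:ℕ):ℤ)) * (extZ v (k:ℤ) - extZ w (k:ℤ))) := by
      rw [Finset.sum_comm]
      refine Finset.sum_congr rfl fun i _ => ?_
      by_cases hi : (i:ℕ) = 0
      · simp [hi]
      · simp only [hi, if_false, Finset.mul_sum]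
    rw [hswap1, hswap2]
    set QT : ℝ := ∑ k ∈ Finset.range T, gq (k:ℤ) with hQT
    have hQTnn : 0 ≤ QT := Finset.sum_nonneg fun k _ => hgqnn _
    have hAle : ∀ j : Fin (N+1), m ((j:ℕ):ℤ) * QT ≤ m ((j:ℕ):ℤ) * ∑ k ∈ Finset.range T,
        extZ w (k:ℤ) * (extZ v ((k:ℤ) - ((j:ℕ):ℤ)) - extZ w ((k:ℤ) - ((j:ℕ):ℤ))) := by
      intro j
      by_cases hj : (j:ℕ) = 0
      · refine le_of_eq ?_
        congr 1
        rw [hQT]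
        refine Finset.sum_congr rfl fun k _ => ?_
        simp [hgq, hj]
      · have hmj : m ((j:ℕ):ℤ) ≤ 0 := by
          refine hm _ (Int.natCast_ne_zero.2 hj) ?_
          rw [abs_of_nonneg (Int.natCast_nonneg _)]
          exact_mod_cast Nat.lt_succ_iff.1 j.isLt
        have hAQ : ∑ k ∈ Finset.range T,
            extZ w (k:ℤ) * (extZ v ((k:ℤ) - ((j:ℕ):ℤ)) - extZ w ((k:ℤ) - ((j:ℕ):ℤ))) ≤ QT := by
          calc ∑ k ∈ Finset.range T,
              extZ w (k:ℤ) * (extZ v ((k:ℤ) - ((j:ℕ):ℤ)) - extZ w ((k:ℤ) - ((j:ℕ):ℤ)))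
              ≤ ∑ k ∈ Finset.range T, (gq (k:ℤ) + (gG ((k:ℤ) - ((j:ℕ):ℤ)) - gG (k:ℤ))) :=
                Finset.sum_le_sum fun k _ => hkey1 k _
            _ = QT + ((∑ k ∈ Finset.range T, gG ((k:ℤ) - ((j:ℕ):ℤ)))
                  - ∑ k ∈ Finset.range T, gG (k:ℤ)) := by
                rw [Finset.sum_add_distrib, Finset.sum_sub_distrib, hQT]
            _ ≤ QT := by linarith [shift_sum_le gG hgG0 hgGnn (j:ℕ) T]
        nlinarith [hAQ, hmj]
    have hBle : ∀ i : Fin (N+1),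
        (if (i:ℕ) = 0 then 0 else m (-((i:ℕ):ℤ))) * QT
          + (if (i:ℕ) = 0 then 0 else m (-((i:ℕ):ℤ))
              * ((∑ k ∈ Finset.range T, gG (k:ℤ)) - ∑ k ∈ Finset.range T, gG ((k:ℤ) - ((i:ℕ):ℤ))))
        ≤ (if (i:ℕ) = 0 then 0 else m (-((i:ℕ):ℤ)) * ∑ k ∈ Finset.range T,
            extZ w ((k:ℤ) - ((i:ℕ):ℤ)) * (extZ v (k:ℤ) - extZ w (k:ℤ))) := by
      intro i
      by_cases hi : (i:ℕ) = 0
      · simp [hi]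
      · simp only [hi, if_false]
        have hmi : m (-((i:ℕ):ℤ)) ≤ 0 := by
          refine hm _ (by simpa using Int.natCast_ne_zero.2 hi) ?_
          rw [abs_neg, abs_of_nonneg (Int.natCast_nonneg _)]
          exact_mod_cast Nat.lt_succ_iff.1 i.isLt
        have hBQ : ∑ k ∈ Finset.range T,
            extZ w ((k:ℤ) - ((i:ℕ):ℤ)) * (extZ v (k:ℤ) - extZ w (k:ℤ))
            ≤ QT + ((∑ k ∈ Finset.range T, gG (k:ℤ))
                - ∑ k ∈ Finset.range T, gG ((k:ℤ) - ((i:ℕ):ℤ))) := by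
          calc ∑ k ∈ Finset.range T,
              extZ w ((k:ℤ) - ((i:ℕ):ℤ)) * (extZ v (k:ℤ) - extZ w (k:ℤ))
              ≤ ∑ k ∈ Finset.range T, (gq ((k:ℤ) - ((i:ℕ):ℤ))
                  + (gG (k:ℤ) - gG ((k:ℤ) - ((i:ℕ):ℤ)))) :=
                Finset.sum_le_sum fun k _ => hkey2 k _
            _ = (∑ k ∈ Finset.range T, gq ((k:ℤ) - ((i:ℕ):ℤ)))
                  + ((∑ k ∈ Finset.range T, gG (k:ℤ))
                    - ∑ k ∈ Finset.range T, gG ((k:ℤ) - ((i:ℕ):ℤ))) := by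
                rw [Finset.sum_add_distrib, Finset.sum_sub_distrib]
            _ ≤ QT + ((∑ k ∈ Finset.range T, gG (k:ℤ))
                  - ∑ k ∈ Finset.range T, gG ((k:ℤ) - ((i:ℕ):ℤ))) := by
                have := shift_sum_le gq hgq0 hgqnn (i:ℕ) T
                rw [hQT]
                linarith [this]
        nlinarith [hBQ, hmi]
    have hmsum : (∑ j : Fin (N+1), m ((j:ℕ):ℤ))
        + ∑ i : Fin (N+1), (if (i:ℕ) = 0 then 0 else m (-((i:ℕ):ℤ)))
        = ∑ i ∈ Finset.Icc (-(N:ℤ)) (N:ℤ), m i := by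
      rw [icc_sum_eq]
      congr 1
      · exact Fin.sum_univ_eq_sum_range (fun jj => m (jj:ℤ)) (N+1)
      · exact Fin.sum_univ_eq_sum_range (fun ii => if ii = 0 then 0 else m (-(ii:ℤ))) (N+1)
    have hA_total : (∑ j : Fin (N+1), m ((j:ℕ):ℤ)) * QT
        ≤ ∑ j : Fin (N+1), m ((j:ℕ):ℤ) * ∑ k ∈ Finset.range T,
            extZ w (k:ℤ) * (extZ v ((k:ℤ) - ((j:ℕ):ℤ)) - extZ w ((k:ℤ) - ((j:ℕ):ℤ))) := by
      rw [Finset.sum_mul]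
      exact Finset.sum_le_sum fun j _ => hAle j
    have hB_total : (∑ i : Fin (N+1), (if (i:ℕ) = 0 then 0 else m (-((i:ℕ):ℤ)))) * QT
        + (∑ i : Fin (N+1), (if (i:ℕ) = 0 then 0 else m (-((i:ℕ):ℤ))
            * ((∑ k ∈ Finset.range T, gG (k:ℤ)) - ∑ k ∈ Finset.range T, gG ((k:ℤ) - ((i:ℕ):ℤ)))))
        ≤ ∑ i : Fin (N+1), (if (i:ℕ) = 0 then 0 else m (-((i:ℕ):ℤ)) * ∑ k ∈ Finset.range T,
            extZ w ((k:ℤ) - ((i:ℕ):ℤ)) * (extZ v (k:ℤ) - extZ w (k:ℤ))) := by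
      rw [Finset.sum_mul, ← Finset.sum_add_distrib]
      exact Finset.sum_le_sum fun i _ => hBle i
    have hIccQT : 0 ≤ (∑ i ∈ Finset.Icc (-(N:ℤ)) (N:ℤ), m i) * QT := mul_nonneg hsum hQTnn
    nlinarith [hA_total, hB_total, hIccQT, hmsum]
  -- the error terms tend to zero
  have hgGsumm : Summable (fun k : ℕ => gG (k:ℤ)) := by
    refine Summable.of_nonneg_of_le (fun k => hgGnn _) (fun k => ?_) (hv2.div_const 2)
    refine le_trans (hgGle _) (le_of_eq ?_)
    rw [hvt]
  have hSGt : Filter.Tendsto (fun T => ∑ k ∈ Finset.range T, gG (k:ℤ))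
      Filter.atTop (nhds (∑' k : ℕ, gG (k:ℤ))) := hgGsumm.hasSum.tendsto_sum_nat
  have hSht : ∀ jj : ℕ, Filter.Tendsto (fun T => ∑ k ∈ Finset.range T, gG ((k:ℤ) - (jj:ℤ)))
      Filter.atTop (nhds (∑' k : ℕ, gG (k:ℤ))) := by
    intro jj
    have he : (fun T => ∑ k ∈ Finset.range T, gG ((k:ℤ) - (jj:ℤ)))
        = fun T => ∑ k ∈ Finset.range (T - jj), gG (k:ℤ) := funext fun T => shift_sum gG hgG0 jj T
    rw [he]
    exact hSGt.comp (Filter.tendsto_sub_atTop_nat jj)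
  have hct : Filter.Tendsto (fun T => 2 * ∑ i : Fin (N+1), (if (i:ℕ) = 0 then 0 else
      m (-((i:ℕ):ℤ)) * ((∑ k ∈ Finset.range T, gG (k:ℤ))
        - ∑ k ∈ Finset.range T, gG ((k:ℤ) - ((i:ℕ):ℤ))))) Filter.atTop (nhds 0) := by
    have hbig : Filter.Tendsto (fun T => ∑ i : Fin (N+1), (if (i:ℕ) = 0 then 0 else
        m (-((i:ℕ):ℤ)) * ((∑ k ∈ Finset.range T, gG (k:ℤ))
          - ∑ k ∈ Finset.range T, gG ((k:ℤ) - ((i:ℕ):ℤ)))))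
        Filter.atTop (nhds (∑ _i : Fin (N+1), (0:ℝ))) := by
      refine tendsto_finset_sum _ fun i _ => ?_
      by_cases hi : (i:ℕ) = 0
      · simp only [hi, if_true]
        exact tendsto_const_nhds
      · simp only [hi, if_false]
        have := (hSGt.sub (hSht (i:ℕ))).const_mul (m (-((i:ℕ):ℤ)))
        simpa using this
    have := hbig.const_mul (2:ℝ)
    simpa using this
  refine ⟨∑' k : ℕ, window N v w k ⬝ᵥ (zfIQC N m).mulVec (window N v w k), ?_,
    hFsumm.hasSum.tendsto_sum_nat⟩
  exact le_of_tendsto_of_tendsto' hct hFsumm.hasSum.tendsto_sum_nat hlow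
end

section
/- Let n_x ∈ ℕ, A ∈ ℝ^{n_x×n_x}, B ∈ ℝ^{n_x}, C ∈ ℝ^{1×n_x}, D ∈ ℝ. Let N ≥ 1, let φ : ℝ → ℝ satisfy φ(0) = 0 and be slope-restricted to [0,1], and let m₋N, …, m_N ∈ ℝ satisfy m_i ≤ 0 for i ≠ 0 and ∑_{i=−N}^{N} m_i ≥ 0, with M ∈ ℝ^{(2N+2)×(2N+2)} the associated Zames–Falb IQC matrix. Suppose there exists a symmetric positive semidefinite P ∈ ℝ^{(n_x+2N)×(n_x+2N)} such that for every ξ = (ξ_x, ξ_v, ξ_w) ∈ ℝ^{n_x} × ℝ^{N} × ℝ^{N} and ω ∈ ℝ with (ξ, ω) ≠ 0, defining ξ⁺ := (A ξ_x + B ω, (C ξ_x + D ω, ξ_{v,1}, …, ξ_{v,N−1}), (ω, ξ_{w,1}, …, ξ_{w,N−1})) ∈ ℝ^{n_x+2N} and ρ := (C ξ_x + D ω, ξ_{v,1}, …, ξ_{v,N}, ω, ξ_{w,1}, …, ξ_{w,N}) ∈ ℝ^{2N+2}, one has (ξ⁺)ᵀ P ξ⁺ − ξᵀ P ξ + ρᵀ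 M ρ < 0. Then for all sequences x : ℕ → ℝ^{n_x} and v, w : ℕ → ℝ satisfying x(k+1) = A x(k) + B w(k), v(k) = C x(k) + D w(k), and w(k) = φ(v(k)) for all k ∈ ℕ, it holds that x(k) → 0 as k → ∞. -/
open Matrix

/-- Shift register update: push the value `a` in front and drop the last entry. -/
def shiftIn {N : ℕ} (a : ℝ) (ξ : Fin N → ℝ) : Fin N → ℝ :=
  fun i => if h : (i : ℕ) = 0 then a
    else ξ ⟨(i : ℕ) - 1, by have := i.isLt; omega⟩

/-- Prepend a value to a vector of length `N`, giving a vector of length `N+1`. -/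
def headAppend {N : ℕ} (a : ℝ) (ξ : Fin N → ℝ) : Fin (N + 1) → ℝ :=
  fun i => if h : (i : ℕ) = 0 then a
    else ξ ⟨(i : ℕ) - 1, by have := i.isLt; omega⟩

/-- Stack `(ξ_x, ξ_v, ξ_w)` into a single vector in `ℝ^{n_x + 2N}`. -/
def stk {nx N : ℕ} (ξx : Fin nx → ℝ) (ξv ξw : Fin N → ℝ) :
    Fin nx ⊕ (Fin N ⊕ Fin N) → ℝ :=
  Sum.elim ξx (Sum.elim ξv ξw)


section ZFaux
open Finset

private lemma mul_nonneg_nn {a b : ℝ} (ha : a ≤ 0) (hb : b ≤ 0) : 0 ≤ a * b := by nlinarith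

private lemma zf_step (A : Finset ℕ) (H : ℕ → ℕ → ℝ)
    (hoff : ∀ s ∈ A, ∀ t ∈ A, s ≠ t → H s t ≤ 0)
    (hrow : ∀ s ∈ A, 0 ≤ ∑ t ∈ A, H s t)
    (hcol : ∀ t ∈ A, 0 ≤ ∑ s ∈ A, H s t)
    (n : ℕ)
    (ih : ∀ (φ ψ : ℝ → ℝ) (V : ℕ → ℝ), Monotone φ → Monotone ψ → φ 0 = 0 → ψ 0 = 0 →
      ((A.image V).filter (· ≠ 0)).card ≤ n →
      0 ≤ ∑ s ∈ A, ∑ t ∈ A, H s t * φ (V s) * ψ (V t))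
    (φ ψ : ℝ → ℝ) (V : ℕ → ℝ)
    (hφm : Monotone φ) (hψm : Monotone ψ) (hφ0 : φ 0 = 0) (hψ0 : ψ 0 = 0)
    (hcard : ((A.image V).filter (· ≠ 0)).card ≤ n + 1)
    (hpos : ∃ s ∈ A, 0 < V s) :
    0 ≤ ∑ s ∈ A, ∑ t ∈ A, H s t * φ (V s) * ψ (V t) := by
  classical
  obtain ⟨s₀, hs₀A, hs₀⟩ := hpos
  have hAne : (A.image V).Nonempty := ⟨V s₀, mem_image_of_mem V hs₀A⟩
  set u := (A.image V).max' hAne with hu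
  have huI : u ∈ A.image V := (A.image V).max'_mem hAne
  have hub : ∀ s ∈ A, V s ≤ u := fun s hs => Finset.le_max' _ _ (mem_image_of_mem V hs)
  have hupos : 0 < u := lt_of_lt_of_le hs₀ (hub s₀ hs₀A)
  have hTne : (insert (0:ℝ) ((A.image V).erase u)).Nonempty := ⟨0, Finset.mem_insert_self _ _⟩
  set u' := (insert (0:ℝ) ((A.image V).erase u)).max' hTne with hu'
  have hu'mem : u' ∈ insert (0:ℝ) ((A.image V).erase u) := Finset.max'_mem _ hTne
  have hu'0 : 0 ≤ u' := Finset.le_max' _ _ (Finset.mem_insert_self _ _)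
  have hu'lt : u' < u := by
    apply (Finset.max'_lt_iff _ hTne).2
    intro x hx
    rcases Finset.mem_insert.1 hx with h | h
    · exact h ▸ hupos
    · exact lt_of_le_of_ne (Finset.le_max' _ _ (Finset.mem_of_mem_erase h))
        (Finset.ne_of_mem_erase h)
  have hle : ∀ s ∈ A, V s ≠ u → V s ≤ u' := fun s hs hne =>
    Finset.le_max' _ _ (Finset.mem_insert_of_mem (Finset.mem_erase.2 ⟨hne, mem_image_of_mem V hs⟩))
  set V' := fun s => if V s = u then u' else V s with hV'
  have hV'le : ∀ s ∈ A, V' s ≤ u' := by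
    intro s hs
    by_cases h : V s = u
    · simp [hV', h]
    · simp only [hV', h, if_false]; exact hle s hs h
  set F' := fun s => φ (V' s) with hF'
  set G' := fun t => ψ (V' t) with hG'
  set δ := φ u - φ u' with hδdef
  set γ := ψ u - ψ u' with hγdef
  have hδ : 0 ≤ δ := sub_nonneg.2 (hφm hu'lt.le)
  have hγ : 0 ≤ γ := sub_nonneg.2 (hψm hu'lt.le)
  set χ : ℕ → ℝ := fun s => if V s = u then 1 else 0 with hχ
  have hφV : ∀ s, φ (V s) = F' s + δ * χ s := by
    intro s; by_cases h : V s = u <;> simp [hF', hV', hχ, h] <;> ring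
  have hψV : ∀ t, ψ (V t) = G' t + γ * χ t := by
    intro t; by_cases h : V t = u <;> simp [hG', hV', hχ, h] <;> ring
  -- cardinality decrease
  have hcard' : ((A.image V').filter (· ≠ 0)).card ≤ n := by
    have hsub : (A.image V').filter (· ≠ 0) ⊆ ((A.image V).filter (· ≠ 0)).erase u := by
      intro y hy
      obtain ⟨hyim, hy0⟩ := Finset.mem_filter.1 hy
      obtain ⟨s, hsA, hsy⟩ := Finset.mem_image.1 hyim
      by_cases h : V s = u
      · have hyu' : y = u' := by rw [← hsy]; simp [hV', h]
        have hy0' : u' ≠ 0 := by rw [← hyu']; exact hy0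
        have : u' ∈ (A.image V).erase u := by
          rcases Finset.mem_insert.1 hu'mem with h0 | h1
          · exact absurd h0 hy0'
          · exact h1
        refine Finset.mem_erase.2 ⟨hyu' ▸ (Finset.ne_of_mem_erase this), ?_⟩
        exact Finset.mem_filter.2 ⟨hyu' ▸ Finset.mem_of_mem_erase this, hy0⟩
      · have hyV : y = V s := by rw [← hsy]; simp [hV', h]
        refine Finset.mem_erase.2 ⟨hyV ▸ h, Finset.mem_filter.2 ⟨hyV ▸ mem_image_of_mem V hsA, hy0⟩⟩
    have humem : u ∈ (A.image V).filter (· ≠ 0) := Finset.mem_filter.2 ⟨huI, ne_of_gt hupos⟩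
    have h1 := Finset.card_le_card hsub
    rw [Finset.card_erase_of_mem humem] at h1
    have h2 : 1 ≤ ((A.image V).filter (· ≠ 0)).card := Finset.card_pos.2 ⟨u, humem⟩
    omega
  -- expansion
  have expand : ∑ s ∈ A, ∑ t ∈ A, H s t * φ (V s) * ψ (V t)
      = (∑ s ∈ A, ∑ t ∈ A, H s t * F' s * G' t)
      + δ * (∑ s ∈ A, χ s * (∑ t ∈ A, H s t * G' t))
      + γ * (∑ t ∈ A, χ t * (∑ s ∈ A, H s t * F' s))
      + δ * γ * (∑ s ∈ A, χ s * (∑ t ∈ A, χ t * H s t)) := by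
    have e1 : ∑ s ∈ A, ∑ t ∈ A, H s t * φ (V s) * ψ (V t)
        = ∑ s ∈ A, ∑ t ∈ A, (H s t * F' s * G' t + δ * (χ s * (H s t * G' t))
            + γ * (χ t * (H s t * F' s)) + δ * γ * (χ s * (χ t * H s t))) := by
      refine Finset.sum_congr rfl fun s _ => Finset.sum_congr rfl fun t _ => ?_
      rw [hφV s, hψV t]; ring
    have e2 : ∑ s ∈ A, ∑ t ∈ A, γ * (χ t * (H s t * F' s))
        = γ * (∑ t ∈ A, χ t * (∑ s ∈ A, H s t * F' s)) := by
      rw [Finset.sum_comm]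
      simp only [Finset.mul_sum]
    have e3 : ∑ s ∈ A, ∑ t ∈ A, δ * (χ s * (H s t * G' t))
        = δ * (∑ s ∈ A, χ s * (∑ t ∈ A, H s t * G' t)) := by
      simp only [Finset.mul_sum]
    have e4 : ∑ s ∈ A, ∑ t ∈ A, δ * γ * (χ s * (χ t * H s t))
        = δ * γ * (∑ s ∈ A, χ s * (∑ t ∈ A, χ t * H s t)) := by
      simp only [Finset.mul_sum]
    rw [e1]
    simp only [Finset.sum_add_distrib]
    rw [e2, e3, e4]
  rw [expand]
  have hA' : 0 ≤ ∑ s ∈ A, ∑ t ∈ A, H s t * F' s * G' t :=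
    ih φ ψ V' hφm hψm hφ0 hψ0 hcard'
  have hB : 0 ≤ ∑ s ∈ A, χ s * (∑ t ∈ A, H s t * G' t) := by
    refine Finset.sum_nonneg fun s hs => ?_
    by_cases h : V s = u
    · have h1 : ∑ t ∈ A, H s t * G' t
          = (∑ t ∈ A, H s t * (G' t - ψ u')) + ψ u' * ∑ t ∈ A, H s t := by
        rw [Finset.mul_sum, ← Finset.sum_add_distrib]
        exact Finset.sum_congr rfl fun t _ => by ring
      have h2 : 0 ≤ ∑ t ∈ A, H s t * (G' t - ψ u') := by
        refine Finset.sum_nonneg fun t ht => ?_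
        by_cases hts : t = s
        · have : G' t = ψ u' := by rw [hts]; simp [hG', hV', h]
          rw [this]; simp
        · exact mul_nonneg_nn (hoff s hs t ht (Ne.symm hts))
            (sub_nonpos.2 (hψm (hV'le t ht)))
      have h3 : 0 ≤ ψ u' := hψ0 ▸ hψm hu'0
      have : 0 ≤ ∑ t ∈ A, H s t * G' t := by
        rw [h1]; exact add_nonneg h2 (mul_nonneg h3 (hrow s hs))
      simpa [hχ, h] using this
    · simp [hχ, h]
  have hC : 0 ≤ ∑ t ∈ A, χ t * (∑ s ∈ A, H s t * F' s) := by
    refine Finset.sum_nonneg fun t ht => ?_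
    by_cases h : V t = u
    · have h1 : ∑ s ∈ A, H s t * F' s
          = (∑ s ∈ A, H s t * (F' s - φ u')) + φ u' * ∑ s ∈ A, H s t := by
        rw [Finset.mul_sum, ← Finset.sum_add_distrib]
        exact Finset.sum_congr rfl fun s _ => by ring
      have h2 : 0 ≤ ∑ s ∈ A, H s t * (F' s - φ u') := by
        refine Finset.sum_nonneg fun s hs => ?_
        by_cases hst : s = t
        · have : F' s = φ u' := by rw [hst]; simp [hF', hV', h]
          rw [this]; simp
        · exact mul_nonneg_nn (hoff s hs t ht hst)
            (sub_nonpos.2 (hφm (hV'le s hs)))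
      have h3 : 0 ≤ φ u' := hφ0 ▸ hφm hu'0
      have : 0 ≤ ∑ s ∈ A, H s t * F' s := by
        rw [h1]; exact add_nonneg h2 (mul_nonneg h3 (hcol t ht))
      simpa [hχ, h] using this
    · simp [hχ, h]
  have hD : 0 ≤ ∑ s ∈ A, χ s * (∑ t ∈ A, χ t * H s t) := by
    refine Finset.sum_nonneg fun s hs => ?_
    by_cases h : V s = u
    · have h1 : ∑ t ∈ A, H s t ≤ ∑ t ∈ A, χ t * H s t := by
        refine Finset.sum_le_sum fun t ht => ?_
        by_cases h2 : V t = u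
        · simp [hχ, h2]
        · have : t ≠ s := fun he => h2 (he ▸ h)
          have := hoff s hs t ht (Ne.symm this)
          simp only [hχ, h2, if_false, zero_mul]
          linarith
      have : 0 ≤ ∑ t ∈ A, χ t * H s t := le_trans (hrow s hs) h1
      simpa [hχ, h] using this
    · simp [hχ, h]
  have := add_nonneg (add_nonneg (add_nonneg hA' (mul_nonneg hδ hB)) (mul_nonneg hγ hC))
    (mul_nonneg (mul_nonneg hδ hγ) hD)
  linarith

private lemma zf_core (A : Finset ℕ) (H : ℕ → ℕ → ℝ)
    (hoff : ∀ s ∈ A, ∀ t ∈ A, s ≠ t → H s t ≤ 0)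
    (hrow : ∀ s ∈ A, 0 ≤ ∑ t ∈ A, H s t)
    (hcol : ∀ t ∈ A, 0 ≤ ∑ s ∈ A, H s t) :
    ∀ (n : ℕ) (φ ψ : ℝ → ℝ) (V : ℕ → ℝ), Monotone φ → Monotone ψ → φ 0 = 0 → ψ 0 = 0 →
      ((A.image V).filter (· ≠ 0)).card ≤ n →
      0 ≤ ∑ s ∈ A, ∑ t ∈ A, H s t * φ (V s) * ψ (V t) := by
  classical
  intro n
  induction n with
  | zero =>
    intro φ ψ V hφm hψm hφ0 hψ0 hcard
    have hall : ∀ s ∈ A, V s = 0 := by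
      intro s hs
      by_contra h
      have : V s ∈ (A.image V).filter (· ≠ 0) :=
        Finset.mem_filter.2 ⟨mem_image_of_mem V hs, h⟩
      have := Finset.card_pos.2 ⟨V s, this⟩
      omega
    refine le_of_eq (Finset.sum_eq_zero fun s hs => Finset.sum_eq_zero fun t ht => ?_).symm
    rw [hall s hs, hall t ht, hφ0]; ring
  | succ n ihn =>
    intro φ ψ V hφm hψm hφ0 hψ0 hcard
    by_cases hpos : ∃ s ∈ A, 0 < V s
    · exact zf_step A H hoff hrow hcol n ihn φ ψ V hφm hψm hφ0 hψ0 hcard hpos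
    · by_cases hneg : ∃ s ∈ A, V s < 0
      · -- apply the step to the negated data
        set φ' : ℝ → ℝ := fun x => -φ (-x) with hφ'
        set ψ' : ℝ → ℝ := fun x => -ψ (-x) with hψ'
        set W : ℕ → ℝ := fun s => -V s with hW
        have hφ'm : Monotone φ' := fun a b hab => by
          simp only [hφ', neg_le_neg_iff]; exact hφm (neg_le_neg hab)
        have hψ'm : Monotone ψ' := fun a b hab => by
          simp only [hψ', neg_le_neg_iff]; exact hψm (neg_le_neg hab)
        have hφ'0 : φ' 0 = 0 := by simp [hφ', hφ0]
        have hψ'0 : ψ' 0 = 0 := by simp [hψ', hψ0]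
        have hcardW : ((A.image W).filter (· ≠ 0)).card ≤ n + 1 := by
          have h1 : A.image W = (A.image V).image (fun x => -x) := by
            rw [Finset.image_image]; rfl
          have h2 : ((A.image V).image (fun x => -x)).filter (· ≠ 0)
              = ((A.image V).filter (· ≠ 0)).image (fun x => -x) := by
            ext x
            simp only [Finset.mem_filter, Finset.mem_image]
            constructor
            · rintro ⟨⟨y, hy, rfl⟩, h0⟩
              exact ⟨y, ⟨hy, fun h => h0 (by simp [h])⟩, rfl⟩
            · rintro ⟨y, ⟨hy, h0⟩, rfl⟩
              exact ⟨⟨y, hy, rfl⟩, by simpa⟩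
          rw [h1, h2, Finset.card_image_of_injective _ neg_injective]
          exact hcard
        have hposW : ∃ s ∈ A, 0 < W s := by
          obtain ⟨s, hs, h⟩ := hneg
          exact ⟨s, hs, by simp [hW]; linarith⟩
        have ihn' : ∀ (φ ψ : ℝ → ℝ) (V : ℕ → ℝ), Monotone φ → Monotone ψ → φ 0 = 0 → ψ 0 = 0 →
            ((A.image V).filter (· ≠ 0)).card ≤ n →
            0 ≤ ∑ s ∈ A, ∑ t ∈ A, H s t * φ (V s) * ψ (V t) := ihn
        have := zf_step A H hoff hrow hcol n ihn' φ' ψ' W hφ'm hψ'm hφ'0 hψ'0 hcardW hposW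
        have heq : ∑ s ∈ A, ∑ t ∈ A, H s t * φ' (W s) * ψ' (W t)
            = ∑ s ∈ A, ∑ t ∈ A, H s t * φ (V s) * ψ (V t) := by
          refine Finset.sum_congr rfl fun s _ => Finset.sum_congr rfl fun t _ => ?_
          simp only [hφ', hψ', hW, neg_neg]; ring
        linarith [heq ▸ this]
      · push_neg at hpos hneg
        have hall : ∀ s ∈ A, V s = 0 := fun s hs => le_antisymm (hpos s hs) (hneg s hs)
        refine le_of_eq (Finset.sum_eq_zero fun s hs => Finset.sum_eq_zero fun t ht => ?_).symm
        rw [hall s hs, hall t ht, hφ0]; ring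

end ZFaux


private lemma coercive {E : Type*} [NormedAddCommGroup E] [NormedSpace ℝ E]
    [FiniteDimensional ℝ E]
    (Q S : E → ℝ) (hQc : Continuous Q) (hSc : Continuous S)
    (hQh : ∀ (c : ℝ) (z : E), Q (c • z) = c ^ 2 * Q z)
    (hSh : ∀ (c : ℝ) (z : E), S (c • z) = c ^ 2 * S z)
    (hQneg : ∀ z, z ≠ 0 → Q z < 0) (hSpos : ∀ z, z ≠ 0 → 0 < S z)
    (hne : ∃ z : E, z ≠ 0) :
    ∃ ε : ℝ, 0 < ε ∧ ∀ z, Q z + ε * S z ≤ 0 := by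
  obtain ⟨z₀, hz₀⟩ := hne
  have hsphne : (Metric.sphere (0 : E) 1).Nonempty := by
    refine ⟨‖z₀‖⁻¹ • z₀, ?_⟩
    simp [norm_smul, abs_of_nonneg, inv_mul_cancel₀ (norm_ne_zero_iff.2 hz₀)]
  have hcpt : IsCompact (Metric.sphere (0 : E) 1) := isCompact_sphere 0 1
  have hmemne : ∀ z ∈ Metric.sphere (0 : E) 1, z ≠ 0 := by
    intro z hz h0
    rw [Metric.mem_sphere, h0] at hz
    simp at hz
  have hf : ContinuousOn (fun z : E => -Q z / S z) (Metric.sphere (0 : E) 1) :=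
    (hQc.neg.continuousOn).div hSc.continuousOn
      (fun z hz => ne_of_gt (hSpos z (hmemne z hz)))
  obtain ⟨z₁, hz₁mem, hmin⟩ := hcpt.exists_isMinOn hsphne hf
  set ε := -Q z₁ / S z₁ with hε
  have hz₁ne := hmemne z₁ hz₁mem
  have hεpos : 0 < ε := div_pos (neg_pos.2 (hQneg z₁ hz₁ne)) (hSpos z₁ hz₁ne)
  refine ⟨ε, hεpos, fun z => ?_⟩
  by_cases hz : z = 0
  · have hQ0 : Q 0 = 0 := by
      have := hQh 0 0
      simpa using this
    have hS0 : S 0 = 0 := by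
      have := hSh 0 0
      simpa using this
    rw [hz, hQ0, hS0]; ring_nf; rfl
  · set u := ‖z‖⁻¹ • z with hudef
    have humem : u ∈ Metric.sphere (0 : E) 1 := by
      simp [hudef, norm_smul, abs_of_nonneg, inv_mul_cancel₀ (norm_ne_zero_iff.2 hz)]
    have hune : u ≠ 0 := hmemne u humem
    have hεle : ε ≤ -Q u / S u := hmin humem
    have hSu : 0 < S u := hSpos u hune
    have h1 : Q u + ε * S u ≤ 0 := by
      rw [le_div_iff₀ hSu] at hεle
      linarith
    have hzu : z = ‖z‖ • u := by
      rw [hudef, smul_smul, mul_inv_cancel₀ (norm_ne_zero_iff.2 hz), one_smul]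
    calc Q z + ε * S z = Q (‖z‖ • u) + ε * S (‖z‖ • u) := by rw [← hzu]
    _ = ‖z‖ ^ 2 * (Q u + ε * S u) := by rw [hQh, hSh]; ring
    _ ≤ 0 := mul_nonpos_of_nonneg_of_nonpos (by positivity) h1

private lemma zfM0_mulVec (N : ℕ) (m : ℤ → ℝ) (z : Fin (N + 1) → ℝ) :
    (zfM0 N m).mulVec z
      = fun i : Fin (N+1) => if (i : ℕ) = 0 then ∑ j : Fin (N+1), m (j : ℤ) * z j else m (-(i : ℤ)) * z 0 := by
  funext i
  by_cases h : (i : ℕ) = 0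
  · simp [zfM0, Matrix.mulVec, dotProduct, h, (Fin.ext h : i = 0)]
  · simp only [zfM0, Matrix.mulVec, dotProduct, Matrix.of_apply, h, if_false]
    rw [Fin.sum_univ_succ]
    simp

private lemma dot_zfM0 (N : ℕ) (m : ℤ → ℝ) (q z : Fin (N + 1) → ℝ) :
    q ⬝ᵥ (zfM0 N m).mulVec z
      = q 0 * (∑ j : Fin (N+1), m (j : ℤ) * z j) + (∑ i : Fin N, q i.succ * m (-(i.succ : ℤ))) * z 0 := by
  rw [zfM0_mulVec]
  simp only [dotProduct]
  rw [Fin.sum_univ_succ]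
  simp [Finset.sum_mul, mul_assoc]

private lemma zf_quad (N : ℕ) (m : ℤ → ℝ) (p q : Fin (N + 1) → ℝ) :
    Sum.elim p q ⬝ᵥ (zfIQC N m).mulVec (Sum.elim p q)
      = 2 * (q ⬝ᵥ (zfM0 N m).mulVec p - q ⬝ᵥ (zfM0 N m).mulVec q) := by
  have hswap : ∀ a b : Fin (N + 1) → ℝ,
      a ⬝ᵥ (zfM0 N m)ᵀ.mulVec b = b ⬝ᵥ (zfM0 N m).mulVec a := by
    intro a b
    rw [Matrix.mulVec_transpose, dotProduct_comm, Matrix.dotProduct_mulVec]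
  unfold zfIQC
  rw [Matrix.fromBlocks_mulVec, sumElim_dotProduct_sumElim]
  simp only [Matrix.zero_mulVec, Matrix.neg_mulVec, Matrix.add_mulVec, zero_add,
    dotProduct_add, dotProduct_neg, Sum.elim_comp_inl, Sum.elim_comp_inr]
  rw [hswap p q, hswap q q]
  ring

private lemma sum_Rq_nonneg (N K : ℕ) (m : ℤ → ℝ)
    (hm : ∀ i : ℤ, i ≠ 0 → |i| ≤ (N : ℤ) → m i ≤ 0)
    (hsum : 0 ≤ ∑ i ∈ Finset.Icc (-(N : ℤ)) (N : ℤ), m i)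
    (φ : ℝ → ℝ) (hφ0 : φ 0 = 0)
    (hφm : Monotone φ) (hψm : Monotone fun x => x - φ x)
    (vb : ℤ → ℝ) (hneg : ∀ t : ℤ, t < 0 → vb t = 0) :
    0 ≤ ∑ k ∈ Finset.range K,
      (φ (vb k) * (∑ j ∈ Finset.range (N + 1), m j * (vb ((k : ℤ) - j) - φ (vb ((k : ℤ) - j))))
        + (∑ i ∈ Finset.range N, φ (vb ((k : ℤ) - (i + 1))) * m (-((i : ℤ) + 1)))
            * (vb k - φ (vb k))) := by
  classical
  set wb : ℤ → ℝ := fun t => φ (vb t) with hwb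
  set ψb : ℤ → ℝ := fun t => vb t - wb t with hψb
  have hψneg : ∀ t : ℤ, t < 0 → ψb t = 0 := by
    intro t ht; simp [hψb, hwb, hneg t ht, hφ0]
  have hwneg : ∀ t : ℤ, t < 0 → wb t = 0 := by
    intro t ht; simp [hwb, hneg t ht, hφ0]
  -- the Toeplitz matrices
  set Hlow : ℕ → ℕ → ℝ := fun s t => if t ≤ s ∧ s - t ≤ N then m ((s : ℤ) - t) else 0 with hHlow
  set Hup : ℕ → ℕ → ℝ := fun s t => if s < t ∧ t - s ≤ N then m ((s : ℤ) - t) else 0 with hHup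
  set Hm : ℕ → ℕ → ℝ := fun s t => if ((s : ℤ) - t).natAbs ≤ N then m ((s : ℤ) - t) else 0
    with hHm
  have hsplit : ∀ s t : ℕ, Hm s t = Hlow s t + Hup s t := by
    intro s t
    simp only [hHm, hHlow, hHup]
    split_ifs <;> first | (exfalso; omega) | ring
  -- row/column sums of Hm
  have hoff : ∀ s ∈ Finset.range K, ∀ t ∈ Finset.range K, s ≠ t → Hm s t ≤ 0 := by
    intro s _ t _ hst
    simp only [hHm]
    split_ifs with h
    · refine hm _ (by omega) ?_
      rw [Int.abs_eq_natAbs]; omega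
    · exact le_refl _
  have hrowsum : ∀ s ∈ Finset.range K, 0 ≤ ∑ t ∈ Finset.range K, Hm s t := by
    intro s hs
    have h1 : ∑ t ∈ Finset.range K, Hm s t
        = ∑ t ∈ (Finset.range K).filter (fun t : ℕ => ((s : ℤ) - (t : ℤ)).natAbs ≤ N), m ((s : ℤ) - t) := by
      rw [Finset.sum_filter]
    set J := ((Finset.range K).filter (fun t : ℕ => ((s : ℤ) - (t : ℤ)).natAbs ≤ N)).image
      (fun t : ℕ => (s : ℤ) - t) with hJ
    have h2 : ∑ t ∈ (Finset.range K).filter (fun t : ℕ => ((s : ℤ) - (t : ℤ)).natAbs ≤ N), m ((s : ℤ) - t)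
        = ∑ j ∈ J, m j := by
      rw [hJ, Finset.sum_image]
      intro a _ b _ hab
      have hab' : (s : ℤ) - a = (s : ℤ) - b := hab
      omega
    have hJsub : J ⊆ Finset.Icc (-(N : ℤ)) (N : ℤ) := by
      intro j hj
      simp only [hJ, Finset.mem_image, Finset.mem_filter, Finset.mem_range] at hj
      obtain ⟨t, ⟨_, h⟩, rfl⟩ := hj
      simp only [Finset.mem_Icc]
      omega
    have hJ0 : (0 : ℤ) ∈ J := by
      simp only [hJ, Finset.mem_image, Finset.mem_filter, Finset.mem_range]
      exact ⟨s, ⟨Finset.mem_range.1 hs, by simp⟩, by ring⟩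
    have h4 : ∑ j ∈ Finset.Icc (-(N : ℤ)) (N : ℤ) \ J, m j + ∑ j ∈ J, m j
        = ∑ i ∈ Finset.Icc (-(N : ℤ)) (N : ℤ), m i := Finset.sum_sdiff hJsub
    have h5 : ∑ j ∈ Finset.Icc (-(N : ℤ)) (N : ℤ) \ J, m j ≤ 0 := by
      refine Finset.sum_nonpos fun j hj => ?_
      obtain ⟨hjI, hjJ⟩ := Finset.mem_sdiff.1 hj
      refine hm j (fun h0 => hjJ (h0 ▸ hJ0)) ?_
      simp only [Finset.mem_Icc] at hjI
      rw [abs_le]; exact hjI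
    rw [h1, h2]
    linarith
  have hcolsum : ∀ t ∈ Finset.range K, 0 ≤ ∑ s ∈ Finset.range K, Hm s t := by
    intro t ht
    have h1 : ∑ s ∈ Finset.range K, Hm s t
        = ∑ s ∈ (Finset.range K).filter (fun s : ℕ => ((s : ℤ) - (t : ℤ)).natAbs ≤ N), m ((s : ℤ) - t) := by
      rw [Finset.sum_filter]
    set J := ((Finset.range K).filter (fun s : ℕ => ((s : ℤ) - (t : ℤ)).natAbs ≤ N)).image
      (fun s : ℕ => (s : ℤ) - t) with hJ
    have h2 : ∑ s ∈ (Finset.range K).filter (fun s : ℕ => ((s : ℤ) - (t : ℤ)).natAbs ≤ N), m ((s : ℤ) - t)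
        = ∑ j ∈ J, m j := by
      rw [hJ, Finset.sum_image]
      intro a _ b _ hab
      have hab' : (a : ℤ) - t = (b : ℤ) - t := hab
      omega
    have hJsub : J ⊆ Finset.Icc (-(N : ℤ)) (N : ℤ) := by
      intro j hj
      simp only [hJ, Finset.mem_image, Finset.mem_filter, Finset.mem_range] at hj
      obtain ⟨s, ⟨_, h⟩, rfl⟩ := hj
      simp only [Finset.mem_Icc]
      omega
    have hJ0 : (0 : ℤ) ∈ J := by
      simp only [hJ, Finset.mem_image, Finset.mem_filter, Finset.mem_range]
      exact ⟨t, ⟨Finset.mem_range.1 ht, by simp⟩, by ring⟩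
    have h4 : ∑ j ∈ Finset.Icc (-(N : ℤ)) (N : ℤ) \ J, m j + ∑ j ∈ J, m j
        = ∑ i ∈ Finset.Icc (-(N : ℤ)) (N : ℤ), m i := Finset.sum_sdiff hJsub
    have h5 : ∑ j ∈ Finset.Icc (-(N : ℤ)) (N : ℤ) \ J, m j ≤ 0 := by
      refine Finset.sum_nonpos fun j hj => ?_
      obtain ⟨hjI, hjJ⟩ := Finset.mem_sdiff.1 hj
      refine hm j (fun h0 => hjJ (h0 ▸ hJ0)) ?_
      simp only [Finset.mem_Icc] at hjI
      rw [abs_le]; exact hjI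
    rw [h1, h2]
    linarith
  -- reindex the first inner sum
  have L1 : ∀ k ∈ Finset.range K,
      ∑ j ∈ Finset.range (N + 1), m j * ψb ((k : ℤ) - j)
        = ∑ t ∈ Finset.range K, Hlow k t * ψb t := by
    intro k hk
    have hkK := Finset.mem_range.1 hk
    have hR : ∑ t ∈ Finset.range K, Hlow k t * ψb t
        = ∑ t ∈ (Finset.range K).filter (fun t => t ≤ k ∧ k - t ≤ N), m ((k : ℤ) - t) * ψb t := by
      rw [Finset.sum_filter]
      refine Finset.sum_congr rfl fun t _ => ?_
      simp only [hHlow]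
      split_ifs <;> simp
    have hL : ∑ j ∈ Finset.range (N + 1), m j * ψb ((k : ℤ) - j)
        = ∑ j ∈ (Finset.range (N + 1)).filter (fun j => j ≤ k), m j * ψb ((k : ℤ) - j) := by
      rw [Finset.sum_filter_add_sum_filter_not (Finset.range (N + 1)) (fun j => j ≤ k)
        (fun j => m j * ψb ((k : ℤ) - j)) |>.symm]
      have : ∑ j ∈ (Finset.range (N + 1)).filter (fun j => ¬ j ≤ k),
          m j * ψb ((k : ℤ) - j) = 0 := by
        refine Finset.sum_eq_zero fun j hj => ?_
        simp only [Finset.mem_filter] at hj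
        rw [hψneg _ (by omega)]
        ring
      rw [this, add_zero]
    rw [hL, hR]
    refine Finset.sum_nbij' (fun j => k - j) (fun t => k - t) ?_ ?_ ?_ ?_ ?_
    · intro j hj
      simp only [Finset.mem_filter, Finset.mem_range] at hj ⊢
      omega
    · intro t ht
      simp only [Finset.mem_filter, Finset.mem_range] at ht ⊢
      omega
    · intro j hj
      simp only [Finset.mem_filter, Finset.mem_range] at hj
      omega
    · intro t ht
      simp only [Finset.mem_filter, Finset.mem_range] at ht
      omega
    · intro j hj
      simp only [Finset.mem_filter, Finset.mem_range] at hj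
      have h1 : ((k - j : ℕ) : ℤ) = (k : ℤ) - j := by omega
      rw [h1]
      have h3 : (k : ℤ) - ((k : ℤ) - j) = (j : ℤ) := by ring
      rw [h3]
  -- reindex the second inner sum
  have L2 : ∀ k ∈ Finset.range K,
      ∑ i ∈ Finset.range N, wb ((k : ℤ) - (i + 1)) * m (-((i : ℤ) + 1))
        = ∑ s ∈ Finset.range K, Hup s k * wb s := by
    intro k hk
    have hkK := Finset.mem_range.1 hk
    have hR : ∑ s ∈ Finset.range K, Hup s k * wb s
        = ∑ s ∈ (Finset.range K).filter (fun s => s < k ∧ k - s ≤ N), m ((s : ℤ) - k) * wb s := by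
      rw [Finset.sum_filter]
      refine Finset.sum_congr rfl fun s _ => ?_
      simp only [hHup]
      split_ifs <;> simp
    have hL : ∑ i ∈ Finset.range N, wb ((k : ℤ) - (i + 1)) * m (-((i : ℤ) + 1))
        = ∑ i ∈ (Finset.range N).filter (fun i => i + 1 ≤ k),
            wb ((k : ℤ) - (i + 1)) * m (-((i : ℤ) + 1)) := by
      rw [Finset.sum_filter_add_sum_filter_not (Finset.range N) (fun i => i + 1 ≤ k)
        (fun i => wb ((k : ℤ) - (i + 1)) * m (-((i : ℤ) + 1))) |>.symm]
      have : ∑ i ∈ (Finset.range N).filter (fun i => ¬ i + 1 ≤ k),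
          wb ((k : ℤ) - (i + 1)) * m (-((i : ℤ) + 1)) = 0 := by
        refine Finset.sum_eq_zero fun i hi => ?_
        simp only [Finset.mem_filter] at hi
        rw [hwneg _ (by omega)]
        ring
      rw [this, add_zero]
    rw [hL, hR]
    refine Finset.sum_nbij' (fun i => k - (i + 1)) (fun s => k - s - 1) ?_ ?_ ?_ ?_ ?_
    · intro i hi
      simp only [Finset.mem_filter, Finset.mem_range] at hi ⊢
      omega
    · intro s hs
      simp only [Finset.mem_filter, Finset.mem_range] at hs ⊢
      omega
    · intro i hi
      simp only [Finset.mem_filter, Finset.mem_range] at hi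
      omega
    · intro s hs
      simp only [Finset.mem_filter, Finset.mem_range] at hs
      omega
    · intro i hi
      simp only [Finset.mem_filter, Finset.mem_range] at hi
      have h1 : ((k - (i + 1) : ℕ) : ℤ) = (k : ℤ) - (i + 1) := by omega
      rw [h1]
      have h3 : (k : ℤ) - (i + 1) - (k : ℤ) = -((i : ℤ) + 1) := by ring
      rw [h3]
      ring
  -- now assemble the double sum
  have hmain : ∑ k ∈ Finset.range K,
      (wb k * (∑ j ∈ Finset.range (N + 1), m j * ψb ((k : ℤ) - j))
        + (∑ i ∈ Finset.range N, wb ((k : ℤ) - (i + 1)) * m (-((i : ℤ) + 1))) * ψb k)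
      = ∑ s ∈ Finset.range K, ∑ t ∈ Finset.range K, Hm s t * φ (vb s) * ((fun y => y - φ y) (vb t)) := by
    have e1 : ∀ k ∈ Finset.range K,
        wb k * (∑ j ∈ Finset.range (N + 1), m j * ψb ((k : ℤ) - j))
          = ∑ t ∈ Finset.range K, Hlow k t * (wb k * ψb t) := by
      intro k hk
      rw [L1 k hk, Finset.mul_sum]
      exact Finset.sum_congr rfl fun t _ => by ring
    have e2 : ∀ k ∈ Finset.range K,
        (∑ i ∈ Finset.range N, wb ((k : ℤ) - (i + 1)) * m (-((i : ℤ) + 1))) * ψb k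
          = ∑ s ∈ Finset.range K, Hup s k * (wb s * ψb k) := by
      intro k hk
      rw [L2 k hk, Finset.sum_mul]
      exact Finset.sum_congr rfl fun s _ => by ring
    calc ∑ k ∈ Finset.range K,
        (wb k * (∑ j ∈ Finset.range (N + 1), m j * ψb ((k : ℤ) - j))
          + (∑ i ∈ Finset.range N, wb ((k : ℤ) - (i + 1)) * m (-((i : ℤ) + 1))) * ψb k)
        = ∑ k ∈ Finset.range K, ((∑ t ∈ Finset.range K, Hlow k t * (wb k * ψb t))
            + ∑ s ∈ Finset.range K, Hup s k * (wb s * ψb k)) := by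
          refine Finset.sum_congr rfl fun k hk => ?_
          rw [e1 k hk, e2 k hk]
      _ = (∑ k ∈ Finset.range K, ∑ t ∈ Finset.range K, Hlow k t * (wb k * ψb t))
            + ∑ k ∈ Finset.range K, ∑ s ∈ Finset.range K, Hup s k * (wb s * ψb k) := by
          rw [Finset.sum_add_distrib]
      _ = (∑ s ∈ Finset.range K, ∑ t ∈ Finset.range K, Hlow s t * (wb s * ψb t))
            + ∑ s ∈ Finset.range K, ∑ t ∈ Finset.range K, Hup s t * (wb s * ψb t) := by
          rw [Finset.sum_comm (s := Finset.range K) (t := Finset.range K)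
            (f := fun k s => Hup s k * (wb s * ψb k))]
      _ = ∑ s ∈ Finset.range K, ∑ t ∈ Finset.range K, Hm s t * φ (vb s) * ((fun y => y - φ y) (vb t)) := by
          rw [← Finset.sum_add_distrib]
          refine Finset.sum_congr rfl fun s _ => ?_
          rw [← Finset.sum_add_distrib]
          refine Finset.sum_congr rfl fun t _ => ?_
          rw [hsplit s t]
          simp only [hwb, hψb]
          ring
  have hcore := zf_core (Finset.range K) Hm hoff hrowsum hcolsum
    ((((Finset.range K).image (fun s : ℕ => vb s)).filter (· ≠ 0)).card)
    φ (fun y => y - φ y) (fun s : ℕ => vb s) hφm hψm hφ0 (by simp [hφ0]) le_rfl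
  have := hmain ▸ hcore
  convert this using 2 with k hk

-- scalar multiplication lemmas
private lemma shiftIn_smul {N : ℕ} (c a : ℝ) (ξ : Fin N → ℝ) :
    shiftIn (c * a) (c • ξ) = c • shiftIn a ξ := by
  funext i
  simp only [shiftIn, Pi.smul_apply, smul_eq_mul]
  split_ifs <;> rfl

private lemma headAppend_smul {N : ℕ} (c a : ℝ) (ξ : Fin N → ℝ) :
    headAppend (c * a) (c • ξ) = c • headAppend a ξ := by
  funext i
  simp only [headAppend, Pi.smul_apply, smul_eq_mul]
  split_ifs <;> rfl

private lemma stk_smul {nx N : ℕ} (c : ℝ) (a : Fin nx → ℝ) (b d : Fin N → ℝ) :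
    stk (c • a) (c • b) (c • d) = c • stk a b d := by
  funext i
  cases i with
  | inl i => rfl
  | inr j => cases j with
    | inl j => rfl
    | inr j => rfl

private lemma elim_smul {N : ℕ} (c : ℝ) (p q : Fin (N + 1) → ℝ) :
    Sum.elim (c • p) (c • q) = c • Sum.elim p q := by
  funext i
  cases i with
  | inl i => rfl
  | inr j => rfl

private lemma quad_smul {ι : Type*} [Fintype ι] (M : Matrix ι ι ℝ) (c : ℝ) (f : ι → ℝ) :
    (c • f) ⬝ᵥ M.mulVec (c • f) = c ^ 2 * (f ⬝ᵥ M.mulVec f) := by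
  rw [Matrix.mulVec_smul, dotProduct_smul, smul_dotProduct]
  simp only [smul_eq_mul]
  ring

private lemma quad_cont {E ι : Type*} [TopologicalSpace E] [Fintype ι]
    (M : Matrix ι ι ℝ) (g : E → ι → ℝ) (hg : ∀ i, Continuous fun z => g z i) :
    Continuous fun z => g z ⬝ᵥ M.mulVec (g z) := by
  simp only [dotProduct, Matrix.mulVec]
  exact continuous_finset_sum _ fun i _ =>
    (hg i).mul (continuous_finset_sum _ fun j _ => continuous_const.mul (hg j))

-- the quadratic functions
noncomputable def Qfun (nx N : ℕ) (A : Matrix (Fin nx) (Fin nx) ℝ) (B C : Fin nx → ℝ)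
    (D : ℝ) (m : ℤ → ℝ)
    (P : Matrix (Fin nx ⊕ (Fin N ⊕ Fin N)) (Fin nx ⊕ (Fin N ⊕ Fin N)) ℝ)
    (z : (Fin nx → ℝ) × (Fin N → ℝ) × (Fin N → ℝ) × ℝ) : ℝ :=
  stk (A.mulVec z.1 + z.2.2.2 • B) (shiftIn (C ⬝ᵥ z.1 + D * z.2.2.2) z.2.1)
      (shiftIn z.2.2.2 z.2.2.1) ⬝ᵥ
    P.mulVec (stk (A.mulVec z.1 + z.2.2.2 • B) (shiftIn (C ⬝ᵥ z.1 + D * z.2.2.2) z.2.1)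
      (shiftIn z.2.2.2 z.2.2.1))
  - stk z.1 z.2.1 z.2.2.1 ⬝ᵥ P.mulVec (stk z.1 z.2.1 z.2.2.1)
  + (Sum.elim (headAppend (C ⬝ᵥ z.1 + D * z.2.2.2) z.2.1) (headAppend z.2.2.2 z.2.2.1)) ⬝ᵥ
      (zfIQC N m).mulVec
        (Sum.elim (headAppend (C ⬝ᵥ z.1 + D * z.2.2.2) z.2.1) (headAppend z.2.2.2 z.2.2.1))

noncomputable def Sfun (nx N : ℕ) (z : (Fin nx → ℝ) × (Fin N → ℝ) × (Fin N → ℝ) × ℝ) : ℝ :=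
  (∑ i, z.1 i ^ 2) + (∑ i, z.2.1 i ^ 2) + (∑ i, z.2.2.1 i ^ 2) + z.2.2.2 ^ 2

private lemma Sfun_nonneg (nx N : ℕ) (z : (Fin nx → ℝ) × (Fin N → ℝ) × (Fin N → ℝ) × ℝ) :
    0 ≤ Sfun nx N z := by
  unfold Sfun
  have h1 : (0:ℝ) ≤ ∑ i, z.1 i ^ 2 := Finset.sum_nonneg fun i _ => sq_nonneg _
  have h2 : (0:ℝ) ≤ ∑ i, z.2.1 i ^ 2 := Finset.sum_nonneg fun i _ => sq_nonneg _
  have h3 : (0:ℝ) ≤ ∑ i, z.2.2.1 i ^ 2 := Finset.sum_nonneg fun i _ => sq_nonneg _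
  have h4 : (0:ℝ) ≤ z.2.2.2 ^ 2 := sq_nonneg _
  linarith

private lemma Sfun_pos (nx N : ℕ) (z : (Fin nx → ℝ) × (Fin N → ℝ) × (Fin N → ℝ) × ℝ)
    (hz : z ≠ 0) : 0 < Sfun nx N z := by
  have h1 : (0:ℝ) ≤ ∑ i, z.1 i ^ 2 := Finset.sum_nonneg fun i _ => sq_nonneg _
  have h2 : (0:ℝ) ≤ ∑ i, z.2.1 i ^ 2 := Finset.sum_nonneg fun i _ => sq_nonneg _
  have h3 : (0:ℝ) ≤ ∑ i, z.2.2.1 i ^ 2 := Finset.sum_nonneg fun i _ => sq_nonneg _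
  have h4 : (0:ℝ) ≤ z.2.2.2 ^ 2 := sq_nonneg _
  by_contra hle
  push_neg at hle
  have hS0 : Sfun nx N z = 0 := le_antisymm hle (Sfun_nonneg nx N z)
  unfold Sfun at hS0
  apply hz
  have e1 : ∑ i, z.1 i ^ 2 = 0 := by linarith
  have e2 : ∑ i, z.2.1 i ^ 2 = 0 := by linarith
  have e3 : ∑ i, z.2.2.1 i ^ 2 = 0 := by linarith
  have e4 : z.2.2.2 ^ 2 = 0 := by linarith
  have hz1 : z.1 = 0 := by
    funext i
    have := (Finset.sum_eq_zero_iff_of_nonneg (fun i _ => sq_nonneg (z.1 i))).1 e1 i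
      (Finset.mem_univ i)
    exact pow_eq_zero_iff (by norm_num) |>.1 this
  have hz2 : z.2.1 = 0 := by
    funext i
    have := (Finset.sum_eq_zero_iff_of_nonneg (fun i _ => sq_nonneg (z.2.1 i))).1 e2 i
      (Finset.mem_univ i)
    exact pow_eq_zero_iff (by norm_num) |>.1 this
  have hz3 : z.2.2.1 = 0 := by
    funext i
    have := (Finset.sum_eq_zero_iff_of_nonneg (fun i _ => sq_nonneg (z.2.2.1 i))).1 e3 i
      (Finset.mem_univ i)
    exact pow_eq_zero_iff (by norm_num) |>.1 this
  have hz4 : z.2.2.2 = 0 := pow_eq_zero_iff (by norm_num) |>.1 e4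
  exact Prod.ext hz1 (Prod.ext hz2 (Prod.ext hz3 hz4))

private lemma Sfun_cont (nx N : ℕ) : Continuous (Sfun nx N) := by
  unfold Sfun
  refine Continuous.add (Continuous.add (Continuous.add ?_ ?_) ?_) ?_
  · exact continuous_finset_sum _ fun i _ =>
      (((continuous_apply i).comp continuous_fst)).pow 2
  · exact continuous_finset_sum _ fun i _ =>
      (((continuous_apply i).comp (continuous_fst.comp continuous_snd))).pow 2
  · exact continuous_finset_sum _ fun i _ =>
      (((continuous_apply i).comp
        (continuous_fst.comp (continuous_snd.comp continuous_snd)))).pow 2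
  · exact ((continuous_snd.comp (continuous_snd.comp continuous_snd))).pow 2

private lemma Sfun_hom (nx N : ℕ) (c : ℝ) (z : (Fin nx → ℝ) × (Fin N → ℝ) × (Fin N → ℝ) × ℝ) :
    Sfun nx N (c • z) = c ^ 2 * Sfun nx N z := by
  unfold Sfun
  simp only [Prod.smul_fst, Prod.smul_snd, Pi.smul_apply, smul_eq_mul, mul_pow,
    ← Finset.mul_sum]
  ring

private lemma Qfun_hom (nx N : ℕ) (A : Matrix (Fin nx) (Fin nx) ℝ) (B C : Fin nx → ℝ)
    (D : ℝ) (m : ℤ → ℝ) (P : Matrix (Fin nx ⊕ (Fin N ⊕ Fin N)) (Fin nx ⊕ (Fin N ⊕ Fin N)) ℝ)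
    (c : ℝ) (z : (Fin nx → ℝ) × (Fin N → ℝ) × (Fin N → ℝ) × ℝ) :
    Qfun nx N A B C D m P (c • z) = c ^ 2 * Qfun nx N A B C D m P z := by
  obtain ⟨a, b, d, ω⟩ := z
  show Qfun nx N A B C D m P (c • a, c • b, c • d, c * ω) = _
  unfold Qfun
  simp only
  have h1 : A.mulVec (c • a) + (c * ω) • B = c • (A.mulVec a + ω • B) := by
    rw [Matrix.mulVec_smul, mul_smul, smul_add]
  have h2 : C ⬝ᵥ (c • a) + D * (c * ω) = c * (C ⬝ᵥ a + D * ω) := by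
    rw [dotProduct_smul]
    simp only [smul_eq_mul]
    ring
  rw [h1, h2, shiftIn_smul, shiftIn_smul, stk_smul, stk_smul, headAppend_smul,
    headAppend_smul, elim_smul, quad_smul, quad_smul, quad_smul]
  ring

private lemma Qfun_cont (nx N : ℕ) (A : Matrix (Fin nx) (Fin nx) ℝ) (B C : Fin nx → ℝ)
    (D : ℝ) (m : ℤ → ℝ) (P : Matrix (Fin nx ⊕ (Fin N ⊕ Fin N)) (Fin nx ⊕ (Fin N ⊕ Fin N)) ℝ) :
    Continuous (Qfun nx N A B C D m P) := by
  have cdot : Continuous fun z : (Fin nx → ℝ) × (Fin N → ℝ) × (Fin N → ℝ) × ℝ =>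
      C ⬝ᵥ z.1 + D * z.2.2.2 := by
    refine Continuous.add ?_ ?_
    · simp only [dotProduct]
      exact continuous_finset_sum _ fun j _ =>
        continuous_const.mul ((continuous_apply j).comp continuous_fst)
    · exact continuous_const.mul (continuous_snd.comp (continuous_snd.comp continuous_snd))
  have comega : Continuous fun z : (Fin nx → ℝ) × (Fin N → ℝ) × (Fin N → ℝ) × ℝ =>
      z.2.2.2 := continuous_snd.comp (continuous_snd.comp continuous_snd)
  have cv : ∀ j : Fin N, Continuous fun z : (Fin nx → ℝ) × (Fin N → ℝ) × (Fin N → ℝ) × ℝ =>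
      z.2.1 j := fun j => (continuous_apply j).comp (continuous_fst.comp continuous_snd)
  have cw : ∀ j : Fin N, Continuous fun z : (Fin nx → ℝ) × (Fin N → ℝ) × (Fin N → ℝ) × ℝ =>
      z.2.2.1 j := fun j => (continuous_apply j).comp
        (continuous_fst.comp (continuous_snd.comp continuous_snd))
  have cx : ∀ j : Fin nx, Continuous fun z : (Fin nx → ℝ) × (Fin N → ℝ) × (Fin N → ℝ) × ℝ =>
      z.1 j := fun j => (continuous_apply j).comp continuous_fst
  unfold Qfun
  refine Continuous.add (Continuous.sub (quad_cont _ _ ?_) (quad_cont _ _ ?_)) (quad_cont _ _ ?_)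
  · intro i
    cases i with
    | inl i =>
      show Continuous fun z : (Fin nx → ℝ) × (Fin N → ℝ) × (Fin N → ℝ) × ℝ =>
        (A.mulVec z.1 + z.2.2.2 • B) i
      simp only [Pi.add_apply, Pi.smul_apply, smul_eq_mul, Matrix.mulVec, dotProduct]
      exact (continuous_finset_sum _ fun j _ => continuous_const.mul (cx j)).add
        (comega.mul continuous_const)
    | inr j => cases j with
      | inl j =>
        show Continuous fun z : (Fin nx → ℝ) × (Fin N → ℝ) × (Fin N → ℝ) × ℝ =>
          shiftIn (C ⬝ᵥ z.1 + D * z.2.2.2) z.2.1 j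
        unfold shiftIn
        split_ifs with h
        · exact cdot
        · exact cv _
      | inr j =>
        show Continuous fun z : (Fin nx → ℝ) × (Fin N → ℝ) × (Fin N → ℝ) × ℝ =>
          shiftIn z.2.2.2 z.2.2.1 j
        unfold shiftIn
        split_ifs with h
        · exact comega
        · exact cw _
  · intro i
    cases i with
    | inl i => exact cx i
    | inr j => cases j with
      | inl j => exact cv j
      | inr j => exact cw j
  · intro i
    cases i with
    | inl i =>
      show Continuous fun z : (Fin nx → ℝ) × (Fin N → ℝ) × (Fin N → ℝ) × ℝ =>
        headAppend (C ⬝ᵥ z.1 + D * z.2.2.2) z.2.1 i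
      unfold headAppend
      split_ifs with h
      · exact cdot
      · exact cv _
    | inr i =>
      show Continuous fun z : (Fin nx → ℝ) × (Fin N → ℝ) × (Fin N → ℝ) × ℝ =>
        headAppend z.2.2.2 z.2.2.1 i
      unfold headAppend
      split_ifs with h
      · exact comega
      · exact cw _

theorem stmt5 (nx : ℕ) (A : Matrix (Fin nx) (Fin nx) ℝ) (B : Fin nx → ℝ)
    (C : Fin nx → ℝ) (D : ℝ)
    (N : ℕ) (hN : 1 ≤ N)
    (φ : ℝ → ℝ) (hφ0 : φ 0 = 0) (hslope : SlopeRestricted01 φ)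
    (m : ℤ → ℝ) (hm : ∀ i : ℤ, i ≠ 0 → |i| ≤ (N : ℤ) → m i ≤ 0)
    (hsum : 0 ≤ ∑ i ∈ Finset.Icc (-(N : ℤ)) (N : ℤ), m i)
    (P : Matrix (Fin nx ⊕ (Fin N ⊕ Fin N)) (Fin nx ⊕ (Fin N ⊕ Fin N)) ℝ)
    (hP : P.PosSemidef)
    (hLMI : ∀ (ξx : Fin nx → ℝ) (ξv ξw : Fin N → ℝ) (ω : ℝ),
      ¬(ξx = 0 ∧ ξv = 0 ∧ ξw = 0 ∧ ω = 0) →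
      stk (A.mulVec ξx + ω • B) (shiftIn (C ⬝ᵥ ξx + D * ω) ξv) (shiftIn ω ξw) ⬝ᵥ
          P.mulVec
            (stk (A.mulVec ξx + ω • B) (shiftIn (C ⬝ᵥ ξx + D * ω) ξv) (shiftIn ω ξw))
        - stk ξx ξv ξw ⬝ᵥ P.mulVec (stk ξx ξv ξw)
        + (Sum.elim (headAppend (C ⬝ᵥ ξx + D * ω) ξv) (headAppend ω ξw)) ⬝ᵥ
            (zfIQC N m).mulVec
              (Sum.elim (headAppend (C ⬝ᵥ ξx + D * ω) ξv) (headAppend ω ξw))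
        < 0)
    (x : ℕ → Fin nx → ℝ) (v w : ℕ → ℝ)
    (hdyn : ∀ k, x (k + 1) = A.mulVec (x k) + w k • B)
    (hout : ∀ k, v k = C ⬝ᵥ x k + D * w k)
    (hφ : ∀ k, w k = φ (v k)) :
    Filter.Tendsto x Filter.atTop (nhds 0) := by
  classical
  have hφm : Monotone φ := by
    intro a b hab
    rcases eq_or_lt_of_le hab with rfl | h
    · exact le_rfl
    · have := (hslope a b h).1; linarith
  have hψm : Monotone (fun y : ℝ => y - φ y) := by
    intro a b hab
    rcases eq_or_lt_of_le hab with rfl | h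
    · exact le_rfl
    · have := (hslope a b h).2; simp only; linarith
  -- extended signals
  set vb : ℤ → ℝ := fun t => if 0 ≤ t then v t.toNat else 0 with hvbdef
  set wb : ℤ → ℝ := fun t => if 0 ≤ t then w t.toNat else 0 with hwbdef
  have hvbk : ∀ k : ℕ, vb (k : ℤ) = v k := by
    intro k; simp [hvbdef]
  have hwbk : ∀ k : ℕ, wb (k : ℤ) = w k := by
    intro k; simp [hwbdef]
  have hvneg : ∀ t : ℤ, t < 0 → vb t = 0 := by
    intro t ht; simp [hvbdef, not_le.2 ht]
  have hwb0 : ∀ t : ℤ, wb t = φ (vb t) := by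
    intro t
    by_cases ht : 0 ≤ t
    · simp [hvbdef, hwbdef, ht, hφ t.toNat]
    · simp [hvbdef, hwbdef, ht, hφ0]
  -- trajectory of the augmented state
  set ξv : ℕ → Fin N → ℝ := fun k i => vb ((k : ℤ) - 1 - (i : ℤ)) with hξvdef
  set ξw : ℕ → Fin N → ℝ := fun k i => wb ((k : ℤ) - 1 - (i : ℤ)) with hξwdef
  set ρv : ℕ → Fin (N + 1) → ℝ := fun k j => vb ((k : ℤ) - (j : ℤ)) with hρvdef
  set ρw : ℕ → Fin (N + 1) → ℝ := fun k j => wb ((k : ℤ) - (j : ℤ)) with hρwdef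
  have hshiftv : ∀ k : ℕ, shiftIn (C ⬝ᵥ x k + D * w k) (ξv k) = ξv (k + 1) := by
    intro k
    funext i
    simp only [shiftIn, hξvdef]
    split_ifs with h
    · rw [show (((k + 1 : ℕ)) : ℤ) - 1 - (i : ℤ) = (k : ℤ) by push_cast; omega]
      rw [hvbk k, hout k]
    · congr 1
      push_cast
      omega
  have hshiftw : ∀ k : ℕ, shiftIn (w k) (ξw k) = ξw (k + 1) := by
    intro k
    funext i
    simp only [shiftIn, hξwdef]
    split_ifs with h
    · rw [show (((k + 1 : ℕ)) : ℤ) - 1 - (i : ℤ) = (k : ℤ) by push_cast; omega]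
      rw [hwbk k]
    · congr 1
      push_cast
      omega
  have hheadv : ∀ k : ℕ, headAppend (C ⬝ᵥ x k + D * w k) (ξv k) = ρv k := by
    intro k
    funext i
    simp only [headAppend, hξvdef, hρvdef]
    split_ifs with h
    · rw [show (k : ℤ) - (i : ℤ) = (k : ℤ) by push_cast; omega]
      rw [hvbk k, hout k]
    · congr 1
      push_cast
      omega
  have hheadw : ∀ k : ℕ, headAppend (w k) (ξw k) = ρw k := by
    intro k
    funext i
    simp only [headAppend, hξwdef, hρwdef]
    split_ifs with h
    · rw [show (k : ℤ) - (i : ℤ) = (k : ℤ) by push_cast; omega]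
      rw [hwbk k]
    · congr 1
      push_cast
      omega
  set Vly : ℕ → ℝ := fun k =>
    stk (x k) (ξv k) (ξw k) ⬝ᵥ P.mulVec (stk (x k) (ξv k) (ξw k)) with hVlydef
  set Rq : ℕ → ℝ := fun k =>
    Sum.elim (ρv k) (ρw k) ⬝ᵥ (zfIQC N m).mulVec (Sum.elim (ρv k) (ρw k)) with hRqdef
  set Sq : ℕ → ℝ := fun k => Sfun nx N (x k, ξv k, ξw k, w k) with hSqdef
  -- coercivity
  have hQneg : ∀ z : (Fin nx → ℝ) × (Fin N → ℝ) × (Fin N → ℝ) × ℝ, z ≠ 0 →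
      Qfun nx N A B C D m P z < 0 := by
    intro z hz
    refine hLMI z.1 z.2.1 z.2.2.1 z.2.2.2 ?_
    rintro ⟨h1, h2, h3, h4⟩
    exact hz (Prod.ext h1 (Prod.ext h2 (Prod.ext h3 h4)))
  have hne : ∃ z : (Fin nx → ℝ) × (Fin N → ℝ) × (Fin N → ℝ) × ℝ, z ≠ 0 := by
    refine ⟨(0, 0, 0, 1), fun h => ?_⟩
    have := congrArg (fun z : (Fin nx → ℝ) × (Fin N → ℝ) × (Fin N → ℝ) × ℝ => z.2.2.2) h
    simpa using this
  obtain ⟨ε, hε, hQS⟩ := coercive (Qfun nx N A B C D m P) (Sfun nx N)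
    (Qfun_cont nx N A B C D m P) (Sfun_cont nx N)
    (fun c z => Qfun_hom nx N A B C D m P c z) (fun c z => Sfun_hom nx N c z)
    hQneg (fun z hz => Sfun_pos nx N z hz) hne
  have hstep : ∀ k : ℕ, Vly (k + 1) - Vly k + Rq k + ε * Sq k ≤ 0 := by
    intro k
    have h := hQS (x k, ξv k, ξw k, w k)
    have hQeq : Qfun nx N A B C D m P (x k, ξv k, ξw k, w k)
        = Vly (k + 1) - Vly k + Rq k := by
      unfold Qfun
      dsimp only
      rw [hshiftv k, hshiftw k, hheadv k, hheadw k, ← hdyn k]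
    have hSqk : Sq k = Sfun nx N (x k, ξv k, ξw k, w k) := rfl
    linarith [h]
  have htel : ∀ K : ℕ, Vly K - Vly 0 + (∑ k ∈ Finset.range K, Rq k)
      + ε * (∑ k ∈ Finset.range K, Sq k) ≤ 0 := by
    intro K
    induction K with
    | zero => simp
    | succ K ihK =>
      rw [Finset.sum_range_succ, Finset.sum_range_succ]
      have := hstep K
      nlinarith [hstep K]
  -- the IQC sum is nonnegative
  have hRq_eq : ∀ k : ℕ, Rq k
      = 2 * ((wb k) * (∑ j ∈ Finset.range (N + 1),
            m j * (vb ((k : ℤ) - j) - wb ((k : ℤ) - j)))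
        + (∑ i ∈ Finset.range N, wb ((k : ℤ) - (i + 1)) * m (-((i : ℤ) + 1)))
            * (vb k - wb k)) := by
    intro k
    simp only [hRqdef]
    rw [zf_quad, dot_zfM0, dot_zfM0]
    simp only [hρvdef, hρwdef]
    have s1 : ∑ j : Fin (N + 1), m (j : ℤ) * vb ((k : ℤ) - (j : ℤ))
        = ∑ j ∈ Finset.range (N + 1), m j * vb ((k : ℤ) - j) :=
      Fin.sum_univ_eq_sum_range (fun j : ℕ => m j * vb ((k : ℤ) - j)) (N + 1)
    have s2 : ∑ j : Fin (N + 1), m (j : ℤ) * wb ((k : ℤ) - (j : ℤ))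
        = ∑ j ∈ Finset.range (N + 1), m j * wb ((k : ℤ) - j) :=
      Fin.sum_univ_eq_sum_range (fun j : ℕ => m j * wb ((k : ℤ) - j)) (N + 1)
    have s3 : ∑ i : Fin N, wb ((k : ℤ) - ((i.succ : Fin (N + 1)) : ℤ))
          * m (-((i.succ : Fin (N + 1)) : ℤ))
        = ∑ i ∈ Finset.range N, wb ((k : ℤ) - ((i : ℤ) + 1)) * m (-((i : ℤ) + 1)) := by
      have e : ∀ i : Fin N, ((i.succ : Fin (N + 1)) : ℤ) = (i : ℤ) + 1 := by
        intro i
        simp [Fin.val_succ]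
      calc ∑ i : Fin N, wb ((k : ℤ) - ((i.succ : Fin (N + 1)) : ℤ))
            * m (-((i.succ : Fin (N + 1)) : ℤ))
          = ∑ i : Fin N, wb ((k : ℤ) - ((i : ℤ) + 1)) * m (-((i : ℤ) + 1)) := by
            refine Finset.sum_congr rfl fun i _ => ?_
            rw [e i]
        _ = ∑ i ∈ Finset.range N, wb ((k : ℤ) - ((i : ℤ) + 1)) * m (-((i : ℤ) + 1)) :=
            Fin.sum_univ_eq_sum_range
              (fun i : ℕ => wb ((k : ℤ) - ((i : ℤ) + 1)) * m (-((i : ℤ) + 1))) N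
    rw [s1, s2, s3]
    have h0 : ((0 : Fin (N + 1)) : ℤ) = 0 := rfl
    rw [h0, sub_zero]
    simp only [mul_sub, Finset.sum_sub_distrib]
    ring
  have hRsum : ∀ K : ℕ, 0 ≤ ∑ k ∈ Finset.range K, Rq k := by
    intro K
    have h2 := sum_Rq_nonneg N K m hm hsum φ hφ0 hφm hψm vb hvneg
    have h3 : ∑ k ∈ Finset.range K, Rq k
        = 2 * ∑ k ∈ Finset.range K,
          (φ (vb k) * (∑ j ∈ Finset.range (N + 1),
              m j * (vb ((k : ℤ) - j) - φ (vb ((k : ℤ) - j))))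
            + (∑ i ∈ Finset.range N, φ (vb ((k : ℤ) - (i + 1))) * m (-((i : ℤ) + 1)))
                * (vb k - φ (vb k))) := by
      rw [Finset.mul_sum]
      refine Finset.sum_congr rfl fun k _ => ?_
      rw [hRq_eq k]
      simp only [hwb0]
    rw [h3]
    linarith
  have hVnn : ∀ K : ℕ, 0 ≤ Vly K := by
    intro K
    have := hP.dotProduct_mulVec_nonneg (stk (x K) (ξv K) (ξw K))
    simpa [hVlydef] using this
  have hSqb : ∀ K : ℕ, ∑ k ∈ Finset.range K, Sq k ≤ Vly 0 / ε := by
    intro K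
    rw [le_div_iff₀ hε]
    have h1 := htel K
    have h2 := hRsum K
    have h3 := hVnn K
    nlinarith
  have hSqnn : ∀ k, 0 ≤ Sq k := fun k => Sfun_nonneg nx N _
  have hsummable : Summable Sq := summable_of_sum_range_le hSqnn hSqb
  have hS0 : Filter.Tendsto Sq Filter.atTop (nhds 0) := hsummable.tendsto_atTop_zero
  rw [tendsto_pi_nhds]
  intro i
  have hle : ∀ k, (x k i) ^ 2 ≤ Sq k := by
    intro k
    have h1 : (x k i) ^ 2 ≤ ∑ j, (x k j) ^ 2 :=
      Finset.single_le_sum (fun j _ => sq_nonneg (x k j)) (Finset.mem_univ i)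
    have h2 : (0:ℝ) ≤ ∑ j, (ξv k j) ^ 2 := Finset.sum_nonneg fun j _ => sq_nonneg _
    have h3 : (0:ℝ) ≤ ∑ j, (ξw k j) ^ 2 := Finset.sum_nonneg fun j _ => sq_nonneg _
    have h4 : (0:ℝ) ≤ (w k) ^ 2 := sq_nonneg _
    have h5 : Sq k = (∑ j, (x k j) ^ 2) + (∑ j, (ξv k j) ^ 2)
        + (∑ j, (ξw k j) ^ 2) + (w k) ^ 2 := rfl
    linarith
  have hsq : Filter.Tendsto (fun k => (x k i) ^ 2) Filter.atTop (nhds 0) :=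
    squeeze_zero (fun k => sq_nonneg _) hle hS0
  have habs : Filter.Tendsto (fun k => |x k i|) Filter.atTop (nhds 0) := by
    have h := (Real.continuous_sqrt.tendsto 0).comp hsq
    simp only [Function.comp_def, Real.sqrt_sq_eq_abs, Real.sqrt_zero] at h
    exact h
  have hx0 : Filter.Tendsto (fun k => x k i) Filter.atTop (nhds 0) := by
    have hneg' : Filter.Tendsto (fun k => -|x k i|) Filter.atTop (nhds 0) := by
      simpa using habs.neg
    exact tendsto_of_tendsto_of_tendsto_of_le_of_le hneg' habs
      (fun k => neg_abs_le _) (fun k => le_abs_self _)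
  simpa using hx0
end

section
/- Let N ∈ ℕ with N ≥ 1, let Q₁, Q₂ ∈ ℝ^{N×N} be symmetric matrices with all entries nonnegative, and let Q₃ ∈ ℝ^{N×N} be a Metzler matrix. Then for every v ∈ ℝ^N, defining w ∈ ℝ^N by w_i = max(v_i, 0) for each i, the quadratic form [v; w]ᵀ [[Q₁, −Q₃ᵀ − Q₁], [−Q₃ − Q₁, Q₁ + Q₂ + Q₃ + Q₃ᵀ]] [v; w] is nonnegative. -/
open Matrix

/-- A square real matrix is Metzler: nonnegative off-diagonal entries. -/
def Metzler {n : ℕ} (Q : Matrix (Fin n) (Fin n) ℝ) : Prop :=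
  ∀ i j, i ≠ j → 0 ≤ Q i j

private lemma sum_sym_eq {N : ℕ} (f g : Fin N → Fin N → ℝ)
    (h : ∀ i j, f i j + f j i = g i j + g j i) :
    ∑ i, ∑ j, f i j = ∑ i, ∑ j, g i j := by
  have hf : (∑ i, ∑ j, f i j) = ∑ i, ∑ j, f j i := Finset.sum_comm
  have hg : (∑ i, ∑ j, g i j) = ∑ i, ∑ j, g j i := Finset.sum_comm
  have h2 : (∑ i, ∑ j, f i j) + (∑ i, ∑ j, f j i)
      = (∑ i, ∑ j, g i j) + (∑ i, ∑ j, g j i) := by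
    rw [← Finset.sum_add_distrib]
    rw [← Finset.sum_add_distrib]
    simp only [← Finset.sum_add_distrib]
    exact Finset.sum_congr rfl fun i _ => Finset.sum_congr rfl fun j _ => h i j
  linarith [hf, hg, h2]

theorem stmt6 (N : ℕ) (hN : 1 ≤ N)
    (Q₁ Q₂ Q₃ : Matrix (Fin N) (Fin N) ℝ)
    (h1s : Q₁.IsSymm) (h2s : Q₂.IsSymm)
    (h1n : ∀ i j, 0 ≤ Q₁ i j) (h2n : ∀ i j, 0 ≤ Q₂ i j)
    (h3 : Metzler Q₃)
    (v w : Fin N → ℝ) (hw : ∀ i, w i = max (v i) 0) :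
    0 ≤ (Sum.elim v w) ⬝ᵥ
        (Matrix.fromBlocks Q₁ (-Q₃ᵀ - Q₁) (-Q₃ - Q₁)
          (Q₁ + Q₂ + Q₃ + Q₃ᵀ)).mulVec (Sum.elim v w) := by
  have hw0 : ∀ i, 0 ≤ w i := fun i => (hw i) ▸ le_max_right _ _
  have hvw : ∀ i, v i - w i ≤ 0 := fun i => by rw [hw i]; simp [le_max_left]
  have hzero : ∀ i, w i * (w i - v i) = 0 := by
    intro i; rw [hw i]
    rcases le_total (v i) 0 with h | h
    · simp [max_eq_right h]
    · simp [max_eq_left h]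
  simp only [dotProduct, mulVec, Fintype.sum_sum_type, Sum.elim_inl, Sum.elim_inr,
    fromBlocks_apply₁₁, fromBlocks_apply₁₂, fromBlocks_apply₂₁, fromBlocks_apply₂₂,
    Matrix.sub_apply, Matrix.neg_apply, Matrix.add_apply, Matrix.transpose_apply]
  have expand :
      (∑ x : Fin N, v x * (∑ y : Fin N, Q₁ x y * v y + ∑ y : Fin N, (-Q₃ y x - Q₁ x y) * w y) +
        ∑ x : Fin N, w x * (∑ y : Fin N, (-Q₃ x y - Q₁ x y) * v y +
            ∑ y : Fin N, (Q₁ x y + Q₂ x y + Q₃ x y + Q₃ y x) * w y))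
      = ∑ x : Fin N, ∑ y : Fin N,
          (v x * (Q₁ x y * v y + (-Q₃ y x - Q₁ x y) * w y) +
           w x * ((-Q₃ x y - Q₁ x y) * v y + (Q₁ x y + Q₂ x y + Q₃ x y + Q₃ y x) * w y)) := by
    simp only [← Finset.sum_add_distrib, mul_add, Finset.mul_sum]
  rw [expand, sum_sym_eq _ (fun i j =>
      (v i - w i) * Q₁ i j * (v j - w j) + w i * Q₂ i j * w j
        + 2 * (w i * Q₃ i j * (w j - v j)))
    (by
      intro i j
      have e1 : Q₁ j i = Q₁ i j := h1s.apply i j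
      have e2 : Q₂ j i = Q₂ i j := h2s.apply i j
      simp only [e1, e2]; ring)]
  refine Finset.sum_nonneg fun i _ => Finset.sum_nonneg fun j _ => ?_
  have t1 : 0 ≤ (v i - w i) * Q₁ i j * (v j - w j) := by
    nlinarith [mul_nonneg (mul_nonneg (neg_nonneg.mpr (hvw i)) (h1n i j)) (neg_nonneg.mpr (hvw j))]
  have t2 : 0 ≤ w i * Q₂ i j * w j :=
    mul_nonneg (mul_nonneg (hw0 i) (h2n i j)) (hw0 j)
  have t3 : 0 ≤ 2 * (w i * Q₃ i j * (w j - v j)) := by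
    rcases eq_or_ne i j with rfl | hij
    · have : w i * Q₃ i i * (w i - v i) = Q₃ i i * (w i * (w i - v i)) := by ring
      rw [this, hzero i]; simp
    · have hwv : 0 ≤ w j - v j := by
        rw [hw j]; simp [sub_nonneg, le_max_right, le_max_left]
      exact mul_nonneg (by norm_num) (mul_nonneg (mul_nonneg (hw0 i) (h3 i j hij)) hwv)
  linarith
end

section
/- Let N ∈ ℕ with N ≥ 1 and let Q₃ ∈ ℝ^{N×N} be a Metzler matrix. Then for every v ∈ ℝ^N, defining w ∈ ℝ^N by w_i = max(v_i, 0) for each i, it holds that wᵀ Q₃ (w − v) ≥ 0. -/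
open Matrix

theorem stmt7 (N : ℕ) (hN : 1 ≤ N)
    (Q₃ : Matrix (Fin N) (Fin N) ℝ) (h3 : Metzler Q₃)
    (v w : Fin N → ℝ) (hw : ∀ i, w i = max (v i) 0) :
    0 ≤ w ⬝ᵥ Q₃.mulVec (w - v) := by
  have hw0 : ∀ i, 0 ≤ w i := fun i => (hw i) ▸ le_max_right _ _
  have hwv : ∀ i, 0 ≤ w i - v i := fun i => by
    rw [hw i]; simp [sub_nonneg, le_max_iff]
  have hdiag : ∀ i, w i * (w i - v i) = 0 := fun i => by
    rcases le_or_gt (v i) 0 with h | h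
    · have : w i = 0 := by rw [hw i]; exact max_eq_right h
      simp [this]
    · have : w i = v i := by rw [hw i]; exact max_eq_left h.le
      simp [this]
  simp only [dotProduct, mulVec, dotProduct, Pi.sub_apply]
  apply Finset.sum_nonneg
  intro i _
  rw [Finset.mul_sum]
  apply Finset.sum_nonneg
  intro j _
  rcases eq_or_ne i j with rfl | hij
  · have : w i * (Q₃ i i * (w i - v i)) = Q₃ i i * (w i * (w i - v i)) := by ring
    rw [this, hdiag i, mul_zero]
  · exact mul_nonneg (hw0 i) (mul_nonneg (h3 i j hij) (hwv j))
end

section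
/- Let N ∈ ℕ and let m¹₀, …, m¹_N, m²₀, …, m²_N, m³₋N, …, m³_N ∈ ℝ be arbitrary, with M ∈ ℝ^{(2N+2)×(2N+2)} the associated ReLU IQC matrix built from M₁, M₂, M₃. Let v, w : ℕ → ℝ be arbitrary sequences, extended by zero to negative indices, and let r(k) ∈ ℝ^{2N+2} be the associated window vectors. Then for every T₀ ∈ ℕ, ∑_{k=0}^{T₀} r(k)ᵀ M r(k) = [v̄; w̄]ᵀ [[Q₁, −Q₃ᵀ − Q₁], [−Q₃ − Q₁, Q₁ + Q₂ + Q₃ + Q₃ᵀ]] [v̄; w̄], where v̄ = (v(T₀), …, v(0)), w̄ = (w(T₀), …, w(0)) ∈ ℝ^{T₀+1}, Q₁, Q₂ ∈ ℝ^{(T₀+1)×(T₀+1)} are symmetric banded Toeplitz matrices with (Q_j)_{ik} = m^j_{|i−k|} when |i − k| ≤ N and 0 otherwise (j = 1, 2), and Q₃ ∈ ℝ^{(T₀+1)×(T₀+1)} is the banded Toeplitz matrix with (Q₃)_{ik} = m³_{k−i} when |i − k| ≤ N and 0 otherwise. -/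
open Matrix

/-- Symmetric bordered matrix with `(m₀, …, m_N)` as both first row and first column,
and all other entries zero. -/
noncomputable def reluM12 (N : ℕ) (m : ℕ → ℝ) : Matrix (Fin (N + 1)) (Fin (N + 1)) ℝ :=
  Matrix.of fun i j =>
    if (i : ℕ) = 0 then m (j : ℕ)
    else if (j : ℕ) = 0 then m (i : ℕ) else 0

/-- The matrix `M₃` with first row `(m³₀, m³₁, …, m³_N)`, first column
`(m³₀, m³₋₁, …, m³₋N)ᵀ`, and all other entries zero. -/
noncomputable def reluM3 (N : ℕ) (m : ℤ → ℝ) : Matrix (Fin (N + 1)) (Fin (N + 1)) ℝ :=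
  Matrix.of fun i j =>
    if (i : ℕ) = 0 then m (j : ℤ)
    else if (j : ℕ) = 0 then m (-(i : ℤ)) else 0

/-- The ReLU IQC matrix
`M = [[M₁, −M₃ᵀ − M₁], [−M₃ − M₁, M₁ + M₂ + M₃ + M₃ᵀ]]`. -/
noncomputable def reluIQC (N : ℕ) (m1 m2 : ℕ → ℝ) (m3 : ℤ → ℝ) :
    Matrix (Fin (N + 1) ⊕ Fin (N + 1)) (Fin (N + 1) ⊕ Fin (N + 1)) ℝ :=
  Matrix.fromBlocks (reluM12 N m1) (-(reluM3 N m3)ᵀ - reluM12 N m1)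
    (-(reluM3 N m3) - reluM12 N m1)
    (reluM12 N m1 + reluM12 N m2 + reluM3 N m3 + (reluM3 N m3)ᵀ)

namespace ReluAux

open Finset

/-- The canonical double-sum quadratic form value. -/
noncomputable def Dsum (N T₀ : ℕ) (m : ℤ → ℝ) (x y : ℕ → ℝ) : ℝ :=
  ∑ s ∈ Finset.range (T₀ + 1), ∑ t ∈ Finset.range (T₀ + 1),
    (if |(s : ℤ) - (t : ℤ)| ≤ (N : ℤ) then m ((s : ℤ) - (t : ℤ)) else 0) * x s * y t

/-- Per-step bilinear form against `reluM3`. -/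
noncomputable def dd (N : ℕ) (m : ℤ → ℝ) (x y : ℕ → ℝ) (k : ℕ) : ℝ :=
  (fun i : Fin (N + 1) => extZ x ((k : ℤ) - (i : ℤ))) ⬝ᵥ
    (reluM3 N m).mulVec (fun i : Fin (N + 1) => extZ y ((k : ℤ) - (i : ℤ)))

lemma extZ_coe (v : ℕ → ℝ) (n : ℕ) : extZ v (n : ℤ) = v n := by
  simp [extZ]

lemma extZ_neg (v : ℕ → ℝ) (j : ℤ) (h : j < 0) : extZ v j = 0 := by
  simp [extZ, not_le.mpr h]

lemma sumA (N T₀ : ℕ) (m : ℤ → ℝ) (x y : ℕ → ℝ) :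
    ∑ k ∈ range (T₀ + 1), ∑ j ∈ range (N + 1), x k * (m j * extZ y ((k : ℤ) - j))
      = ∑ s ∈ range (T₀ + 1), ∑ t ∈ range (T₀ + 1),
          (if t ≤ s ∧ s - t ≤ N then m ((s : ℤ) - t) else 0) * x s * y t := by
  refine Finset.sum_congr rfl fun k hk => ?_
  have hkT : k ≤ T₀ := by simpa [Nat.lt_succ_iff] using hk
  have hL : ∀ j ∈ range (N + 1),
      x k * (m j * extZ y ((k : ℤ) - j)) =
        if j ≤ k then x k * (m j * y (k - j)) else 0 := by
    intro j _
    by_cases h : j ≤ k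
    · have e : ((k : ℤ) - j) = ((k - j : ℕ) : ℤ) := by omega
      rw [e, extZ_coe, if_pos h]
    · rw [extZ_neg _ _ (by omega), if_neg h]
      ring
  rw [Finset.sum_congr rfl hL, ← Finset.sum_filter]
  have hR : ∀ t ∈ range (T₀ + 1),
      (if t ≤ k ∧ k - t ≤ N then m ((k : ℤ) - t) else 0) * x k * y t =
        if t ≤ k ∧ k - t ≤ N then m ((k : ℤ) - t) * x k * y t else 0 := by
    intro t _; split_ifs <;> ring
  rw [Finset.sum_congr rfl hR, ← Finset.sum_filter]
  refine Finset.sum_nbij' (fun j => k - j) (fun t => k - t) ?_ ?_ ?_ ?_ ?_ <;>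
      intro a ha <;> simp only [Finset.mem_filter, Finset.mem_range] at * <;> try beta_reduce
  · omega
  · omega
  · omega
  · omega
  · have e : ((k : ℤ) - ((k - a : ℕ) : ℤ)) = (a : ℤ) := by omega
    rw [e]
    ring

lemma sumB (N T₀ : ℕ) (m : ℤ → ℝ) (x y : ℕ → ℝ) :
    ∑ k ∈ range (T₀ + 1), ∑ i ∈ range N,
        extZ x ((k : ℤ) - ((i : ℤ) + 1)) * (m (-((i : ℤ) + 1)) * y k)
      = ∑ s ∈ range (T₀ + 1), ∑ t ∈ range (T₀ + 1),
          (if s < t ∧ t - s ≤ N then m ((s : ℤ) - t) else 0) * x s * y t := by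
  conv_rhs => rw [Finset.sum_comm]
  refine Finset.sum_congr rfl fun k hk => ?_
  have hkT : k ≤ T₀ := by simpa [Nat.lt_succ_iff] using hk
  have hL : ∀ i ∈ range N,
      extZ x ((k : ℤ) - ((i : ℤ) + 1)) * (m (-((i : ℤ) + 1)) * y k) =
        if i + 1 ≤ k then x (k - (i + 1)) * (m (-((i : ℤ) + 1)) * y k) else 0 := by
    intro i _
    by_cases h : i + 1 ≤ k
    · have e : ((k : ℤ) - ((i : ℤ) + 1)) = ((k - (i + 1) : ℕ) : ℤ) := by omega
      rw [e, extZ_coe, if_pos h]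
    · rw [extZ_neg _ _ (by omega), if_neg h]
      ring
  rw [Finset.sum_congr rfl hL, ← Finset.sum_filter]
  have hR : ∀ s ∈ range (T₀ + 1),
      (if s < k ∧ k - s ≤ N then m ((s : ℤ) - k) else 0) * x s * y k =
        if s < k ∧ k - s ≤ N then m ((s : ℤ) - k) * x s * y k else 0 := by
    intro s _; split_ifs <;> ring
  rw [Finset.sum_congr rfl hR, ← Finset.sum_filter]
  refine Finset.sum_nbij' (fun i => k - (i + 1)) (fun s => k - s - 1) ?_ ?_ ?_ ?_ ?_ <;>
      intro a ha <;> simp only [Finset.mem_filter, Finset.mem_range] at * <;> try beta_reduce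
  · omega
  · omega
  · omega
  · omega
  · have e : (((k - (a + 1) : ℕ)) : ℤ) - (k : ℤ) = -((a : ℤ) + 1) := by omega
    rw [e]
    ring

lemma Dsum_split (N T₀ : ℕ) (m : ℤ → ℝ) (x y : ℕ → ℝ) :
    Dsum N T₀ m x y =
      (∑ s ∈ range (T₀ + 1), ∑ t ∈ range (T₀ + 1),
          (if t ≤ s ∧ s - t ≤ N then m ((s : ℤ) - t) else 0) * x s * y t)
      + ∑ s ∈ range (T₀ + 1), ∑ t ∈ range (T₀ + 1),
          (if s < t ∧ t - s ≤ N then m ((s : ℤ) - t) else 0) * x s * y t := by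
  unfold Dsum
  rw [← Finset.sum_add_distrib]
  refine Finset.sum_congr rfl fun s _ => ?_
  rw [← Finset.sum_add_distrib]
  refine Finset.sum_congr rfl fun t _ => ?_
  simp only [abs_sub_le_iff]
  split_ifs <;> first | (exfalso; omega) | ring1

lemma core (N T₀ : ℕ) (m : ℤ → ℝ) (x y : ℕ → ℝ) :
    ∑ k ∈ range (T₀ + 1), dd N m x y k = Dsum N T₀ m x y := by
  have step : ∀ k ∈ range (T₀ + 1),
      dd N m x y k
        = (∑ j ∈ range (N + 1), x k * (m j * extZ y ((k : ℤ) - j)))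
          + ∑ i ∈ range N, extZ x ((k : ℤ) - ((i : ℤ) + 1)) * (m (-((i : ℤ) + 1)) * y k) := by
    intro k _
    unfold dd
    simp only [mulVec, dotProduct, reluM3, Matrix.of_apply]
    rw [Fin.sum_univ_succ]
    simp only [Fin.val_zero, Fin.val_succ, Nat.succ_ne_zero, if_true, Nat.add_eq_zero,
      and_false, if_false, Nat.cast_zero, sub_zero, ite_mul, zero_mul]
    have h0 : ∀ c : ℝ,
        (∑ j : Fin (N + 1), if (j : ℕ) = 0 then c * extZ y ((k : ℤ) - (j : ℤ)) else 0)
          = c * extZ y (k : ℤ) := by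
      intro c
      rw [Fin.sum_univ_succ]
      simp
    simp only [h0, extZ_coe, Finset.mul_sum]
    push_cast
    rw [Fin.sum_univ_eq_sum_range (fun j : ℕ => x k * (m j * extZ y ((k : ℤ) - j))) (N + 1),
      Fin.sum_univ_eq_sum_range
        (fun i : ℕ => extZ x ((k : ℤ) - ((i : ℤ) + 1)) * (m (-((i : ℤ) + 1)) * y k)) N]
  rw [Finset.sum_congr rfl step, Finset.sum_add_distrib, sumA, sumB, ← Dsum_split]

lemma reluM3_transpose (N : ℕ) (m : ℤ → ℝ) :
    (reluM3 N m)ᵀ = reluM3 N fun z => m (-z) := by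
  ext i j
  by_cases hi : i = 0 <;> by_cases hj : j = 0 <;>
    simp [reluM3, hi, hj]

lemma reluM12_eq (N : ℕ) (m : ℕ → ℝ) :
    reluM12 N m = reluM3 N fun z => m z.natAbs := by
  ext i j
  by_cases hi : (i : ℕ) = 0 <;> by_cases hj : (j : ℕ) = 0 <;>
    simp [reluM12, reluM3, hi, hj]

lemma dot_fromBlocks {α : Type*} [Fintype α] (P Q R S : Matrix α α ℝ) (a b c d : α → ℝ) :
    Sum.elim a b ⬝ᵥ (Matrix.fromBlocks P Q R S).mulVec (Sum.elim c d)
      = a ⬝ᵥ P.mulVec c + a ⬝ᵥ Q.mulVec d + b ⬝ᵥ R.mulVec c + b ⬝ᵥ S.mulVec d := by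
  rw [Matrix.fromBlocks_mulVec, sumElim_dotProduct_sumElim]
  simp only [dotProduct_add, Sum.elim_comp_inl, Sum.elim_comp_inr]
  ring

lemma rhsD (N T₀ : ℕ) (m : ℤ → ℝ) (Q : Matrix (Fin (T₀ + 1)) (Fin (T₀ + 1)) ℝ)
    (hQ : ∀ a b : Fin (T₀ + 1), Q a b =
      if |(a : ℤ) - (b : ℤ)| ≤ (N : ℤ) then m ((b : ℤ) - (a : ℤ)) else 0)
    (x y : ℕ → ℝ) (xbar ybar : Fin (T₀ + 1) → ℝ)
    (hx : ∀ a, xbar a = x (T₀ - (a : ℕ))) (hy : ∀ a, ybar a = y (T₀ - (a : ℕ))) :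
    xbar ⬝ᵥ Q.mulVec ybar = Dsum N T₀ m x y := by
  simp only [dotProduct, mulVec, hx, hy, hQ]
  rw [Fin.sum_univ_eq_sum_range (fun a : ℕ => x (T₀ - a) *
      ∑ b : Fin (T₀ + 1), (if |(a : ℤ) - (b : ℤ)| ≤ (N : ℤ) then m ((b : ℤ) - a) else 0)
        * y (T₀ - (b : ℕ))) (T₀ + 1)]
  unfold Dsum
  conv_rhs => rw [← Finset.sum_range_reflect]
  refine Finset.sum_congr rfl fun a ha => ?_
  rw [Fin.sum_univ_eq_sum_range (fun b : ℕ =>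
      (if |(a : ℤ) - (b : ℤ)| ≤ (N : ℤ) then m ((b : ℤ) - a) else 0) * y (T₀ - b)) (T₀ + 1)]
  conv_rhs => rw [← Finset.sum_range_reflect]
  rw [Finset.mul_sum]
  refine Finset.sum_congr rfl fun b hb => ?_
  simp only [Finset.mem_range] at ha hb
  rw [show T₀ + 1 - 1 - a = T₀ - a from by omega, show T₀ + 1 - 1 - b = T₀ - b from by omega]
  rw [show ((T₀ - a : ℕ) : ℤ) - ((T₀ - b : ℕ) : ℤ) = (b : ℤ) - a from by omega]
  rw [show |(b : ℤ) - a| = |(a : ℤ) - b| from abs_sub_comm _ _]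
  ring

lemma expand_step (N : ℕ) (m1 m2 : ℕ → ℝ) (m3 : ℤ → ℝ) (v w : ℕ → ℝ) (k : ℕ) :
    window N v w k ⬝ᵥ (reluIQC N m1 m2 m3).mulVec (window N v w k)
      = dd N (fun z => m1 z.natAbs) v v k
        - dd N (fun z => m3 (-z)) v w k - dd N (fun z => m1 z.natAbs) v w k
        - dd N m3 w v k - dd N (fun z => m1 z.natAbs) w v k
        + dd N (fun z => m1 z.natAbs) w w k + dd N (fun z => m2 z.natAbs) w w k
        + dd N m3 w w k + dd N (fun z => m3 (-z)) w w k := by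
  unfold window reluIQC dd
  rw [reluM12_eq N m1, reluM12_eq N m2, reluM3_transpose]
  rw [dot_fromBlocks]
  simp only [Matrix.sub_mulVec, Matrix.neg_mulVec, Matrix.add_mulVec, dotProduct_add,
    dotProduct_sub, dotProduct_neg]
  ring

end ReluAux

open ReluAux in
theorem stmt9 (N : ℕ) (m1 m2 : ℕ → ℝ) (m3 : ℤ → ℝ)
    (v w : ℕ → ℝ) (T₀ : ℕ)
    (Q₁ Q₂ Q₃ : Matrix (Fin (T₀ + 1)) (Fin (T₀ + 1)) ℝ)
    (hQ1 : ∀ i k : Fin (T₀ + 1), Q₁ i k =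
      if |(i : ℤ) - (k : ℤ)| ≤ (N : ℤ) then m1 ((i : ℤ) - (k : ℤ)).natAbs else 0)
    (hQ2 : ∀ i k : Fin (T₀ + 1), Q₂ i k =
      if |(i : ℤ) - (k : ℤ)| ≤ (N : ℤ) then m2 ((i : ℤ) - (k : ℤ)).natAbs else 0)
    (hQ3 : ∀ i k : Fin (T₀ + 1), Q₃ i k =
      if |(i : ℤ) - (k : ℤ)| ≤ (N : ℤ) then m3 ((k : ℤ) - (i : ℤ)) else 0)
    (vbar wbar : Fin (T₀ + 1) → ℝ)
    (hv : ∀ i, vbar i = v (T₀ - (i : ℕ)))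
    (hw : ∀ i, wbar i = w (T₀ - (i : ℕ))) :
    ∑ k ∈ Finset.range (T₀ + 1),
        window N v w k ⬝ᵥ (reluIQC N m1 m2 m3).mulVec (window N v w k)
      = (Sum.elim vbar wbar) ⬝ᵥ
          (Matrix.fromBlocks Q₁ (-Q₃ᵀ - Q₁) (-Q₃ - Q₁)
            (Q₁ + Q₂ + Q₃ + Q₃ᵀ)).mulVec (Sum.elim vbar wbar) := by
  have hQ1' : ∀ a b : Fin (T₀ + 1), Q₁ a b =
      if |(a : ℤ) - (b : ℤ)| ≤ (N : ℤ) then (fun z : ℤ => m1 z.natAbs) ((b : ℤ) - (a : ℤ)) else 0 := by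
    intro a b
    rw [hQ1, show ((a : ℤ) - (b : ℤ)).natAbs = ((b : ℤ) - (a : ℤ)).natAbs from by omega]
  have hQ2' : ∀ a b : Fin (T₀ + 1), Q₂ a b =
      if |(a : ℤ) - (b : ℤ)| ≤ (N : ℤ) then (fun z : ℤ => m2 z.natAbs) ((b : ℤ) - (a : ℤ)) else 0 := by
    intro a b
    rw [hQ2, show ((a : ℤ) - (b : ℤ)).natAbs = ((b : ℤ) - (a : ℤ)).natAbs from by omega]
  have hQ3t : ∀ a b : Fin (T₀ + 1), Q₃ᵀ a b =
      if |(a : ℤ) - (b : ℤ)| ≤ (N : ℤ) then (fun z : ℤ => m3 (-z)) ((b : ℤ) - (a : ℤ)) else 0 := by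
    intro a b
    rw [Matrix.transpose_apply, hQ3 b a, abs_sub_comm ((b : ℤ)) ((a : ℤ))]
    simp [neg_sub]
  calc
    ∑ k ∈ Finset.range (T₀ + 1),
        window N v w k ⬝ᵥ (reluIQC N m1 m2 m3).mulVec (window N v w k)
      = ∑ k ∈ Finset.range (T₀ + 1),
          (dd N (fun z => m1 z.natAbs) v v k
            - dd N (fun z => m3 (-z)) v w k - dd N (fun z => m1 z.natAbs) v w k
            - dd N m3 w v k - dd N (fun z => m1 z.natAbs) w v k
            + dd N (fun z => m1 z.natAbs) w w k + dd N (fun z => m2 z.natAbs) w w k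
            + dd N m3 w w k + dd N (fun z => m3 (-z)) w w k) :=
      Finset.sum_congr rfl fun k _ => expand_step N m1 m2 m3 v w k
    _ = Dsum N T₀ (fun z => m1 z.natAbs) v v
          - Dsum N T₀ (fun z => m3 (-z)) v w - Dsum N T₀ (fun z => m1 z.natAbs) v w
          - Dsum N T₀ m3 w v - Dsum N T₀ (fun z => m1 z.natAbs) w v
          + Dsum N T₀ (fun z => m1 z.natAbs) w w + Dsum N T₀ (fun z => m2 z.natAbs) w w
          + Dsum N T₀ m3 w w + Dsum N T₀ (fun z => m3 (-z)) w w := by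
      simp only [Finset.sum_add_distrib, Finset.sum_sub_distrib]
      rw [core, core, core, core, core, core, core, core, core]
    _ = (Sum.elim vbar wbar) ⬝ᵥ
          (Matrix.fromBlocks Q₁ (-Q₃ᵀ - Q₁) (-Q₃ - Q₁)
            (Q₁ + Q₂ + Q₃ + Q₃ᵀ)).mulVec (Sum.elim vbar wbar) := by
      rw [dot_fromBlocks]
      simp only [Matrix.sub_mulVec, Matrix.neg_mulVec, Matrix.add_mulVec, dotProduct_add,
        dotProduct_sub, dotProduct_neg]
      rw [rhsD N T₀ (fun z => m1 z.natAbs) Q₁ hQ1' v v vbar vbar hv hv,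
        rhsD N T₀ (fun z => m3 (-z)) Q₃ᵀ hQ3t v w vbar wbar hv hw,
        rhsD N T₀ (fun z => m1 z.natAbs) Q₁ hQ1' v w vbar wbar hv hw,
        rhsD N T₀ m3 Q₃ hQ3 w v wbar vbar hw hv,
        rhsD N T₀ (fun z => m1 z.natAbs) Q₁ hQ1' w v wbar vbar hw hv,
        rhsD N T₀ (fun z => m1 z.natAbs) Q₁ hQ1' w w wbar wbar hw hw,
        rhsD N T₀ (fun z => m2 z.natAbs) Q₂ hQ2' w w wbar wbar hw hw,
        rhsD N T₀ m3 Q₃ hQ3 w w wbar wbar hw hw,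
        rhsD N T₀ (fun z => m3 (-z)) Q₃ᵀ hQ3t w w wbar wbar hw hw]
      ring
end
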